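/- arXiv:math/9908029 — 9 statements merged into one kernel-verified Lean document; each statement's English description precedes it below -/
import Mathlib

section
/- The n-dimensional volume of the polytope Π_n(x) = {y ∈ ℝ^n : y_i ≥ 0 and y_1+⋯+y_i ≤ x_1+⋯+x_i for all 1 ≤ i ≤ n} equals the sum over all k = (k_1,…,k_n) in K_n of ∏_{i=1}^n x_i^{k_i}/k_i!, where K_n is the set of vectors k ∈ ℕ^n with k_1+⋯+k_j ≥ j for all 1 ≤ j ≤ n−1 and k_1+⋯+k_n = n. -/
open MeasureTheory Finset

noncomputable section PitmanAux

/-- The index set `K_n` as a `Finset`. -/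
def pitKn (n : ℕ) : Finset (Fin n → ℕ) :=
  (Finset.Nat.antidiagonalTuple n n).filter
    (fun k => ∀ j : Fin n, (j : ℕ) + 1 ≤ n - 1 →
      (j : ℕ) + 1 ≤ ∑ l ∈ Finset.Iic j, k l)

/-- The polynomial `F_n`. -/
def pitFn (n : ℕ) (x : Fin n → ℝ) : ℝ :=
  ∑ k ∈ pitKn n, ∏ i : Fin n, x i ^ (k i) / (k i).factorial

/-- The polytope `Π_n(x)`. -/
def pitPn (n : ℕ) (x : Fin n → ℝ) : Set (Fin n → ℝ) :=
  {y | ∀ i : Fin n, 0 ≤ y i ∧ ∑ j ∈ Finset.Iic i, y j ≤ ∑ j ∈ Finset.Iic i, x j}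

lemma pit_mem_Kn {m : ℕ} {k : Fin m → ℕ} :
    k ∈ pitKn m ↔ (∑ i, k i) = m ∧ ∀ j : Fin m, (j:ℕ)+1 ≤ m-1 →
      (j:ℕ)+1 ≤ ∑ l ∈ Finset.Iic j, k l := by
  simp [pitKn, Finset.mem_filter, Finset.Nat.mem_antidiagonalTuple]

lemma pit_sum_Iic_zero {M : Type*} [AddCommMonoid M] {n : ℕ} (f : Fin (n+1) → M) :
    ∑ l ∈ Finset.Iic (0 : Fin (n+1)), f l = f 0 := by
  have : Finset.Iic (0 : Fin (n+1)) = {0} := by ext l; simp [Fin.le_zero_iff]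
  rw [this, Finset.sum_singleton]

lemma pit_sum_Iic_succ {M : Type*} [AddCommMonoid M] {n : ℕ} (f : Fin (n+1) → M) (j : Fin n) :
    ∑ l ∈ Finset.Iic j.succ, f l = f 0 + ∑ l ∈ Finset.Iic j, f l.succ := by
  have h : ∀ (m : ℕ) (a : Fin m) (g : Fin m → M),
      ∑ l ∈ Finset.Iic a, g l = ∑ l : Fin m, if l ≤ a then g l else 0 := by
    intro m a g
    rw [← Finset.sum_filter]
    congr 1
    ext l; simp
  rw [h _ _ f, h _ _ (fun l => f l.succ), Fin.sum_univ_succ]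
  simp [Fin.succ_le_succ_iff, Fin.zero_le]

lemma pit_binom (M : ℕ) (u v : ℝ) :
    ((u+v)^M - v^M) / M.factorial
      = ∑ a ∈ Finset.Icc 1 M, u^a / a.factorial * (v^(M-a) / (M-a).factorial) := by
  have hexp : (u+v)^M = ∑ a ∈ Finset.range (M+1), u^a * v^(M-a) * (M.choose a) :=
    add_pow u v M
  have hsplit : Finset.range (M+1) = insert 0 (Finset.Icc 1 M) := by
    ext a; simp [Finset.mem_range, Finset.mem_Icc]; omega
  rw [hexp, hsplit, Finset.sum_insert (by simp)]
  simp only [pow_zero, Nat.sub_zero, Nat.choose_zero_right, Nat.cast_one, one_mul, mul_one]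
  rw [add_sub_cancel_left, Finset.sum_div]
  refine Finset.sum_congr rfl fun a ha => ?_
  rw [Finset.mem_Icc] at ha
  have hM : (M.choose a : ℝ) = M.factorial / (a.factorial * (M-a).factorial) := by
    rw [eq_div_iff (by positivity)]
    rw [← Nat.cast_mul, ← Nat.cast_mul]
    congr 1
    rw [← mul_assoc]
    exact Nat.choose_mul_factorial_mul_factorial ha.2
  rw [hM]
  field_simp

lemma pit_comb (n : ℕ) (x : Fin (n+2) → ℝ) :
    pitFn (n+2) x
      = ∑ k' ∈ pitKn (n+1),
          (((x 0 + x 1)^(k' 0 + 1) - (x 1)^(k' 0 + 1)) / (k' 0 + 1).factorial)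
          * ∏ j : Fin n, x j.succ.succ ^ (k' j.succ) / (k' j.succ).factorial := by
  have step1 : ∀ k' : Fin (n+1) → ℕ,
      (((x 0 + x 1)^(k' 0 + 1) - (x 1)^(k' 0 + 1)) / (k' 0 + 1).factorial)
          * ∏ j : Fin n, x j.succ.succ ^ (k' j.succ) / (k' j.succ).factorial
        = ∑ a ∈ Finset.Icc 1 (k' 0 + 1),
            (x 0 ^ a / a.factorial * ((x 1)^(k' 0 + 1 - a) / (k' 0 + 1 - a).factorial))
            * ∏ j : Fin n, x j.succ.succ ^ (k' j.succ) / (k' j.succ).factorial := by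
    intro k'
    rw [pit_binom, Finset.sum_mul]
  rw [Finset.sum_congr rfl (fun k' _ => step1 k'), Finset.sum_sigma']
  refine Finset.sum_nbij'
    (i := fun k => (⟨Fin.cons (k 0 + k 1 - 1) (fun j => k j.succ.succ), k 0⟩ :
        Σ _ : Fin (n+1) → ℕ, ℕ))
    (j := fun p => Fin.cons p.2 (Fin.cons (p.1 0 + 1 - p.2) (fun j => p.1 j.succ)))
    ?_ ?_ ?_ ?_ ?_
  · intro k hk
    rw [pit_mem_Kn] at hk
    obtain ⟨hsum, hcond⟩ := hk
    have h0 : 1 ≤ k 0 := by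
      have := hcond 0 (by simp)
      rwa [pit_sum_Iic_zero] at this
    have hsum' : k 0 + (k 1 + ∑ j : Fin n, k j.succ.succ) = n + 2 := by
      rw [Fin.sum_univ_succ, Fin.sum_univ_succ] at hsum
      simpa [Fin.succ_zero_eq_one] using hsum
    simp only [Finset.mem_sigma, Finset.mem_Icc]
    constructor
    · rw [pit_mem_Kn]
      constructor
      · rw [Fin.sum_univ_succ]
        simp only [Fin.cons_zero, Fin.cons_succ]
        omega
      · intro j hj
        induction j using Fin.cases with
        | zero =>
          rw [pit_sum_Iic_zero]
          simp only [Fin.cons_zero]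
          simp only [Fin.val_zero] at hj ⊢
          have h1 := hcond 1 (by simp only [Fin.val_one]; omega)
          rw [← Fin.succ_zero_eq_one, pit_sum_Iic_succ, pit_sum_Iic_zero] at h1
          simp only [Fin.succ_zero_eq_one, Fin.val_one] at h1
          omega
        | succ l =>
          rw [pit_sum_Iic_succ]
          simp only [Fin.cons_zero, Fin.cons_succ, Fin.val_succ] at hj ⊢
          have hl : ((l.succ.succ : Fin (n+2)) : ℕ) + 1 ≤ n + 1 := by
            simp [Fin.val_succ]; omega
          have := hcond l.succ.succ hl
          rw [pit_sum_Iic_succ, pit_sum_Iic_succ] at this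
          simp only [Fin.cons_succ, Fin.val_succ, Fin.succ_zero_eq_one] at this
          omega
    · simp only [Fin.cons_zero]
      omega
  · intro p hp
    simp only [Finset.mem_sigma, Finset.mem_Icc] at hp
    obtain ⟨hp1, ha1, ha2⟩ := hp
    rw [pit_mem_Kn] at hp1
    obtain ⟨hsum, hcond⟩ := hp1
    have hsum' : p.1 0 + ∑ j : Fin n, p.1 j.succ = n + 1 := by
      rw [Fin.sum_univ_succ] at hsum; exact hsum
    rw [pit_mem_Kn]
    constructor
    · rw [Fin.sum_univ_succ, Fin.sum_univ_succ]
      simp only [Fin.cons_zero, Fin.cons_succ]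
      omega
    · intro j hj
      induction j using Fin.cases with
      | zero =>
        rw [pit_sum_Iic_zero]
        simp only [Fin.cons_zero, Fin.val_zero]
        omega
      | succ l =>
        rw [pit_sum_Iic_succ]
        simp only [Fin.cons_zero, Fin.cons_succ, Fin.val_succ] at hj ⊢
        induction l using Fin.cases with
        | zero =>
          rw [pit_sum_Iic_zero]
          simp only [Fin.cons_zero, Fin.cons_succ, Fin.val_zero] at hj ⊢
          have h0 : 1 ≤ p.1 0 := by
            have := hcond 0 (by simp only [Fin.val_zero]; omega)
            rwa [pit_sum_Iic_zero] at this
          omega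
        | succ l' =>
          rw [pit_sum_Iic_succ]
          simp only [Fin.cons_zero, Fin.cons_succ, Fin.val_succ] at hj ⊢
          have hl : ((l'.succ : Fin (n+1)) : ℕ) + 1 ≤ (n+1) - 1 := by
            simp only [Fin.val_succ]; omega
          have := hcond l'.succ hl
          rw [pit_sum_Iic_succ] at this
          simp only [Fin.val_succ] at this
          omega
  · intro k hk
    rw [pit_mem_Kn] at hk
    have h0 : 1 ≤ k 0 := by
      have := hk.2 0 (by simp)
      rwa [pit_sum_Iic_zero] at this
    funext i
    simp only [Fin.cons_zero, Fin.cons_succ]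
    induction i using Fin.cases with
    | zero => simp
    | succ l =>
      simp only [Fin.cons_succ]
      induction l using Fin.cases with
      | zero => simp [Fin.succ_zero_eq_one]; omega
      | succ l' => simp
  · intro p hp
    simp only [Finset.mem_sigma, Finset.mem_Icc] at hp
    obtain ⟨_, ha1, ha2⟩ := hp
    obtain ⟨k', a⟩ := p
    simp only at ha1 ha2 ⊢
    have h1 : (Fin.cons a (Fin.cons (k' 0 + 1 - a) (fun j => k' j.succ)) :
        Fin (n+2) → ℕ) 1 = k' 0 + 1 - a := by
      rw [← Fin.succ_zero_eq_one, Fin.cons_succ, Fin.cons_zero]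
    refine Sigma.ext (funext fun i => ?_) (heq_of_eq (by simp))
    induction i using Fin.cases with
    | zero =>
      simp only [Fin.cons_zero, h1]
      omega
    | succ l => simp [Fin.cons_succ]
  · intro k hk
    rw [pit_mem_Kn] at hk
    have h0 : 1 ≤ k 0 := by
      have := hk.2 0 (by simp)
      rwa [pit_sum_Iic_zero] at this
    rw [Fin.prod_univ_succ, Fin.prod_univ_succ]
    simp only [Fin.cons_zero, Fin.cons_succ, Fin.succ_zero_eq_one]
    have : k 0 + k 1 - 1 + 1 - k 0 = k 1 := by omega
    rw [this]
    ring

lemma pitFn_cons (n : ℕ) (u : ℝ) (w : Fin n → ℝ) :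
    pitFn (n+1) (Fin.cons u w)
      = ∑ k' ∈ pitKn (n+1), u ^ (k' 0) / (k' 0).factorial *
          ∏ j : Fin n, w j ^ (k' j.succ) / (k' j.succ).factorial := by
  unfold pitFn
  refine Finset.sum_congr rfl fun k' _ => ?_
  rw [Fin.prod_univ_succ]
  simp [Fin.cons_zero, Fin.cons_succ]

lemma pitFn_nonneg (n : ℕ) (x : Fin n → ℝ) (hx : ∀ i, 0 ≤ x i) : 0 ≤ pitFn n x := by
  refine Finset.sum_nonneg fun k _ => Finset.prod_nonneg fun i _ => ?_
  exact div_nonneg (pow_nonneg (hx i) _) (Nat.cast_nonneg _)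

lemma pit_integral (n : ℕ) (x : Fin (n+2) → ℝ) :
    (∫ t in (0:ℝ)..(x 0),
        pitFn (n+1) (Fin.cons (x 0 + x 1 - t) (fun j => x j.succ.succ)))
      = pitFn (n+2) x := by
  simp only [pitFn_cons]
  rw [intervalIntegral.integral_finset_sum (fun k' _ =>
    Continuous.intervalIntegrable (by fun_prop) _ _)]
  rw [pit_comb]
  refine Finset.sum_congr rfl fun k' _ => ?_
  rw [intervalIntegral.integral_mul_const, intervalIntegral.integral_div]
  have hc : (∫ t in (0:ℝ)..(x 0), (x 0 + x 1 - t) ^ (k' 0))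
      = ((x 0 + x 1)^(k' 0 + 1) - (x 1)^(k' 0 + 1)) / (k' 0 + 1) := by
    rw [intervalIntegral.integral_comp_sub_left (fun u => u ^ (k' 0)) (x 0 + x 1)]
    rw [sub_zero, add_sub_cancel_left, integral_pow]
  rw [hc, div_div, Nat.factorial_succ, Nat.cast_mul]
  push_cast
  ring

lemma pit_closed (n : ℕ) (x : Fin n → ℝ) : IsClosed (pitPn n x) := by
  have : pitPn n x = ⋂ i : Fin n,
      ({y : Fin n → ℝ | 0 ≤ y i} ∩ {y | ∑ j ∈ Finset.Iic i, y j ≤ ∑ j ∈ Finset.Iic i, x j}) := by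
    ext y; simp [pitPn, Set.mem_iInter, forall_and]
  rw [this]
  refine isClosed_iInter fun i => IsClosed.inter ?_ ?_
  · exact isClosed_le continuous_const (continuous_apply i)
  · exact isClosed_le (by fun_prop) continuous_const

lemma pit_subset (n : ℕ) (x : Fin n → ℝ) (hx : ∀ i, 0 ≤ x i) :
    pitPn n x ⊆ Set.pi Set.univ (fun _ => Set.Icc (0:ℝ) (∑ j, x j)) := by
  intro y hy i _
  refine ⟨(hy i).1, ?_⟩
  calc y i ≤ ∑ j ∈ Finset.Iic i, y j :=
        Finset.single_le_sum (fun j _ => (hy j).1) (by simp)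
    _ ≤ ∑ j ∈ Finset.Iic i, x j := (hy i).2
    _ ≤ ∑ j, x j := Finset.sum_le_sum_of_subset_of_nonneg (Finset.subset_univ _)
        (fun j _ _ => hx j)

lemma pit_vol_ne_top (n : ℕ) (x : Fin n → ℝ) (hx : ∀ i, 0 ≤ x i) :
    volume (pitPn n x) ≠ ⊤ := by
  refine ne_top_of_le_ne_top ?_ (measure_mono (pit_subset n x hx))
  rw [volume_pi_pi]
  simp [Real.volume_Icc]

lemma pit_sum_Iic_cons (n : ℕ) (x : Fin (n+2) → ℝ) (t : ℝ) (j : Fin (n+1)) :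
    ∑ l ∈ Finset.Iic j, (Fin.cons (x 0 + x 1 - t) (fun j => x j.succ.succ) : Fin (n+1) → ℝ) l
      = ∑ l ∈ Finset.Iic j.succ, x l - t := by
  induction j using Fin.cases with
  | zero =>
    rw [pit_sum_Iic_zero, pit_sum_Iic_succ, pit_sum_Iic_zero]
    simp [Fin.succ_zero_eq_one]
  | succ l =>
    rw [pit_sum_Iic_succ, pit_sum_Iic_succ, pit_sum_Iic_succ]
    simp only [Fin.cons_zero, Fin.cons_succ, Fin.succ_zero_eq_one]
    ring

lemma pit_slice (n : ℕ) (x : Fin (n+2) → ℝ) (t : ℝ) :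
    {z : Fin (n+1) → ℝ | Fin.cons t z ∈ pitPn (n+2) x}
      = if t ∈ Set.Icc 0 (x 0) then
          pitPn (n+1) (Fin.cons (x 0 + x 1 - t) (fun j => x j.succ.succ)) else ∅ := by
  ext z
  by_cases ht : t ∈ Set.Icc 0 (x 0)
  · rw [if_pos ht]
    simp only [Set.mem_setOf_eq, pitPn]
    constructor
    · intro h j
      have := h j.succ
      rw [pit_sum_Iic_succ] at this
      simp only [Fin.cons_zero, Fin.cons_succ] at this
      refine ⟨this.1, ?_⟩
      rw [pit_sum_Iic_cons]
      linarith [this.2]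
    · intro h i
      induction i using Fin.cases with
      | zero =>
        rw [pit_sum_Iic_zero, pit_sum_Iic_zero]
        simp only [Fin.cons_zero]
        exact ⟨ht.1, ht.2⟩
      | succ j =>
        have := h j
        rw [pit_sum_Iic_cons] at this
        rw [pit_sum_Iic_succ]
        simp only [Fin.cons_zero, Fin.cons_succ]
        exact ⟨this.1, by linarith [this.2]⟩
  · rw [if_neg ht]
    simp only [Set.mem_setOf_eq, Set.mem_empty_iff_false, iff_false]
    intro h
    have := h 0
    rw [pit_sum_Iic_zero, pit_sum_Iic_zero] at this
    simp only [Fin.cons_zero] at this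
    exact ht ⟨this.1, this.2⟩

lemma pit_vol_step (n : ℕ) (x : Fin (n+2) → ℝ) :
    volume (pitPn (n+2) x)
      = ∫⁻ t in Set.Icc (0:ℝ) (x 0),
          volume (pitPn (n+1) (Fin.cons (x 0 + x 1 - t) (fun j => x j.succ.succ))) := by
  have hM : MeasurableSet (pitPn (n+2) x) := (pit_closed _ _).measurableSet
  have hmp := (volume_preserving_piFinSuccAbove (fun _ : Fin (n+2) => ℝ) 0).symm
  rw [← hmp.measure_preimage hM.nullMeasurableSet]
  have hpre : ((MeasurableEquiv.piFinSuccAbove (fun _ : Fin (n+2) => ℝ) 0).symm) ⁻¹'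
      (pitPn (n+2) x) = {p : ℝ × (Fin (n+1) → ℝ) | Fin.cons p.1 p.2 ∈ pitPn (n+2) x} := by
    ext p
    simp only [Set.mem_preimage, MeasurableEquiv.piFinSuccAbove, MeasurableEquiv.symm_mk,
      MeasurableEquiv.coe_mk, Equiv.symm_symm, Fin.insertNthEquiv_apply, Set.mem_setOf_eq]
    change Fin.insertNth 0 p.1 p.2 ∈ pitPn (n+2) x ↔ _
    rw [Fin.insertNth_zero']
  rw [hpre, Measure.volume_eq_prod, Measure.prod_apply]
  · have : ∀ t : ℝ, (Prod.mk t ⁻¹' {p : ℝ × (Fin (n+1) → ℝ) | Fin.cons p.1 p.2 ∈ pitPn (n+2) x})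
        = {z : Fin (n+1) → ℝ | Fin.cons t z ∈ pitPn (n+2) x} := fun t => rfl
    simp only [this, pit_slice]
    rw [← lintegral_indicator measurableSet_Icc]
    congr 1
    funext t
    rw [Set.indicator_apply]
    split_ifs <;> simp
  · have : MeasurableSet {p : ℝ × (Fin (n+1) → ℝ) | Fin.cons p.1 p.2 ∈ pitPn (n+2) x} := by
      rw [← hpre]
      exact (MeasurableEquiv.piFinSuccAbove (fun _ : Fin (n+2) => ℝ) 0).symm.measurable hM
    exact this

lemma pit_main : ∀ (n : ℕ) (x : Fin (n+1) → ℝ), (∀ i, 0 < x i) →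
    (volume (pitPn (n+1) x)).toReal = pitFn (n+1) x := by
  intro n
  induction n with
  | zero =>
    intro x hx
    have hset : pitPn 1 x = Set.pi Set.univ (fun _ : Fin 1 => Set.Icc (0:ℝ) (x 0)) := by
      ext y
      simp only [pitPn, Set.mem_setOf_eq, Set.mem_pi, Set.mem_univ, forall_true_left,
        Set.mem_Icc, true_implies]
      constructor
      · intro h i
        have := h 0
        rw [pit_sum_Iic_zero, pit_sum_Iic_zero] at this
        rwa [Subsingleton.elim i 0]
      · intro h i
        rw [Subsingleton.elim i 0, pit_sum_Iic_zero, pit_sum_Iic_zero]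
        exact h 0
    have hK : pitKn 1 = {fun _ => 1} := by
      ext k
      rw [pit_mem_Kn, Finset.mem_singleton]
      constructor
      · rintro ⟨h, -⟩
        rw [Fin.sum_univ_one] at h
        funext i
        rw [Subsingleton.elim i 0, h]
      · rintro rfl
        refine ⟨by rw [Fin.sum_univ_one], fun j hj => by simp at hj⟩
    rw [hset, volume_pi_pi]
    rw [show pitFn 1 x = x 0 by rw [pitFn, hK]; simp]
    simp only [Real.volume_Icc, sub_zero, Finset.prod_const, Finset.card_univ,
      Fintype.card_fin]
    rw [ENNReal.toReal_pow, ENNReal.toReal_ofReal (hx 0).le, pow_succ, pow_zero, one_mul]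
  | succ m ih =>
    intro x hx
    rw [pit_vol_step m x]
    have hgx : ∀ t ∈ Set.Icc (0:ℝ) (x 0), ∀ i,
        (0:ℝ) < (Fin.cons (x 0 + x 1 - t) (fun j => x j.succ.succ) : Fin (m+1) → ℝ) i := by
      intro t ht i
      induction i using Fin.cases with
      | zero =>
        rw [Fin.cons_zero]
        have := ht.2
        have := hx 1
        linarith
      | succ l =>
        rw [Fin.cons_succ]
        exact hx _
    have hslice : ∀ᵐ t ∂(volume : Measure ℝ), t ∈ Set.Icc (0:ℝ) (x 0) →
        volume (pitPn (m+1) (Fin.cons (x 0 + x 1 - t) (fun j => x j.succ.succ)))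
          = ENNReal.ofReal
              (pitFn (m+1) (Fin.cons (x 0 + x 1 - t) (fun j => x j.succ.succ))) := by
      refine ae_of_all _ fun t ht => ?_
      rw [← ih _ (hgx t ht), ENNReal.ofReal_toReal
        (pit_vol_ne_top (m+1) _ (fun i => (hgx t ht i).le))]
    rw [setLIntegral_congr_fun_ae measurableSet_Icc hslice]
    have hcont : Continuous fun t : ℝ =>
        pitFn (m+1) (Fin.cons (x 0 + x 1 - t) (fun j => x j.succ.succ)) := by
      simp only [pitFn_cons]
      fun_prop
    have hint : IntegrableOn (fun t : ℝ =>
        pitFn (m+1) (Fin.cons (x 0 + x 1 - t) (fun j => x j.succ.succ)))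
          (Set.Icc 0 (x 0)) volume := hcont.integrableOn_Icc
    have hnn : 0 ≤ᵐ[volume.restrict (Set.Icc (0:ℝ) (x 0))] fun t : ℝ =>
        pitFn (m+1) (Fin.cons (x 0 + x 1 - t) (fun j => x j.succ.succ)) := by
      filter_upwards [ae_restrict_mem measurableSet_Icc] with t ht
      exact pitFn_nonneg _ _ (fun i => (hgx t ht i).le)
    rw [← ofReal_integral_eq_lintegral_ofReal hint hnn]
    rw [ENNReal.toReal_ofReal (integral_nonneg_of_ae hnn)]
    rw [MeasureTheory.integral_Icc_eq_integral_Ioc,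
      ← intervalIntegral.integral_of_le (hx 0).le]
    exact pit_integral m x

end PitmanAux

/-- The volume of the polytope `Π_n(x)` equals `∑_{k ∈ K_n} ∏ x_i^{k_i}/k_i!`. -/
theorem volume_pi_polytope_eq_sum (n : ℕ) (hn : 0 < n) (x : Fin n → ℝ)
    (hx : ∀ i, 0 < x i) :
    (volume {y : Fin n → ℝ | ∀ i : Fin n, 0 ≤ y i ∧
        ∑ j ∈ Finset.Iic i, y j ≤ ∑ j ∈ Finset.Iic i, x j}).toReal =
      ∑ k ∈ (Finset.Nat.antidiagonalTuple n n).filter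
          (fun k => ∀ j : Fin n, (j : ℕ) + 1 ≤ n - 1 →
            (j : ℕ) + 1 ≤ ∑ l ∈ Finset.Iic j, k l),
        ∏ i : Fin n, x i ^ (k i) / (k i).factorial := by
  obtain ⟨m, rfl⟩ : ∃ m, n = m + 1 := ⟨n - 1, by omega⟩
  exact pit_main m x hx
end

section
/- For a, b ≥ 0, n! · Vol(Π_n(a, b, b, …, b)) = a·(a + n·b)^{n−1}, where Π_n(x) is the polytope {y ∈ ℝ^n : y_i ≥ 0, y_1+⋯+y_i ≤ x_1+⋯+x_i for all i}. -/
open MeasureTheory Finset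

namespace PSpoly

/-- The polytope as set, with bound `a + i*b`. -/
def V (n : ℕ) (a b : ℝ) : Set (Fin n → ℝ) :=
  {y | ∀ i : Fin n, 0 ≤ y i ∧ ∑ j ∈ Finset.Iic i, y j ≤ a + (i : ℕ) * b}

lemma measurableSet_V (n : ℕ) (a b : ℝ) : MeasurableSet (V n a b) := by
  have h : V n a b = ⋂ i : Fin n,
      ({y : Fin n → ℝ | 0 ≤ y i} ∩ {y | ∑ j ∈ Finset.Iic i, y j ≤ a + (i : ℕ) * b}) := by
    ext y; simp [V, forall_and]
  rw [h]
  exact MeasurableSet.iInter fun i =>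
    (measurableSet_le measurable_const (measurable_pi_apply i)).inter
      (measurableSet_le (Finset.measurable_sum _ fun j _ => measurable_pi_apply j)
        measurable_const)

lemma sum_Iic_succ {n : ℕ} (f : Fin (n + 1) → ℝ) (i : Fin n) :
    ∑ j ∈ Finset.Iic i.succ, f j = f 0 + ∑ j ∈ Finset.Iic i, f j.succ := by
  have h1 : ∀ (m : ℕ) (k : Fin m), Finset.Iic k = Finset.filter (· ≤ k) Finset.univ := by
    intro m k; ext j; simp
  rw [h1, h1, Finset.sum_filter, Finset.sum_filter, Fin.sum_univ_succ]
  simp [Fin.succ_le_succ_iff]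

lemma mem_V_succ {n : ℕ} (a b : ℝ) (y : Fin (n + 1) → ℝ) :
    y ∈ V (n + 1) a b ↔
      (y 0 ∈ Set.Icc 0 a ∧ (fun j : Fin n => y j.succ) ∈ V n (a - y 0 + b) b) := by
  have hIic0 : (Finset.Iic (0 : Fin (n + 1))) = {0} := by
    ext j; simp [Fin.le_zero_iff]
  constructor
  · intro h
    refine ⟨⟨(h 0).1, ?_⟩, fun i => ⟨(h i.succ).1, ?_⟩⟩
    · have h2 := (h 0).2
      simpa [hIic0] using h2
    · have h2 := (h i.succ).2
      rw [sum_Iic_succ] at h2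
      have hc : ((i.succ : Fin (n + 1)) : ℕ) = (i : ℕ) + 1 := Fin.val_succ i
      rw [hc] at h2
      push_cast at h2 ⊢
      linarith
  · rintro ⟨⟨h0, h0'⟩, h⟩
    intro i
    refine Fin.cases ?_ ?_ i
    · refine ⟨h0, ?_⟩
      simpa [hIic0] using h0'
    · intro i
      refine ⟨(h i).1, ?_⟩
      rw [sum_Iic_succ]
      have h2 := (h i).2
      have hc : ((i.succ : Fin (n + 1)) : ℕ) = (i : ℕ) + 1 := Fin.val_succ i
      rw [hc]
      push_cast at h2 ⊢
      linarith

lemma volume_V_succ (n : ℕ) (a b : ℝ) :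
    volume (V (n + 1) a b) =
      ∫⁻ t in Set.Icc (0:ℝ) a, volume (V n (a - t + b) b) := by
  set e := MeasurableEquiv.piFinSuccAbove (fun _ : Fin (n + 1) => ℝ) 0 with he
  set T : Set (ℝ × (Fin n → ℝ)) :=
    {p | p.1 ∈ Set.Icc (0:ℝ) a ∧ p.2 ∈ V n (a - p.1 + b) b} with hTdef
  have hT : MeasurableSet T := by
    have h : T = ((Set.Icc (0:ℝ) a) ×ˢ (Set.univ : Set (Fin n → ℝ))) ∩
        ⋂ i : Fin n, ({p : ℝ × (Fin n → ℝ) | 0 ≤ p.2 i} ∩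
          {p : ℝ × (Fin n → ℝ) |
            ∑ j ∈ Finset.Iic i, p.2 j ≤ (a - p.1 + b) + (i : ℕ) * b}) := by
      ext p
      simp only [hTdef, Set.mem_inter_iff, Set.mem_prod, Set.mem_univ, and_true,
        Set.mem_iInter, Set.mem_setOf_eq, V, forall_and]
    rw [h]
    refine (measurableSet_Icc.prod MeasurableSet.univ).inter
      (MeasurableSet.iInter fun i => MeasurableSet.inter ?_ ?_)
    · exact measurableSet_le measurable_const (by fun_prop)
    · exact measurableSet_le (by fun_prop) (by fun_prop)
  have hpres : MeasurePreserving e volume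
      ((volume : Measure ℝ).prod (volume : Measure (Fin n → ℝ))) :=
    volume_preserving_piFinSuccAbove (fun _ : Fin (n + 1) => ℝ) 0
  have hS : V (n + 1) a b = e ⁻¹' T := by
    ext y
    have : e y = (y 0, fun j : Fin n => y j.succ) := by
      simp only [he, MeasurableEquiv.piFinSuccAbove, MeasurableEquiv.coe_mk,
        Equiv.symm_symm]
      rfl
    rw [Set.mem_preimage, this]
    exact mem_V_succ a b y
  rw [hS, hpres.measure_preimage hT.nullMeasurableSet,
    MeasureTheory.Measure.prod_apply hT]
  have hsec : ∀ t : ℝ, (Prod.mk t ⁻¹' T) =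
      if t ∈ Set.Icc (0:ℝ) a then V n (a - t + b) b else ∅ := by
    intro t
    by_cases ht : t ∈ Set.Icc (0:ℝ) a
    · rw [if_pos ht]; ext z
      simp only [hTdef, Set.mem_preimage, Set.mem_setOf_eq]
      exact ⟨fun h => h.2, fun h => ⟨ht, h⟩⟩
    · rw [if_neg ht]; ext z
      simp only [hTdef, Set.mem_preimage, Set.mem_setOf_eq, Set.mem_empty_iff_false,
        iff_false]
      exact fun h => ht h.1
  calc ∫⁻ t, volume (Prod.mk t ⁻¹' T)
      = ∫⁻ t, (Set.Icc (0:ℝ) a).indicator (fun t => volume (V n (a - t + b) b)) t := by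
        refine lintegral_congr fun t => ?_
        rw [hsec t]
        by_cases ht : t ∈ Set.Icc (0:ℝ) a <;> simp [ht]
    _ = ∫⁻ t in Set.Icc (0:ℝ) a, volume (V n (a - t + b) b) :=
        lintegral_indicator measurableSet_Icc _

lemma volume_V_formula (b : ℝ) (hb : 0 ≤ b) :
    ∀ n : ℕ, ∀ a : ℝ, 0 ≤ a →
      volume (V (n + 1) a b) =
        ENNReal.ofReal (a * (a + (n + 1) * b) ^ n / (n + 1).factorial) := by
  intro n
  induction n with
  | zero =>
    intro a ha
    rw [volume_V_succ]
    have h0 : ∀ t : ℝ, V 0 (a - t + b) b = Set.univ := fun t => by ext y; simp [V]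
    have h1 : (volume : Measure (Fin 0 → ℝ)) Set.univ = 1 := by
      rw [volume_pi, MeasureTheory.Measure.pi_univ]; simp
    simp only [h0, h1]
    rw [setLIntegral_one, Real.volume_Icc]
    simp
  | succ m ih =>
    intro a ha
    rw [volume_V_succ]
    set K : ℝ := ((m + 1).factorial : ℝ) with hK
    have hKpos : (0:ℝ) < K := by
      rw [hK]; exact_mod_cast (m + 1).factorial_pos
    set c : ℝ := ((m:ℝ) + 1) * b with hc
    have hcnn : 0 ≤ c := by positivity
    set f : ℝ → ℝ := fun u => u * (u + c) ^ m / K with hf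
    have hcontf : Continuous f := by
      apply Continuous.div_const
      exact continuous_id.mul ((continuous_id.add continuous_const).pow m)
    have hstep : ∀ t ∈ Set.Icc (0:ℝ) a,
        volume (V (m + 1) (a - t + b) b) = ENNReal.ofReal (f (a - t + b)) := by
      intro t ht
      obtain ⟨ht1, ht2⟩ := ht
      rw [ih (a - t + b) (by linarith)]
    rw [setLIntegral_congr_fun measurableSet_Icc hstep]
    have hint : MeasureTheory.IntegrableOn (fun t => f (a - t + b)) (Set.Icc 0 a) :=
      (hcontf.comp (by continuity)).integrableOn_Icc
    have hnn : ∀ t ∈ Set.Icc (0:ℝ) a, 0 ≤ f (a - t + b) := by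
      intro t ht
      obtain ⟨ht1, ht2⟩ := ht
      have h1 : 0 ≤ a - t + b := by linarith
      have h2 : 0 ≤ (a - t + b) + c := by linarith
      rw [hf]
      positivity
    rw [← MeasureTheory.ofReal_integral_eq_lintegral_ofReal hint
      ((ae_restrict_iff' measurableSet_Icc).2 (MeasureTheory.ae_of_all _ hnn))]
    have heq1 : ∫ t in Set.Icc (0:ℝ) a, f (a - t + b) =
        ∫ t in (0:ℝ)..a, f ((a + b) - t) := by
      rw [MeasureTheory.integral_Icc_eq_integral_Ioc,
        ← intervalIntegral.integral_of_le ha]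
      congr 1
      funext t
      congr 1
      ring
    rw [heq1, intervalIntegral.integral_comp_sub_left f (a + b)]
    have hb1 : a + b - a = b := by ring
    have hb2 : a + b - 0 = a + b := by ring
    rw [hb1, hb2]
    set F : ℝ → ℝ := fun u =>
      ((u + c) ^ (m + 2) / ((m:ℝ) + 2) - c * (u + c) ^ (m + 1) / ((m:ℝ) + 1)) / K
      with hFdef
    have hderiv : ∀ u ∈ Set.uIcc b (a + b), HasDerivAt F (f u) u := by
      intro u _
      have h1 : HasDerivAt (fun u : ℝ => (u + c) ^ (m + 2))
          (((m:ℝ) + 2) * (u + c) ^ (m + 1)) u := by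
        have h := ((hasDerivAt_id u).add_const c).fun_pow (m + 2)
        simpa using h
      have h2 : HasDerivAt (fun u : ℝ => (u + c) ^ (m + 1))
          (((m:ℝ) + 1) * (u + c) ^ m) u := by
        have h := ((hasDerivAt_id u).add_const c).fun_pow (m + 1)
        simpa using h
      have h3 := ((h1.div_const ((m:ℝ) + 2)).fun_sub
        ((h2.const_mul c).div_const ((m:ℝ) + 1))).div_const K
      refine h3.congr_deriv ?_
      rw [hf]
      have hm1 : ((m:ℝ) + 1) ≠ 0 := by positivity
      have hm2 : ((m:ℝ) + 2) ≠ 0 := by positivity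
      field_simp
      ring
    rw [intervalIntegral.integral_eq_sub_of_hasDerivAt hderiv
      (hcontf.intervalIntegrable _ _)]
    congr 1
    rw [hFdef]
    have hm1 : ((m:ℝ) + 1) ≠ 0 := by positivity
    have hm2 : ((m:ℝ) + 2) ≠ 0 := by positivity
    have hfact : ((m + 1 + 1).factorial : ℝ) = ((m:ℝ) + 2) * K := by
      rw [hK, Nat.factorial_succ]; push_cast; ring
    rw [hfact, hc]
    push_cast
    field_simp
    ring

lemma sum_ite_eq' {n : ℕ} (a b : ℝ) (i : Fin (n + 1)) :
    ∑ j ∈ Finset.Iic i, (if (j : ℕ) = 0 then a else b) = a + (i : ℕ) * b := by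
  have h0 : (0 : Fin (n + 1)) ∈ Finset.Iic i := by simp
  rw [← Finset.add_sum_erase _ _ h0]
  simp only [Fin.val_zero, if_pos rfl]
  congr 1
  have hcongr : ∀ j ∈ (Finset.Iic i).erase 0,
      (if ((j : Fin (n + 1)) : ℕ) = 0 then a else b) = b := by
    intro j hj
    exact if_neg fun h => Finset.ne_of_mem_erase hj (Fin.ext (by simpa using h))
  rw [Finset.sum_congr rfl hcongr, Finset.sum_const, Finset.card_erase_of_mem h0,
    Fin.card_Iic]
  simp [nsmul_eq_mul]

end PSpoly

open PSpoly in
/-- `n! · Vol(Π_n(a,b,…,b)) = a(a+nb)^{n-1}`. -/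
theorem factorial_mul_volume_ab (n : ℕ) (hn : 0 < n) (a b : ℝ)
    (ha : 0 ≤ a) (hb : 0 ≤ b) :
    (n.factorial : ℝ) *
      (volume {y : Fin n → ℝ | ∀ i : Fin n, 0 ≤ y i ∧
        ∑ j ∈ Finset.Iic i, y j ≤
          ∑ j ∈ Finset.Iic i, (if (j : ℕ) = 0 then a else b)}).toReal =
    a * (a + n * b) ^ (n - 1) := by
  obtain ⟨m, rfl⟩ : ∃ m, n = m + 1 := ⟨n - 1, (Nat.succ_pred_eq_of_pos hn).symm⟩
  have hset : {y : Fin (m + 1) → ℝ | ∀ i : Fin (m + 1), 0 ≤ y i ∧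
      ∑ j ∈ Finset.Iic i, y j ≤
        ∑ j ∈ Finset.Iic i, (if (j : ℕ) = 0 then a else b)} = V (m + 1) a b := by
    ext y
    unfold V
    simp only [Set.mem_setOf_eq, sum_ite_eq']
  rw [hset, volume_V_formula b hb m a ha]
  have hx : 0 ≤ a * (a + ((m:ℝ) + 1) * b) ^ m / (m + 1).factorial := by
    have : (0:ℝ) ≤ a + ((m:ℝ) + 1) * b := by positivity
    positivity
  rw [ENNReal.toReal_ofReal hx]
  have hKne : ((m + 1).factorial : ℝ) ≠ 0 := by
    exact_mod_cast (m + 1).factorial_pos.ne'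
  push_cast
  field_simp
end

section
/- For n ≥ 3 and a, b, c ≥ 0, n! · Vol(Π_n(a, b, …, b, c)) = a·(a + n·b)^{n−1} + n·a·(c − b)·(a + (n−1)·b)^{n−2}, where b occupies coordinates 2 through n−1 and c the last coordinate. -/
open MeasureTheory Finset

def P (n : ℕ) (x : Fin n → ℝ) : Set (Fin n → ℝ) :=
  {y | ∀ i : Fin n, 0 ≤ y i ∧ ∑ j ∈ Iic i, y j ≤ ∑ j ∈ Iic i, x j}

lemma measurableSet_P (n : ℕ) (x : Fin n → ℝ) : MeasurableSet (P n x) := by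
  have : P n x = ⋂ i : Fin n, ({y : Fin n → ℝ | 0 ≤ y i} ∩
      {y : Fin n → ℝ | ∑ j ∈ Iic i, y j ≤ ∑ j ∈ Iic i, x j}) := by
    ext y; simp [P, Set.mem_iInter, forall_and]
  rw [this]
  exact MeasurableSet.iInter fun i =>
    (measurableSet_le measurable_const (measurable_pi_apply i)).inter
      (measurableSet_le (Finset.measurable_sum _ fun j _ => measurable_pi_apply j)
        measurable_const)

lemma sum_Iic_zero {m : ℕ} (g : Fin (m+1) → ℝ) : ∑ k ∈ Iic (0 : Fin (m+1)), g k = g 0 := by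
  have : Iic (0 : Fin (m+1)) = {0} := by ext k; simp [Fin.le_zero_iff]
  simp [this]

lemma sum_Iic_succ {m : ℕ} (g : Fin (m+1) → ℝ) (j : Fin m) :
    ∑ k ∈ Iic j.succ, g k = g 0 + ∑ k ∈ Iic j, g k.succ := by
  have h : Iic j.succ = insert (0 : Fin (m+1)) ((Iic j).map ⟨Fin.succ, Fin.succ_injective m⟩) := by
    ext k
    simp only [mem_Iic, mem_insert, mem_map, Function.Embedding.coeFn_mk]
    constructor
    · intro hk
      rcases Fin.eq_zero_or_eq_succ k with rfl | ⟨k', rfl⟩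
      · exact Or.inl rfl
      · exact Or.inr ⟨k', by simpa [Fin.succ_le_succ_iff] using hk, rfl⟩
    · rintro (rfl | ⟨k', hk', rfl⟩)
      · exact Fin.zero_le _
      · exact Fin.succ_le_succ_iff.2 hk'
  rw [h, sum_insert (by simp [Fin.succ_ne_zero]), sum_map]
  rfl

lemma vol_P_succ (n : ℕ) (x : Fin (n+2) → ℝ) :
    volume (P (n+2) x) =
      ∫⁻ u in Set.Icc 0 (x 0),
        volume (P (n+1) (Fin.cons (x 0 + x 1 - u) (fun j : Fin n => x j.succ.succ))) := by
  set T : Set (ℝ × (Fin (n+1) → ℝ)) := {p | Fin.cons p.1 p.2 ∈ P (n+2) x} with hT_def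
  have hcons : Measurable (fun p : ℝ × (Fin (n+1) → ℝ) => (Fin.cons p.1 p.2 : Fin (n+2) → ℝ)) := by
    rw [measurable_pi_iff]
    intro i
    refine Fin.cases ?_ ?_ i
    · simpa using measurable_fst
    · intro j; simpa [Function.comp_def] using (measurable_pi_apply j).comp measurable_snd
  have hT : MeasurableSet T := hcons (measurableSet_P _ _)
  have hpres := volume_preserving_piFinSuccAbove (fun _ : Fin (n+2) => ℝ) 0
  have h1 : volume (P (n+2) x) = volume T := by
    rw [← hpres.measure_preimage hT.nullMeasurableSet]
    congr 1
    ext y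
    simp only [hT_def, Set.mem_preimage, Set.mem_setOf_eq,
      MeasurableEquiv.piFinSuccAbove_apply]
    constructor <;> intro h <;> [skip; skip] <;>
      · convert h using 2
        ext i
        refine Fin.cases ?_ ?_ i <;> simp [Fin.removeNth, Fin.succAbove, Fin.tail]
  rw [h1, Measure.volume_eq_prod, Measure.prod_apply hT]
  have hsum : ∀ u : ℝ, ∀ j : Fin (n+1),
      ∑ k ∈ Iic j, (Fin.cons (x 0 + x 1 - u) (fun j : Fin n => x j.succ.succ) : Fin (n+1) → ℝ) k
        = (x 0 + ∑ k ∈ Iic j, x k.succ) - u := by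
    intro u j
    refine Fin.cases ?_ ?_ j
    · rw [sum_Iic_zero, sum_Iic_zero]
      simp [Fin.succ_zero_eq_one]
    · intro j0
      rw [sum_Iic_succ, sum_Iic_succ]
      simp only [Fin.cons_zero, Fin.cons_succ, Fin.succ_zero_eq_one]
      ring
  have hslice : (fun u => volume (Prod.mk u ⁻¹' T)) =
      (Set.Icc 0 (x 0)).indicator
        (fun u => volume (P (n+1) (Fin.cons (x 0 + x 1 - u) (fun j : Fin n => x j.succ.succ)))) := by
    funext u
    by_cases hu : u ∈ Set.Icc 0 (x 0)
    · rw [Set.indicator_of_mem hu]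
      congr 1
      ext z
      simp only [hT_def, Set.mem_preimage, Set.mem_setOf_eq, P]
      constructor
      · intro h j
        have h1 := (h j.succ).1
        have h2 := (h j.succ).2
        rw [Fin.cons_succ] at h1
        rw [sum_Iic_succ, sum_Iic_succ] at h2
        simp only [Fin.cons_zero, Fin.cons_succ] at h2
        refine ⟨h1, ?_⟩
        rw [hsum u j]
        linarith
      · intro h i
        refine Fin.cases ?_ ?_ i
        · rw [sum_Iic_zero, sum_Iic_zero, Fin.cons_zero]
          exact ⟨hu.1, hu.2⟩
        · intro j
          have h1 := (h j).1
          have h2 := (h j).2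
          rw [hsum u j] at h2
          rw [sum_Iic_succ, sum_Iic_succ]
          simp only [Fin.cons_zero, Fin.cons_succ]
          exact ⟨h1, by linarith⟩
    · rw [Set.indicator_of_notMem hu]
      have : Prod.mk u ⁻¹' T = ∅ := by
        rw [Set.eq_empty_iff_forall_notMem]
        intro z hz
        have h0 := hz 0
        rw [sum_Iic_zero, sum_Iic_zero, Fin.cons_zero] at h0
        exact hu ⟨h0.1, h0.2⟩
      rw [this, measure_empty]
  rw [hslice]; exact lintegral_indicator measurableSet_Icc _

lemma vol_P_one (x : Fin 1 → ℝ) : volume (P 1 x) = ENNReal.ofReal (x 0) := by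
  have h : P 1 x = Set.univ.pi (fun _ : Fin 1 => Set.Icc 0 (x 0)) := by
    ext y
    simp only [P, Set.mem_setOf_eq, Set.mem_pi, Set.mem_univ, forall_true_left,
      Set.mem_Icc, Fin.forall_fin_one]
    rw [sum_Iic_zero, sum_Iic_zero]
  rw [h, volume_pi_pi]
  simp [Real.volume_Icc]

def G2 (b c : ℝ) (m : ℕ) (a : ℝ) : ℝ :=
  a*(a+(m+2)*b)^(m+1) + (m+2)*a*(c-b)*(a+(m+1)*b)^m

lemma G2_nonneg {b c : ℝ} (hb : 0 ≤ b) (hc : 0 ≤ c) (m : ℕ) {a : ℝ} (ha : 0 ≤ a) :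
    0 ≤ G2 b c m a := by
  have h0 : (0:ℝ) ≤ a + ((m:ℝ)+1)*b := by positivity
  have h1 : (a+((m:ℝ)+1)*b)^m ≤ (a+((m:ℝ)+2)*b)^m :=
    pow_le_pow_left₀ h0 (by nlinarith) m
  have hX : (0:ℝ) ≤ (a+((m:ℝ)+1)*b)^m := by positivity
  have h2 : ((m:ℝ)+2)*b*(a+((m:ℝ)+1)*b)^m ≤ (a+((m:ℝ)+2)*b)*(a+((m:ℝ)+2)*b)^m :=
    mul_le_mul (by nlinarith) h1 hX (by positivity)
  have h3 := mul_le_mul_of_nonneg_left h2 ha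
  have h4 : (0:ℝ) ≤ a*c*(a+((m:ℝ)+1)*b)^m := by positivity
  rw [G2, pow_succ]
  nlinarith [h3, h4]

lemma lintegral_Icc_ofReal {a : ℝ} (ha : 0 ≤ a) {f : ℝ → ℝ} (hf : Continuous f)
    (h0 : ∀ u ∈ Set.Icc (0:ℝ) a, 0 ≤ f u) :
    ∫⁻ u in Set.Icc (0:ℝ) a, ENNReal.ofReal (f u) = ENNReal.ofReal (∫ u in (0:ℝ)..a, f u) := by
  rw [intervalIntegral.integral_of_le ha, ← MeasureTheory.integral_Icc_eq_integral_Ioc,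
    ← MeasureTheory.ofReal_integral_eq_lintegral_ofReal hf.integrableOn_Icc
      ((ae_restrict_iff' measurableSet_Icc).2 (ae_of_all _ h0))]

lemma integral_G2 (b c : ℝ) (m : ℕ) (a : ℝ) :
    ∫ u in (0:ℝ)..a, G2 b c m (a+b-u) = G2 b c (m+1) a / ((m:ℝ)+3) := by
  set F : ℝ → ℝ := fun u => -((a+b-u+((m:ℝ)+2)*b)^(m+3)/((m:ℝ)+3) - b*(a+b-u+((m:ℝ)+2)*b)^(m+2)
      + (c-b)*((a+b-u+((m:ℝ)+1)*b)^(m+2) - ((m:ℝ)+2)*b*(a+b-u+((m:ℝ)+1)*b)^(m+1))) with hF_def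
  have hlin : ∀ u : ℝ, ∀ K : ℝ, HasDerivAt (fun u:ℝ => a+b-u+K) (-1) u := by
    intro u K
    simpa using ((hasDerivAt_id u).const_sub (a+b)).add_const K
  have hm3 : ((m:ℝ)+3) ≠ 0 := by positivity
  have hF : ∀ u:ℝ, HasDerivAt F (G2 b c m (a+b-u)) u := by
    intro u
    have h1 := ((hlin u (((m:ℝ)+2)*b)).pow (m+3))
    have h2 := ((hlin u (((m:ℝ)+2)*b)).pow (m+2))
    have h3 := ((hlin u (((m:ℝ)+1)*b)).pow (m+2))
    have h4 := ((hlin u (((m:ℝ)+1)*b)).pow (m+1))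
    have hd := (((h1.div_const ((m:ℝ)+3)).sub (h2.const_mul b)).add
      ((h3.sub (h4.const_mul (((m:ℝ)+2)*b))).const_mul (c-b))).neg
    refine hd.congr_deriv ?_
    simp only [show m+3-1 = m+2 from rfl, show m+2-1 = m+1 from rfl, show m+1-1 = m from rfl, G2]
    push_cast
    field_simp [G2]
    ring
  have hcont : Continuous fun u => G2 b c m (a+b-u) := by
    unfold G2; continuity
  rw [intervalIntegral.integral_eq_sub_of_hasDerivAt (fun u _ => hF u)
    (hcont.intervalIntegrable 0 a)]
  rw [hF_def]
  simp only [G2]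
  push_cast
  field_simp
  ring

def xdef (a b c : ℝ) (n : ℕ) : Fin n → ℝ :=
  fun j => if (j:ℕ) = 0 then a else if (j:ℕ) = n-1 then c else b

lemma vol_P_xdef (b c : ℝ) (hb : 0 ≤ b) (hc : 0 ≤ c) (m : ℕ) :
    ∀ a : ℝ, 0 ≤ a →
      volume (P (m+2) (xdef a b c (m+2))) =
        ENNReal.ofReal (G2 b c m a / (m+2).factorial) := by
  induction m with
  | zero =>
    intro a ha
    rw [vol_P_succ 0 (xdef a b c 2)]
    have hx0 : xdef a b c 2 0 = a := by simp [xdef]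
    have hx1 : xdef a b c 2 1 = c := by simp [xdef]
    rw [hx0, hx1]
    have hcong : ∀ u ∈ Set.Icc (0:ℝ) a,
        volume (P 1 (Fin.cons (a + c - u) (fun j : Fin 0 => xdef a b c 2 j.succ.succ)))
          = ENNReal.ofReal (a + c - u) := by
      intro u _
      rw [vol_P_one, Fin.cons_zero]
    rw [setLIntegral_congr_fun measurableSet_Icc hcong]
    rw [lintegral_Icc_ofReal ha (by continuity)
      (fun u hu => by simp only [Set.mem_Icc] at hu; linarith [hu.2, hc])]
    congr 1
    have hder : ∀ u:ℝ, HasDerivAt (fun u:ℝ => (a+c)*u - u^2/2) (a+c-u) u := by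
      intro u
      have h := ((hasDerivAt_id u).const_mul (a+c)).sub ((hasDerivAt_pow 2 u).div_const 2)
      refine h.congr_deriv ?_
      norm_num
    rw [intervalIntegral.integral_eq_sub_of_hasDerivAt (fun u _ => hder u)
      ((by continuity : Continuous fun u:ℝ => a+c-u).intervalIntegrable 0 a)]
    simp only [G2, Nat.factorial]
    norm_num
    ring
  | succ m ih =>
    intro a ha
    rw [vol_P_succ (m+1) (xdef a b c (m+1+2))]
    have hx0 : xdef a b c (m+1+2) 0 = a := by simp [xdef]
    have hx1 : xdef a b c (m+1+2) 1 = b := by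
      simp only [xdef, Fin.val_one]
      norm_num
    rw [hx0, hx1]
    have hcong : ∀ u ∈ Set.Icc (0:ℝ) a,
        volume (P (m+2) (Fin.cons (a + b - u)
            (fun j : Fin (m+1) => xdef a b c (m+1+2) j.succ.succ)))
          = ENNReal.ofReal (G2 b c m (a+b-u) / (m+2).factorial) := by
      intro u hu
      have hx' : (Fin.cons (a + b - u)
          (fun j : Fin (m+1) => xdef a b c (m+1+2) j.succ.succ) : Fin (m+2) → ℝ)
          = xdef (a+b-u) b c (m+2) := by
        funext j
        refine Fin.cases ?_ ?_ j
        · rw [Fin.cons_zero]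
          simp [xdef]
        · intro j0
          rw [Fin.cons_succ]
          simp only [xdef, Fin.val_succ]
          by_cases h : (j0:ℕ) = m
          · rw [if_neg (by omega), if_pos (by omega), if_neg (by omega), if_pos (by omega)]
          · rw [if_neg (by omega), if_neg (by omega), if_neg (by omega), if_neg (by omega)]
      rw [hx', ih (a+b-u) (by simp only [Set.mem_Icc] at hu; linarith [hu.2, hb])]
    rw [setLIntegral_congr_fun measurableSet_Icc hcong]
    have hcontG : Continuous fun u : ℝ => G2 b c m (a+b-u) / (m+2).factorial := by
      unfold G2; continuity
    rw [lintegral_Icc_ofReal ha hcontG (fun u hu => by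
      simp only [Set.mem_Icc] at hu
      have : (0:ℝ) ≤ a + b - u := by linarith [hu.2, hb]
      exact div_nonneg (G2_nonneg hb hc m this) (by positivity))]
    congr 1
    rw [intervalIntegral.integral_div, integral_G2, div_div]
    congr 1
    have hfac : (m+1+2).factorial = (m+3) * (m+2).factorial := by
      rw [show m+1+2 = (m+2)+1 from by omega, Nat.factorial_succ]
    rw [hfac]
    push_cast
    ring

/-- For `n ≥ 3`, `n!·Vol(Π_n(a,b,…,b,c)) = a(a+nb)^{n-1} + na(c-b)(a+(n-1)b)^{n-2}`. -/
theorem factorial_mul_volume_abc (n : ℕ) (hn : 3 ≤ n) (a b c : ℝ)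
    (ha : 0 ≤ a) (hb : 0 ≤ b) (hc : 0 ≤ c) :
    (n.factorial : ℝ) *
      (volume {y : Fin n → ℝ | ∀ i : Fin n, 0 ≤ y i ∧
        ∑ j ∈ Finset.Iic i, y j ≤
          ∑ j ∈ Finset.Iic i,
            (if (j : ℕ) = 0 then a else if (j : ℕ) = n - 1 then c else b)}).toReal =
    a * (a + n * b) ^ (n - 1) + n * a * (c - b) * (a + (n - 1 : ℕ) * b) ^ (n - 2) := by
  obtain ⟨m, rfl⟩ : ∃ m, n = m + 2 := ⟨n - 2, by omega⟩
  have hset : {y : Fin (m+2) → ℝ | ∀ i : Fin (m+2), 0 ≤ y i ∧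
      ∑ j ∈ Finset.Iic i, y j ≤
        ∑ j ∈ Finset.Iic i,
          (if (j : ℕ) = 0 then a else if (j : ℕ) = (m+2) - 1 then c else b)}
      = P (m+2) (xdef a b c (m+2)) := rfl
  rw [hset, vol_P_xdef b c hb hc m a ha,
    ENNReal.toReal_ofReal (div_nonneg (G2_nonneg hb hc m ha) (by positivity))]
  have hfac : (((m+2).factorial : ℕ) : ℝ) ≠ 0 := by positivity
  rw [mul_div_cancel₀ _ hfac]
  rw [show m+2-1 = m+1 from rfl, show m+2-2 = m from rfl, G2]
  push_cast
  ring
end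

section
/- For 0 ≤ p ≤ 1 and n ≥ 1, if U_{n,1} ≤ ⋯ ≤ U_{n,n} are the order statistics of n i.i.d. uniform(0,1) random variables, then P(U_{n,i} ≥ i·p/n for all 1 ≤ i ≤ n) = 1 − p. -/
open MeasureTheory Finset

private lemma periodic_sum_shift (n : ℕ) (c : ℕ → ℕ) (hper : ∀ t, c (t + n) = c t) :
    ∀ m, ∑ s ∈ Finset.range n, c (m + s) = ∑ s ∈ Finset.range n, c s := by
  intro m
  induction m with
  | zero => simp
  | succ m ih =>
    rw [← ih]
    rcases Nat.eq_zero_or_pos n with h | h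
    · simp [h]
    · obtain ⟨k, rfl⟩ : ∃ k, n = k + 1 := ⟨n - 1, by omega⟩
      rw [Finset.sum_range_succ, Finset.sum_range_succ']
      congr 1
      · exact Finset.sum_congr rfl fun s _ => congrArg c (by omega)
      · rw [show m + 1 + k = m + (k + 1) from by omega, hper, Nat.add_zero]

private lemma cycle_count (n : ℕ) (hn : 0 < n) (c : ℕ → ℕ) (hper : ∀ t, c (t + n) = c t)
    (hK : ∑ t ∈ Finset.range n, c t ≤ n) :
    ((Finset.range n).filter
        (fun r => ∀ i < n, ∑ s ∈ Finset.range (i + 1), c (r + s) ≤ i)).card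
      = n - ∑ t ∈ Finset.range n, c t := by
  classical
  set K := ∑ t ∈ Finset.range n, c t with hKdef
  set B : ℕ → ℤ := fun m => (m : ℤ) - ∑ t ∈ Finset.range m, (c t : ℤ) with hBdef
  have hBstep : ∀ m, B (m + 1) = B m + 1 - c m := by
    intro m; simp only [hBdef, Finset.sum_range_succ]; push_cast; ring
  have hcastK : ∀ m : ℕ, ((∑ s ∈ Finset.range m, c s : ℕ) : ℤ)
      = ∑ s ∈ Finset.range m, (c s : ℤ) := fun m => by push_cast; rfl
  have hBn : ∀ m, B (m + n) = B m + ((n : ℤ) - K) := by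
    intro m
    have h1 : ∑ t ∈ Finset.range (m + n), (c t : ℤ)
        = ∑ t ∈ Finset.range m, (c t : ℤ) + ∑ s ∈ Finset.range n, (c (m + s) : ℤ) := by
      exact_mod_cast Finset.sum_range_add (fun t => (c t : ℤ)) m n
    have h2 : ∑ s ∈ Finset.range n, c (m + s) = K := periodic_sum_shift n c hper m
    have h2' : ∑ s ∈ Finset.range n, (c (m + s) : ℤ) = (K : ℤ) := by
      rw [← h2]; push_cast; rfl
    simp only [hBdef, h1, h2']; push_cast; ring
  have hgood : ∀ r i, (∑ s ∈ Finset.range (i + 1), c (r + s) ≤ i ↔ B r + 1 ≤ B (r + (i + 1))) := by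
    intro r i
    have h1 : ∑ t ∈ Finset.range (r + (i + 1)), (c t : ℤ)
        = ∑ t ∈ Finset.range r, (c t : ℤ) + ∑ s ∈ Finset.range (i + 1), (c (r + s) : ℤ) := by
      exact_mod_cast Finset.sum_range_add (fun t => (c t : ℤ)) r (i + 1)
    have hB2 : B (r + (i + 1)) = B r + ((i : ℤ) + 1)
        - ∑ s ∈ Finset.range (i + 1), (c (r + s) : ℤ) := by
      simp only [hBdef, h1]; push_cast; ring
    have hc : ((∑ s ∈ Finset.range (i + 1), c (r + s) : ℕ) : ℤ)
        = ∑ s ∈ Finset.range (i + 1), (c (r + s) : ℤ) := by push_cast; rfl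
    rw [hB2]
    omega
  by_cases hKn : K = n
  · rw [hKn, Nat.sub_self]
    rw [Finset.card_eq_zero, Finset.filter_eq_empty_iff]
    intro r _
    push_neg
    refine ⟨n - 1, by omega, ?_⟩
    have h2 : ∑ s ∈ Finset.range (n - 1 + 1), c (r + s) = K := by
      rw [show n - 1 + 1 = n from by omega]; exact periodic_sum_shift n c hper r
    omega
  · have hKlt : K < n := lt_of_le_of_ne hK hKn
    set D : ℤ := (n : ℤ) - K with hD
    have hD1 : 1 ≤ D := by omega
    have hmul : ∀ q x, B (q * n + x) = B x + (q : ℤ) * D := by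
      intro q
      induction q with
      | zero => intro x; simp
      | succ q ih =>
        intro x
        rw [show (q + 1) * n + x = (q * n + x) + n from by ring, hBn, ih x]
        push_cast; ring
    obtain ⟨m0, hm0n, hm0⟩ :=
      Finset.exists_min_image (Finset.range n) B ⟨0, Finset.mem_range.2 hn⟩
    set μ0 := B m0 with hμ0
    have hminall : ∀ m, μ0 ≤ B m := by
      intro m
      have h1 : μ0 ≤ B (m % n) := hm0 _ (Finset.mem_range.2 (Nat.mod_lt _ hn))
      have h2 := hmul (m / n) (m % n)
      rw [Nat.div_add_mod' m n] at h2
      have h3 : 0 ≤ ((m / n : ℕ) : ℤ) * D := mul_nonneg (by positivity) (by omega)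
      linarith
    have hS : ∀ r, r < n → (∀ i < n, ∑ s ∈ Finset.range (i + 1), c (r + s) ≤ i) →
        ∀ m, r < m → B r < B m := by
      intro r hrn hg m hm
      have hqi := Nat.div_add_mod' (m - r - 1) n
      have hin : (m - r - 1) % n < n := Nat.mod_lt _ hn
      have hmeq : m = (m - r - 1) / n * n + (r + ((m - r - 1) % n + 1)) := by omega
      have h1 : B r + 1 ≤ B (r + ((m - r - 1) % n + 1)) :=
        (hgood r _).1 (hg _ hin)
      have h2 := hmul ((m - r - 1) / n) (r + ((m - r - 1) % n + 1))
      have h3 : 0 ≤ (((m - r - 1) / n : ℕ) : ℤ) * D := mul_nonneg (by positivity) (by omega)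
      rw [hmeq]
      linarith
    have hcard : ((Finset.range n).filter
        (fun r => ∀ i < n, ∑ s ∈ Finset.range (i + 1), c (r + s) ≤ i)).card
        = (Finset.Ico μ0 (μ0 + D)).card := by
      apply Finset.card_bij (fun r _ => B r)
      · intro r hr
        obtain ⟨hrn, hg⟩ := Finset.mem_filter.1 hr
        rw [Finset.mem_range] at hrn
        rw [Finset.mem_Ico]
        refine ⟨hminall r, ?_⟩
        by_contra hcon
        push_neg at hcon
        have h1 : B r < B (m0 + n) := hS r hrn hg (m0 + n) (by omega)
        have h2 : B (m0 + n) = μ0 + D := by rw [hBn m0]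
        omega
      · intro r1 hr1 r2 hr2 heq
        obtain ⟨hrn1, hg1⟩ := Finset.mem_filter.1 hr1
        obtain ⟨hrn2, hg2⟩ := Finset.mem_filter.1 hr2
        rw [Finset.mem_range] at hrn1 hrn2
        rcases lt_trichotomy r1 r2 with h | h | h
        · exact absurd heq (by have := hS r1 hrn1 hg1 r2 h; omega)
        · exact h
        · exact absurd heq (by have := hS r2 hrn2 hg2 r1 h; omega)
      · intro v hv
        rw [Finset.mem_Ico] at hv
        obtain ⟨hv0, hv1⟩ := hv
        set t : ℕ := (v - μ0 + 1).toNat with ht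
        have htz : (t : ℤ) = v - μ0 + 1 := Int.toNat_of_nonneg (by omega)
        have hbig : ∀ m, n * t + n ≤ m → v < B m := by
          intro m hm
          have hdiv : t ≤ m / n := (Nat.le_div_iff_mul_le hn).2 (by rw [Nat.mul_comm]; omega)
          have h2 := hmul (m / n) (m % n)
          rw [Nat.div_add_mod' m n] at h2
          have h1 : μ0 ≤ B (m % n) := hm0 _ (Finset.mem_range.2 (Nat.mod_lt _ hn))
          have h4 : (t : ℤ) * 1 ≤ ((m / n : ℕ) : ℤ) * D :=
            mul_le_mul (by exact_mod_cast hdiv) hD1 one_pos.le (by positivity)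
          rw [mul_one] at h4
          linarith
        set F := (Finset.range (n * t + n + 1)).filter (fun m => B m ≤ v) with hF
        have hm0lt : m0 < n := Finset.mem_range.1 hm0n
        have hFne : F.Nonempty := ⟨m0, Finset.mem_filter.2
          ⟨Finset.mem_range.2 (by omega), by omega⟩⟩
        set r := F.max' hFne with hr
        have hrF : r ∈ F := F.max'_mem hFne
        have hrv : B r ≤ v := (Finset.mem_filter.1 hrF).2
        have hub : ∀ m, B m ≤ v → m ≤ r := by
          intro m hmv
          have hmbd : m < n * t + n + 1 := by
            by_contra hcon
            exact absurd hmv (not_le.2 (hbig m (by omega)))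
          exact F.le_max' m (Finset.mem_filter.2 ⟨Finset.mem_range.2 hmbd, hmv⟩)
        have hgt : ∀ m, r < m → v < B m := by
          intro m hm
          by_contra hcon
          push_neg at hcon
          exact absurd (hub m hcon) (by omega)
        have hBr : B r = v := by
          have h1 : v < B (r + 1) := hgt _ (Nat.lt_succ_self r)
          have h2 : B (r + 1) = B r + 1 - c r := hBstep r
          have h3 : (0 : ℤ) ≤ (c r : ℤ) := by positivity
          omega
        have hrn : r < n := by
          by_contra hcon
          push_neg at hcon
          have h2 : B r = B (r - n) + D := by
            rw [← hBn (r - n), show r - n + n = r from by omega]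
          have h3 := hminall (r - n)
          omega
        refine ⟨r, Finset.mem_filter.2 ⟨Finset.mem_range.2 hrn, ?_⟩, hBr⟩
        intro i hi
        refine (hgood r i).2 ?_
        have := hgt (r + (i + 1)) (by omega)
        omega
    rw [hcard, Int.card_Ico]
    omega


private def rotFin (n r : ℕ) (k : Fin (n + 1)) : Fin (n + 1) :=
  if h : (k : ℕ) < n then ⟨((k : ℕ) + r) % n, Nat.lt_succ_of_lt (Nat.mod_lt _ (by omega))⟩
  else k

private lemma rotFin_lt {n : ℕ} (r : ℕ) {k : Fin (n + 1)} (h : (k : ℕ) < n) :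
    (rotFin n r k : ℕ) = ((k : ℕ) + r) % n := by
  simp [rotFin, h]

private lemma rotFin_last {n : ℕ} (r : ℕ) {k : Fin (n + 1)} (h : ¬ (k : ℕ) < n) :
    rotFin n r k = k := by
  simp [rotFin, h]

private lemma rot_good_count (n : ℕ) (hn : 0 < n) (m : Fin n → Fin (n + 1))
    (cyc : ∀ (c : ℕ → ℕ), (∀ t, c (t + n) = c t) → (∑ t ∈ Finset.range n, c t ≤ n) →
      ((Finset.range n).filter
        (fun r => ∀ i < n, ∑ s ∈ Finset.range (i + 1), c (r + s) ≤ i)).card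
      = n - ∑ t ∈ Finset.range n, c t) :
    ((Finset.range n).filter (fun r => ∀ i : Fin n,
        (Finset.univ.filter (fun j => ((rotFin n r (m j) : ℕ) ≤ (i : ℕ)))).card ≤ (i : ℕ))).card
      = (Finset.univ.filter (fun j => (m j : ℕ) = n)).card := by
  classical
  set c : ℕ → ℕ := fun t => (Finset.univ.filter (fun j => (m j : ℕ) = t % n)).card with hc
  have hper : ∀ t, c (t + n) = c t := by
    intro t; simp only [hc, Nat.add_mod_right]
  have hKsum : (Finset.univ.filter (fun j => (m j : ℕ) < n)).card
      = ∑ t ∈ Finset.range n, c t := by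
    rw [Finset.card_eq_sum_card_fiberwise (f := fun j => (m j : ℕ)) (t := Finset.range n)
      (fun j hj => Finset.mem_range.2 (Finset.mem_filter.1 hj).2)]
    refine Finset.sum_congr rfl fun b hb => ?_
    have hbn : b < n := Finset.mem_range.1 hb
    simp only [hc]
    congr 1
    ext j
    simp only [Finset.mem_filter, Finset.mem_univ, true_and]
    rw [Nat.mod_eq_of_lt hbn]
    constructor
    · rintro ⟨_, h⟩; exact h
    · intro h; exact ⟨by omega, h⟩
  have hKle : ∑ t ∈ Finset.range n, c t ≤ n := by
    rw [← hKsum]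
    calc (Finset.univ.filter (fun j => (m j : ℕ) < n)).card
        ≤ (Finset.univ : Finset (Fin n)).card := Finset.card_filter_le _ _
      _ = n := by simp
  have hmodiff : ∀ r < n, ∀ s < n, ∀ x < n, ((x + r) % n = s ↔ x = (n - r + s) % n) := by
    intro r hr s hs x hx
    constructor
    · intro h
      have h2 : (x + r + (n - r)) % n = (s + (n - r)) % n := by
        rw [← Nat.mod_add_mod, h]
      rw [show x + r + (n - r) = x + n from by omega, Nat.add_mod_right,
        Nat.mod_eq_of_lt hx] at h2
      rw [h2, Nat.add_comm]
    · intro h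
      rw [h, Nat.mod_add_mod, show n - r + s + r = s + n from by omega,
        Nat.add_mod_right, Nat.mod_eq_of_lt hs]
  have hcardfib : ∀ r, r < n → ∀ i : ℕ, i < n →
      (Finset.univ.filter (fun j => ((rotFin n r (m j) : ℕ) ≤ i))).card
        = ∑ s ∈ Finset.range (i + 1), c ((n - r) + s) := by
    intro r hrn i hi
    rw [Finset.card_eq_sum_card_fiberwise (f := fun j => (rotFin n r (m j) : ℕ))
      (t := Finset.range (i + 1))
      (fun j hj => by
        have h : (rotFin n r (m j) : ℕ) ≤ i := (Finset.mem_filter.1 hj).2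
        show (rotFin n r (m j) : ℕ) ∈ Finset.range (i + 1)
        exact Finset.mem_range.2 (by omega))]
    refine Finset.sum_congr rfl fun s hs => ?_
    have hsi : s ≤ i := by have := Finset.mem_range.1 hs; omega
    have hsn : s < n := by omega
    simp only [hc]
    congr 1
    ext j
    simp only [Finset.mem_filter, Finset.mem_univ, true_and]
    constructor
    · rintro ⟨_, h2⟩
      by_cases hmj : (m j : ℕ) < n
      · rw [rotFin_lt r hmj] at h2
        exact (hmodiff r (by omega) s hsn _ hmj).1 h2
      · rw [rotFin_last r hmj] at h2
        have h3 : (m j : ℕ) = n := by have := (m j).isLt; omega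
        omega
    · intro h
      have hmj : (m j : ℕ) < n := by
        rw [h]; exact Nat.mod_lt _ (by omega)
      have h2 : ((rotFin n r (m j) : ℕ)) = s := by
        rw [rotFin_lt r hmj]
        exact (hmodiff r (by omega) s hsn _ hmj).2 h
      exact ⟨by omega, h2⟩
  -- translate the good condition
  have hGoodIff : ∀ r, r < n → ((∀ i : Fin n,
      (Finset.univ.filter (fun j => ((rotFin n r (m j) : ℕ) ≤ (i : ℕ)))).card ≤ (i : ℕ))
      ↔ ∀ i < n, ∑ s ∈ Finset.range (i + 1), c ((n - r) + s) ≤ i) := by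
    intro r hrn
    constructor
    · intro h i hi
      rw [← hcardfib r hrn i hi]
      exact h ⟨i, hi⟩
    · intro h i
      rw [hcardfib r hrn i i.isLt]
      exact h i i.isLt
  have hgood0 : (∀ i < n, ∑ s ∈ Finset.range (i + 1), c (n + s) ≤ i)
      ↔ (∀ i < n, ∑ s ∈ Finset.range (i + 1), c (0 + s) ≤ i) := by
    have heq : ∀ i : ℕ, ∑ s ∈ Finset.range (i + 1), c (n + s)
        = ∑ s ∈ Finset.range (i + 1), c (0 + s) := by
      intro i
      refine Finset.sum_congr rfl fun s _ => ?_
      rw [show n + s = (0 + s) + n from by omega, hper]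
    simp only [heq]
  have hbij : ((Finset.range n).filter (fun r => ∀ i : Fin n,
      (Finset.univ.filter (fun j => ((rotFin n r (m j) : ℕ) ≤ (i : ℕ)))).card ≤ (i : ℕ))).card
      = ((Finset.range n).filter
          (fun r => ∀ i < n, ∑ s ∈ Finset.range (i + 1), c (r + s) ≤ i)).card := by
    apply Finset.card_bij' (fun r _ => (n - r) % n) (fun r _ => (n - r) % n)
    · intro r hr
      obtain ⟨hrn, hg⟩ := Finset.mem_filter.1 hr
      rw [Finset.mem_range] at hrn
      rw [Finset.mem_filter, Finset.mem_range]
      refine ⟨Nat.mod_lt _ hn, ?_⟩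
      have hg2 := (hGoodIff r hrn).1 hg
      rcases Nat.eq_zero_or_pos r with h0 | h0
      · subst h0
        simp only [Nat.sub_zero, Nat.mod_self]
        simp only [Nat.sub_zero] at hg2
        exact hgood0.1 hg2
      · rw [Nat.mod_eq_of_lt (by omega)]
        exact hg2
    · intro r hr
      obtain ⟨hrn, hg⟩ := Finset.mem_filter.1 hr
      rw [Finset.mem_range] at hrn
      rw [Finset.mem_filter, Finset.mem_range]
      refine ⟨Nat.mod_lt _ hn, ?_⟩
      rw [hGoodIff _ (Nat.mod_lt _ hn)]
      rcases Nat.eq_zero_or_pos r with h0 | h0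
      · subst h0
        simp only [Nat.sub_zero, Nat.mod_self, Nat.sub_zero]
        exact hgood0.2 hg
      · rw [show (n - r) % n = n - r from Nat.mod_eq_of_lt (by omega),
          show n - (n - r) = r from by omega]
        exact hg
    · intro r hr
      obtain ⟨hrn, _⟩ := Finset.mem_filter.1 hr
      rw [Finset.mem_range] at hrn
      rcases Nat.eq_zero_or_pos r with h0 | h0
      · subst h0; simp
      · rw [show (n - r) % n = n - r from Nat.mod_eq_of_lt (by omega),
          show n - (n - r) = r from by omega, Nat.mod_eq_of_lt (by omega)]
    · intro r hr
      obtain ⟨hrn, _⟩ := Finset.mem_filter.1 hr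
      rw [Finset.mem_range] at hrn
      rcases Nat.eq_zero_or_pos r with h0 | h0
      · subst h0; simp
      · rw [show (n - r) % n = n - r from Nat.mod_eq_of_lt (by omega),
          show n - (n - r) = r from by omega, Nat.mod_eq_of_lt (by omega)]
  rw [hbij, cyc c hper hKle]
  have hcompl : (Finset.univ.filter (fun j => (m j : ℕ) = n)).card
      + (Finset.univ.filter (fun j => (m j : ℕ) < n)).card = n := by
    rw [show (Finset.univ.filter (fun j => (m j : ℕ) < n))
        = (Finset.univ.filter (fun j => ¬ ((m j : ℕ) = n))) from by
      refine Finset.filter_congr fun j _ => ?_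
      have := (m j).isLt
      constructor
      · intro h; omega
      · intro h; omega]
    rw [Finset.card_filter_add_card_filter_not]
    simp
  omega

private lemma discrete_sum (n : ℕ) (hn : 0 < n) (p : ℝ) (hp0 : 0 ≤ p) (hp1 : p ≤ 1)
    (W : Fin (n + 1) → ENNReal)
    (hWlow : ∀ k : Fin (n + 1), (k : ℕ) < n → W k = ENNReal.ofReal (p / n))
    (hWtop : W (Fin.last n) = ENNReal.ofReal (1 - p)) :
    ∑ m ∈ Finset.univ.filter (fun m : Fin n → Fin (n + 1) => ∀ i : Fin n,
        (Finset.univ.filter (fun j => (m j : ℕ) ≤ (i : ℕ))).card ≤ (i : ℕ)),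
      ∏ j, W (m j) = ENNReal.ofReal (1 - p) := by
  classical
  have hnR : (n : ℝ) ≠ 0 := by positivity
  have hWsum : ∑ k, W k = 1 := by
    rw [Fin.sum_univ_castSucc]
    have h1 : ∀ k : Fin n, W k.castSucc = ENNReal.ofReal (p / n) := fun k =>
      hWlow _ (by simp [Fin.coe_castSucc])
    simp only [h1, hWtop, Finset.sum_const, Finset.card_univ, Fintype.card_fin, nsmul_eq_mul]
    rw [show ((n : ENNReal)) = ENNReal.ofReal (n : ℝ) by simp,
      ← ENNReal.ofReal_mul (by positivity),
      ← ENNReal.ofReal_add (by positivity) (by linarith),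
      show (n : ℝ) * (p / n) + (1 - p) = 1 by field_simp; ring]
    simp
  have hrotinj : ∀ r, Function.Injective (rotFin n r) := by
    intro r k k' h
    by_cases hk : (k : ℕ) < n <;> by_cases hk' : (k' : ℕ) < n
    · have hv : ((k : ℕ) + r) % n = ((k' : ℕ) + r) % n := by
        have h2 := congrArg Fin.val h
        rwa [rotFin_lt r hk, rotFin_lt r hk'] at h2
      have hmod : (k : ℕ) % n = (k' : ℕ) % n := Nat.ModEq.add_right_cancel' r hv
      exact Fin.ext (by rwa [Nat.mod_eq_of_lt hk, Nat.mod_eq_of_lt hk'] at hmod)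
    · exfalso
      have h2 := congrArg Fin.val h
      rw [rotFin_lt r hk, rotFin_last r hk'] at h2
      have h3 : ((k : ℕ) + r) % n < n := Nat.mod_lt _ (by omega)
      omega
    · exfalso
      have h2 := congrArg Fin.val h
      rw [rotFin_last r hk, rotFin_lt r hk'] at h2
      have h3 : ((k' : ℕ) + r) % n < n := Nat.mod_lt _ (by omega)
      omega
    · rwa [rotFin_last r hk, rotFin_last r hk'] at h
  have hWrot : ∀ r k, W (rotFin n r k) = W k := by
    intro r k
    by_cases hk : (k : ℕ) < n
    · rw [hWlow (rotFin n r k) (by rw [rotFin_lt r hk]; exact Nat.mod_lt _ (by omega)),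
        hWlow k hk]
    · rw [rotFin_last r hk]
  -- step 1: n * P equals the double sum
  have step1 : ∀ r, (∑ m : Fin n → Fin (n + 1),
      (if (∀ i : Fin n, (Finset.univ.filter
          (fun j => ((rotFin n r (m j) : ℕ) ≤ (i : ℕ)))).card ≤ (i : ℕ))
        then ∏ j, W (m j) else 0))
      = ∑ m ∈ Finset.univ.filter (fun m : Fin n → Fin (n + 1) => ∀ i : Fin n,
          (Finset.univ.filter (fun j => (m j : ℕ) ≤ (i : ℕ))).card ≤ (i : ℕ)),
        ∏ j, W (m j) := by
    intro r
    rw [Finset.sum_filter]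
    refine Fintype.sum_bijective (fun m => fun j => rotFin n r (m j))
      (Finite.injective_iff_bijective.1 ?_) _ _ ?_
    · intro m1 m2 h12
      funext j
      exact hrotinj r (congrFun h12 j)
    · intro m
      by_cases hg : (∀ i : Fin n, (Finset.univ.filter
          (fun j => ((rotFin n r (m j) : ℕ) ≤ (i : ℕ)))).card ≤ (i : ℕ))
      · rw [if_pos hg, if_pos hg]
        exact Finset.prod_congr rfl fun j _ => (hWrot r (m j)).symm
      · rw [if_neg hg, if_neg hg]
  have hcount : ∀ {α : Type} [DecidableEq α] (s : Finset α) (C : α → Prop)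
      [DecidablePred C] (w : ENNReal),
      ∑ r ∈ s, (if C r then w else 0) = ((s.filter C).card : ENNReal) * w := by
    intro α _ s C _ w
    rw [← Finset.sum_filter, Finset.sum_const, nsmul_eq_mul]
  set P := ∑ m ∈ Finset.univ.filter (fun m : Fin n → Fin (n + 1) => ∀ i : Fin n,
      (Finset.univ.filter (fun j => (m j : ℕ) ≤ (i : ℕ))).card ≤ (i : ℕ)),
    ∏ j, W (m j) with hPdef
  have e1 : (n : ENNReal) * P = ∑ _r ∈ Finset.range n, P := by
    rw [Finset.sum_const, Finset.card_range, nsmul_eq_mul]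
  have e2 : ∑ _r ∈ Finset.range n, P = ∑ r ∈ Finset.range n,
      ∑ m : Fin n → Fin (n + 1),
        (if (∀ i : Fin n, (Finset.univ.filter
            (fun j => ((rotFin n r (m j) : ℕ) ≤ (i : ℕ)))).card ≤ (i : ℕ))
          then ∏ j, W (m j) else 0) :=
    Finset.sum_congr rfl fun r _ => (step1 r).symm
  have e3 : ∑ r ∈ Finset.range n, ∑ m : Fin n → Fin (n + 1),
      (if (∀ i : Fin n, (Finset.univ.filter
          (fun j => ((rotFin n r (m j) : ℕ) ≤ (i : ℕ)))).card ≤ (i : ℕ))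
        then ∏ j, W (m j) else 0)
      = ∑ m : Fin n → Fin (n + 1), ∑ r ∈ Finset.range n,
      (if (∀ i : Fin n, (Finset.univ.filter
          (fun j => ((rotFin n r (m j) : ℕ) ≤ (i : ℕ)))).card ≤ (i : ℕ))
        then ∏ j, W (m j) else 0) := Finset.sum_comm
  have e4 : ∑ m : Fin n → Fin (n + 1), ∑ r ∈ Finset.range n,
      (if (∀ i : Fin n, (Finset.univ.filter
          (fun j => ((rotFin n r (m j) : ℕ) ≤ (i : ℕ)))).card ≤ (i : ℕ))
        then ∏ j, W (m j) else 0)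
      = ∑ m : Fin n → Fin (n + 1),
          ((Finset.univ.filter (fun j => (m j : ℕ) = n)).card : ENNReal) * ∏ j, W (m j) := by
    refine Finset.sum_congr rfl fun m _ => ?_
    rw [hcount, rot_good_count n hn m (cycle_count n hn)]
  have e5 : ∑ m : Fin n → Fin (n + 1),
      ((Finset.univ.filter (fun j => (m j : ℕ) = n)).card : ENNReal) * ∏ j, W (m j)
      = ∑ m : Fin n → Fin (n + 1), ∑ j : Fin n,
          (if (m j : ℕ) = n then ∏ j', W (m j') else 0) := by
    refine Finset.sum_congr rfl fun m _ => ?_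
    rw [hcount]
  have e6 : ∑ m : Fin n → Fin (n + 1), ∑ j : Fin n,
      (if (m j : ℕ) = n then ∏ j', W (m j') else 0)
      = ∑ j : Fin n, ∑ m : Fin n → Fin (n + 1),
      (if (m j : ℕ) = n then ∏ j', W (m j') else 0) := Finset.sum_comm
  have e7 : ∀ j : Fin n, ∑ m : Fin n → Fin (n + 1),
      (if (m j : ℕ) = n then ∏ j', W (m j') else 0) = ENNReal.ofReal (1 - p) := by
    intro j
    have hper : ∀ m : Fin n → Fin (n + 1),
        (if (m j : ℕ) = n then ∏ j', W (m j') else 0)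
        = ∏ j', (if j' = j then (if (m j' : ℕ) = n then W (m j') else 0)
            else W (m j')) := by
      intro m
      by_cases hc : (m j : ℕ) = n
      · rw [if_pos hc]
        refine (Finset.prod_congr rfl fun j' _ => ?_).symm
        by_cases h : j' = j
        · subst h
          rw [if_pos rfl, if_pos hc]
        · rw [if_neg h]
      · rw [if_neg hc]
        exact (Finset.prod_eq_zero (Finset.mem_univ j)
          (by rw [if_pos rfl, if_neg hc])).symm
    simp only [hper]
    have hpi := Finset.sum_prod_piFinset (Finset.univ : Finset (Fin (n + 1)))
      (fun (j' : Fin n) (k : Fin (n + 1)) =>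
        if j' = j then (if (k : ℕ) = n then W k else 0) else W k)
    rw [Fintype.piFinset_univ] at hpi
    rw [hpi]
    have hcol : ∀ j' : Fin n, (∑ k : Fin (n + 1),
        (if j' = j then (if (k : ℕ) = n then W k else 0) else W k))
        = (if j' = j then ENNReal.ofReal (1 - p) else 1) := by
      intro j'
      by_cases h : j' = j
      · simp only [if_pos h]
        have hiff : ∀ k : Fin (n + 1), ((k : ℕ) = n) = (k = Fin.last n) := by
          intro k
          rw [Fin.ext_iff, Fin.val_last]
        simp only [hiff]
        rw [Finset.sum_ite_eq' Finset.univ (Fin.last n) W]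
        simp [hWtop]
      · simp only [if_neg h]
        exact hWsum
    rw [Finset.prod_congr rfl (fun j' _ => hcol j'),
      Finset.prod_ite_eq' Finset.univ j (fun _ => ENNReal.ofReal (1 - p))]
    simp
  have e8 : ∑ j : Fin n, ∑ m : Fin n → Fin (n + 1),
      (if (m j : ℕ) = n then ∏ j', W (m j') else 0)
      = (n : ENNReal) * ENNReal.ofReal (1 - p) := by
    rw [Finset.sum_congr rfl (fun j _ => e7 j), Finset.sum_const, Finset.card_univ,
      Fintype.card_fin, nsmul_eq_mul]
  have key : (n : ENNReal) * P = (n : ENNReal) * ENNReal.ofReal (1 - p) :=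
    ((((e1.trans e2).trans e3).trans e4).trans ((e5.trans e6))).trans e8
  exact (ENNReal.mul_right_inj (Nat.cast_ne_zero.2 hn.ne') (ENNReal.natCast_ne_top n)).1 key


private noncomputable def binOf (n : ℕ) (p : ℝ) (x : ℝ) : Fin (n + 1) :=
  ⟨(Finset.univ.filter (fun k : Fin n => ((k : ℕ) + 1) * p / n ≤ x)).card, by
    have h := Finset.card_filter_le (Finset.univ : Finset (Fin n))
      (fun k : Fin n => ((k : ℕ) + 1) * p / n ≤ x)
    simp only [Finset.card_univ, Fintype.card_fin] at h
    omega⟩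

private lemma card_filter_val_lt (n j : ℕ) (hj : j ≤ n) :
    ((Finset.univ : Finset (Fin n)).filter (fun k : Fin n => (k : ℕ) < j)).card = j := by
  rcases eq_or_lt_of_le hj with rfl | hlt
  · rw [Finset.filter_true_of_mem (fun k _ => k.isLt)]
    simp
  · have h : (Finset.univ : Finset (Fin n)).filter (fun k : Fin n => (k : ℕ) < j)
        = Finset.Iio (⟨j, hlt⟩ : Fin n) := by
      ext k
      simp [Finset.mem_Iio, Fin.lt_def]
    rw [h, Fin.card_Iio]

private lemma le_binOf_iff (n : ℕ) (hn : 0 < n) (p : ℝ) (hp0 : 0 ≤ p) (x : ℝ)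
    (j : ℕ) (hj1 : 1 ≤ j) (hjn : j ≤ n) :
    j ≤ (binOf n p x : ℕ) ↔ (j : ℝ) * p / n ≤ x := by
  classical
  have hnpos : (0 : ℝ) < n := by exact_mod_cast hn
  have hbin : (binOf n p x : ℕ)
      = (Finset.univ.filter (fun k : Fin n => ((k : ℕ) + 1) * p / n ≤ x)).card := rfl
  constructor
  · intro h
    by_contra hx
    push_neg at hx
    have hsub : (Finset.univ.filter (fun k : Fin n => ((k : ℕ) + 1) * p / n ≤ x))
        ⊆ (Finset.univ.filter (fun k : Fin n => (k : ℕ) < j - 1)) := by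
      intro k hk
      have hk2 := (Finset.mem_filter.1 hk).2
      refine Finset.mem_filter.2 ⟨Finset.mem_univ _, ?_⟩
      have h3 : (((k : ℕ) : ℝ) + 1) * p / n < (j : ℝ) * p / n := lt_of_le_of_lt hk2 hx
      have h4 : (((k : ℕ) : ℝ) + 1) * p < (j : ℝ) * p := (div_lt_div_iff_of_pos_right hnpos).1 h3
      by_contra h5
      push_neg at h5
      have h6 : (j : ℝ) ≤ ((k : ℕ) : ℝ) + 1 := by
        have : j ≤ (k : ℕ) + 1 := by omega
        exact_mod_cast this
      have h7 : (j : ℝ) * p ≤ (((k : ℕ) : ℝ) + 1) * p := mul_le_mul_of_nonneg_right h6 hp0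
      linarith
    have hcard := Finset.card_le_card hsub
    rw [card_filter_val_lt n (j - 1) (by omega)] at hcard
    omega
  · intro h
    have hsup : (Finset.univ.filter (fun k : Fin n => (k : ℕ) < j))
        ⊆ (Finset.univ.filter (fun k : Fin n => ((k : ℕ) + 1) * p / n ≤ x)) := by
      intro k hk
      have hk2 := (Finset.mem_filter.1 hk).2
      refine Finset.mem_filter.2 ⟨Finset.mem_univ _, ?_⟩
      have h1 : ((k : ℕ) : ℝ) + 1 ≤ (j : ℝ) := by
        have : (k : ℕ) + 1 ≤ j := by omega
        exact_mod_cast this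
      calc (((k : ℕ) : ℝ) + 1) * p / n ≤ (j : ℝ) * p / n := by
            apply (div_le_div_iff_of_pos_right hnpos).2
            exact mul_le_mul_of_nonneg_right h1 hp0
        _ ≤ x := h
    have hcard := Finset.card_le_card hsup
    rw [card_filter_val_lt n j hjn] at hcard
    omega

private lemma binOf_le_iff (n : ℕ) (hn : 0 < n) (p : ℝ) (hp0 : 0 ≤ p) (x : ℝ)
    (i : ℕ) (hi : i < n) :
    (binOf n p x : ℕ) ≤ i ↔ x < ((i : ℝ) + 1) * p / n := by
  have h := le_binOf_iff n hn p hp0 x (i + 1) (by omega) (by omega)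
  push_cast at h
  constructor
  · intro h1
    by_contra hx
    push_neg at hx
    have := h.2 hx
    omega
  · intro h1
    by_contra h2
    push_neg at h2
    have := h.1 (by omega)
    linarith

private lemma binOf_preimage_eq (n : ℕ) (hn : 0 < n) (p : ℝ) (hp0 : 0 ≤ p) (k : Fin (n + 1)) :
    binOf n p ⁻¹' {k}
      = if (k : ℕ) = 0 then Set.Iio ((1 : ℝ) * p / n)
        else if (k : ℕ) = n then Set.Ici ((n : ℝ) * p / n)
        else Set.Ico (((k : ℕ) : ℝ) * p / n) ((((k : ℕ) : ℝ) + 1) * p / n) := by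
  have hbound : ∀ x, (binOf n p x : ℕ) ≤ n := fun x => by
    have := (binOf n p x).isLt
    omega
  ext x
  simp only [Set.mem_preimage, Set.mem_singleton_iff, Fin.ext_iff]
  by_cases h0 : (k : ℕ) = 0
  · rw [if_pos h0, h0, Set.mem_Iio]
    have h1 := le_binOf_iff n hn p hp0 x 1 le_rfl hn
    push_cast at h1
    constructor
    · intro h
      by_contra hx
      push_neg at hx
      have := h1.2 (by linarith)
      omega
    · intro h
      by_contra h2
      have := h1.1 (by omega)
      linarith
  · rw [if_neg h0]
    by_cases hkn : (k : ℕ) = n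
    · rw [if_pos hkn, hkn, Set.mem_Ici]
      have h1 := le_binOf_iff n hn p hp0 x n hn le_rfl
      constructor
      · intro h
        exact h1.1 (by omega)
      · intro h
        have h3 := h1.2 h
        have hb := hbound x
        omega
    · rw [if_neg hkn, Set.mem_Ico]
      have hk1 : 1 ≤ (k : ℕ) := by omega
      have hkn' : (k : ℕ) < n := by
        have := k.isLt
        omega
      have h1 := le_binOf_iff n hn p hp0 x (k : ℕ) hk1 (by omega)
      have h2 := le_binOf_iff n hn p hp0 x ((k : ℕ) + 1) (by omega) (by omega)
      push_cast at h2
      constructor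
      · intro h
        refine ⟨h1.1 (by omega), ?_⟩
        by_contra hx
        push_neg at hx
        have h4 := h2.2 hx
        omega
      · rintro ⟨ha, hb⟩
        have hge := h1.2 ha
        have hlt : ¬ ((k : ℕ) + 1 ≤ (binOf n p x : ℕ)) := by
          intro hcon
          have h5 := h2.1 hcon
          linarith
        omega

private lemma measurable_binOf (n : ℕ) (hn : 0 < n) (p : ℝ) (hp0 : 0 ≤ p) :
    Measurable (binOf n p) := by
  apply measurable_to_countable'
  intro k
  rw [binOf_preimage_eq n hn p hp0 k]
  split_ifs
  · exact measurableSet_Iio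
  · exact measurableSet_Ici
  · exact measurableSet_Ico

/-- Daniels' formula: for `0 ≤ p ≤ 1`, the probability that every order statistic
`U_{n,i}` of `n` i.i.d. uniform(0,1) variables satisfies `U_{n,i} ≥ i·p/n` equals `1 - p`.
The event `U_{n,i} ≥ r` is expressed as: fewer than `i` sample values are `< r`. -/
theorem daniels_formula (n : ℕ) (hn : 0 < n) (p : ℝ) (hp0 : 0 ≤ p) (hp1 : p ≤ 1) :
    Measure.pi (fun _ : Fin n => volume.restrict (Set.Ioo (0 : ℝ) 1))
      {u : Fin n → ℝ | ∀ i : Fin n,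
        (Finset.univ.filter (fun j => u j < ((i : ℕ) + 1) * p / n)).card ≤ (i : ℕ)} =
    ENNReal.ofReal (1 - p) := by
  classical
  have hnR : (0 : ℝ) < n := by exact_mod_cast hn
  set ν : Measure (Fin (n + 1)) :=
    Measure.map (binOf n p) (volume.restrict (Set.Ioo (0 : ℝ) 1)) with hν
  have hmeas := measurable_binOf n hn p hp0
  have hν_apply : ∀ s : Set (Fin (n + 1)),
      ν s = volume (binOf n p ⁻¹' s ∩ Set.Ioo (0 : ℝ) 1) := by
    intro s
    rw [hν, Measure.map_apply hmeas (Set.toFinite s).measurableSet,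
      Measure.restrict_apply (hmeas (Set.toFinite s).measurableSet)]
  have hν_univ : ν Set.univ = 1 := by
    rw [hν_apply, Set.preimage_univ, Set.univ_inter, Real.volume_Ioo]
    simp
  haveI : IsProbabilityMeasure ν := ⟨hν_univ⟩
  -- weights
  have hWlow : ∀ k : Fin (n + 1), (k : ℕ) < n → ν {k} = ENNReal.ofReal (p / n) := by
    intro k hk
    rw [hν_apply, binOf_preimage_eq n hn p hp0 k]
    by_cases h0 : (k : ℕ) = 0
    · rw [if_pos h0]
      have hset : Set.Iio ((1 : ℝ) * p / n) ∩ Set.Ioo (0 : ℝ) 1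
          = Set.Ioo (0 : ℝ) ((1 : ℝ) * p / n) := by
        ext x
        simp only [Set.mem_inter_iff, Set.mem_Iio, Set.mem_Ioo]
        constructor
        · rintro ⟨h1, h2, _⟩
          exact ⟨h2, h1⟩
        · rintro ⟨h1, h2⟩
          have hle : (1 : ℝ) * p / n ≤ 1 := by
            rw [one_mul, div_le_one hnR]
            have : (1 : ℝ) ≤ n := by exact_mod_cast hn
            linarith
          exact ⟨h2, h1, lt_of_lt_of_le h2 hle⟩
      rw [hset, Real.volume_Ioo]
      norm_num
    · rw [if_neg h0, if_neg (by omega)]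
      rcases eq_or_lt_of_le hp0 with hp | hp
      · have hset : Set.Ico (((k : ℕ) : ℝ) * p / n) ((((k : ℕ) : ℝ) + 1) * p / n)
            ∩ Set.Ioo (0 : ℝ) 1 = (∅ : Set ℝ) := by
          rw [← hp]
          ext x
          simp only [Set.mem_inter_iff, Set.mem_Ico, Set.mem_Ioo, Set.mem_empty_iff_false]
          constructor
          · rintro ⟨⟨h1, h2⟩, _⟩
            simp only [mul_zero, zero_div] at h1 h2
            linarith
          · intro h
            exact h.elim
        rw [hset]
        simp [← hp]
      · have hk1 : 1 ≤ (k : ℕ) := by omega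
        have hset : Set.Ico (((k : ℕ) : ℝ) * p / n) ((((k : ℕ) : ℝ) + 1) * p / n)
            ∩ Set.Ioo (0 : ℝ) 1
            = Set.Ico (((k : ℕ) : ℝ) * p / n) ((((k : ℕ) : ℝ) + 1) * p / n) := by
          apply Set.inter_eq_self_of_subset_left
          intro x hx
          obtain ⟨h1, h2⟩ := hx
          constructor
          · have hlow : (0 : ℝ) < ((k : ℕ) : ℝ) * p / n := by
              apply div_pos _ hnR
              apply mul_pos _ hp
              exact_mod_cast hk1
            linarith
          · have hup : (((k : ℕ) : ℝ) + 1) * p / n ≤ 1 := by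
              rw [div_le_one hnR]
              have hc : ((k : ℕ) : ℝ) + 1 ≤ (n : ℝ) := by exact_mod_cast hk
              nlinarith
            linarith
        rw [hset, Real.volume_Ico]
        congr 1
        ring
  have hWtop : ν {Fin.last n} = ENNReal.ofReal (1 - p) := by
    rw [hν_apply, binOf_preimage_eq n hn p hp0 (Fin.last n)]
    rw [if_neg (by simp [Fin.val_last]; omega), if_pos (by simp [Fin.val_last])]
    have hnp : (n : ℝ) * p / n = p := by field_simp
    rw [hnp]
    rcases eq_or_lt_of_le hp0 with hp | hp
    · have hset : Set.Ici p ∩ Set.Ioo (0 : ℝ) 1 = Set.Ioo (0 : ℝ) 1 := by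
        apply Set.inter_eq_self_of_subset_right
        intro x hx
        rw [Set.mem_Ici, ← hp]
        exact le_of_lt hx.1
      rw [hset, Real.volume_Ioo, ← hp]
    · have hset : Set.Ici p ∩ Set.Ioo (0 : ℝ) 1 = Set.Ico p 1 := by
        ext x
        simp only [Set.mem_inter_iff, Set.mem_Ici, Set.mem_Ioo, Set.mem_Ico]
        constructor
        · rintro ⟨h1, _, h3⟩
          exact ⟨h1, h3⟩
        · rintro ⟨h1, h2⟩
          exact ⟨h1, lt_of_lt_of_le hp h1, h2⟩
      rw [hset, Real.volume_Ico]
  -- the map to bin configurations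
  set B : (Fin n → ℝ) → (Fin n → Fin (n + 1)) := fun u j => binOf n p (u j) with hB
  have hBmeas : Measurable B :=
    measurable_pi_lambda _ (fun j => hmeas.comp (measurable_pi_apply j))
  have hmap : Measure.map B (Measure.pi (fun _ : Fin n => volume.restrict (Set.Ioo (0 : ℝ) 1)))
      = Measure.pi (fun _ : Fin n => ν) := by
    refine (Measure.pi_eq fun s hs => ?_).symm
    rw [Measure.map_apply hBmeas (MeasurableSet.univ_pi fun i => hs i)]
    have hpre : B ⁻¹' (Set.pi Set.univ s) = Set.pi Set.univ (fun j => binOf n p ⁻¹' s j) := by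
      ext u
      simp [hB, Set.mem_pi]
    rw [hpre, Measure.pi_pi]
    exact Finset.prod_congr rfl fun j _ =>
      (Measure.map_apply hmeas (hs j)).symm
  -- event identification
  set E' : Set (Fin n → Fin (n + 1)) := {m | ∀ i : Fin n,
      (Finset.univ.filter (fun j => (m j : ℕ) ≤ (i : ℕ))).card ≤ (i : ℕ)} with hE'
  have hEeq : {u : Fin n → ℝ | ∀ i : Fin n,
      (Finset.univ.filter (fun j => u j < ((i : ℕ) + 1) * p / n)).card ≤ (i : ℕ)}
      = B ⁻¹' E' := by
    ext u
    simp only [Set.mem_setOf_eq, Set.mem_preimage, hE', hB]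
    have hfil : ∀ i : Fin n, (Finset.univ.filter (fun j => u j < ((i : ℕ) + 1) * p / n))
        = (Finset.univ.filter (fun j => (binOf n p (u j) : ℕ) ≤ (i : ℕ))) := by
      intro i
      apply Finset.filter_congr
      intro j _
      exact (binOf_le_iff n hn p hp0 (u j) (i : ℕ) i.isLt).symm
    constructor
    · intro h i
      rw [← hfil i]
      exact h i
    · intro h i
      rw [hfil i]
      exact h i
  have hE'meas : MeasurableSet E' := (Set.toFinite E').measurableSet
  rw [hEeq, ← Measure.map_apply hBmeas hE'meas, hmap]
  -- finite sum over configurations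
  have hE'fin : E' = ↑(Finset.univ.filter (fun m : Fin n → Fin (n + 1) => ∀ i : Fin n,
      (Finset.univ.filter (fun j => (m j : ℕ) ≤ (i : ℕ))).card ≤ (i : ℕ))) := by
    ext m
    simp [hE']
  rw [hE'fin]
  have hmeasure_finset : ∀ s : Finset (Fin n → Fin (n + 1)),
      Measure.pi (fun _ : Fin n => ν) ↑s = ∑ m ∈ s, ∏ j, ν {m j} := by
    intro s
    have hcoe : (↑s : Set (Fin n → Fin (n + 1))) = ⋃ m ∈ s, {m} := by
      ext m
      simp
    rw [hcoe, measure_biUnion_finset ?_ (fun m _ => (Set.toFinite {m}).measurableSet)]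
    · refine Finset.sum_congr rfl fun m _ => ?_
      rw [← Set.univ_pi_singleton m, Measure.pi_pi]
    · intro a _ b _ hab
      simp [Function.onFun, Set.disjoint_singleton, hab]
  rw [hmeasure_finset]
  exact discrete_sum n hn p hp0 hp1 (fun k => ν {k}) hWlow hWtop
end

section
/- The number of x-parking functions equals n! · Vol(Π_n(x)): for x ∈ ℕ^n, the number of sequences (a_1,…,a_n) of positive integers whose increasing rearrangement b_1 ≤ ⋯ ≤ b_n satisfies b_i ≤ x_1+⋯+x_i for all i equals n! times the volume of Π_n(x), i.e., equals ∑_{k ∈ K_n} binom(n; k_1,…,k_n) x_1^{k_1}⋯x_n^{k_n}. -/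
/-!
Cut `(0, x₁ + ⋯ + xₙ]` into the blocks `(x₁ + ⋯ + x_{c-1}, x₁ + ⋯ + x_c]`. Recording the block
of each entry sends an `x`-parking function, integer or real, to an ordinary parking function
`b : [n] → [n]`, and the fibre over `b` is the box `∏ⱼ (block bⱼ)`, which has `∏ⱼ x_{bⱼ}` lattice
points and volume `∏ⱼ x_{bⱼ}`. So the number of `x`-parking functions and the volume of the real
region of `x`-parking functions both equal `∑_b ∏ⱼ x_{bⱼ}`; grouping the `b` by their fibre sizes
`k` gives the multinomial sum. The real region is invariant under permuting coordinates, so its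
volume is `n!` times that of its increasing part, which the partial-sum map (determinant `1`)
identifies with `Π_n(x)` up to a null set.
-/

open MeasureTheory Finset
open scoped ENNReal Nat

section Parking

variable {α : Type*} [LinearOrder α] {n : ℕ}

/-- `u`, sorted increasingly, lies entrywise below `t` (see `isParking_iff_of_monotone`). -/
def IsParking (t u : Fin n → α) : Prop :=
  ∀ i : Fin n, (i : ℕ) + 1 ≤ #{j | u j ≤ t i}

instance {t : Fin n → α} : DecidablePred (IsParking t) :=
  fun _ => inferInstanceAs (Decidable (∀ _, _))

lemma isParking_congr {β : Type*} [LinearOrder β] {t u : Fin n → α} {t' u' : Fin n → β}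
    (h : ∀ i j, u j ≤ t i ↔ u' j ≤ t' i) : IsParking t u ↔ IsParking t' u' := by
  simp only [IsParking, h]

lemma isParking_comp_perm {t u : Fin n → α} (σ : Equiv.Perm (Fin n)) :
    IsParking t (u ∘ σ) ↔ IsParking t u := by
  refine forall_congr' fun i => ?_
  rw [card_equiv σ (t := {j | u j ≤ t i}) (by simp)]

lemma IsParking.exists_le {t u : Fin n → α} (h : IsParking t u) (j : Fin n) :
    ∃ i, u j ≤ t i := by
  have hj := j.isLt
  set i₀ : Fin n := ⟨n - 1, by omega⟩
  have hall : #{j | u j ≤ t i₀} = #(univ : Finset (Fin n)) := by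
    have := h i₀
    have := card_filter_le univ fun j => u j ≤ t i₀
    simp only [card_univ, Fintype.card_fin, i₀] at *
    omega
  exact ⟨i₀, card_filter_eq_iff.1 hall j (mem_univ j)⟩

lemma isParking_iff_of_monotone {t u : Fin n → α} (hu : Monotone u) :
    IsParking t u ↔ ∀ i, u i ≤ t i := by
  refine forall_congr' fun i => ⟨fun h => ?_, fun h => ?_⟩
  · by_contra! hlt
    have : #{j | u j ≤ t i} ≤ #(Iio i) :=
      card_le_card fun j hj => mem_Iio.2 <| lt_of_not_ge fun hij =>
        (hlt.trans_le (hu hij)).not_ge (mem_filter.1 hj).2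
    rw [Fin.card_Iio] at this
    omega
  · calc (i : ℕ) + 1 = #(Iic i) := (Fin.card_Iic i).symm
      _ ≤ #{j | u j ≤ t i} :=
        card_le_card fun j hj => mem_filter.2 ⟨mem_univ j, (hu (mem_Iic.1 hj)).trans h⟩

lemma exists_forall_le_iff_le {t : Fin n → α} (ht : Monotone t) {a : α} (h : ∃ i, a ≤ t i) :
    ∃ c, ∀ i, a ≤ t i ↔ c ≤ i := by
  have hne : ({i | a ≤ t i} : Finset (Fin n)).Nonempty := filter_nonempty_iff.2 (by simpa using h)
  refine ⟨_, fun i => ⟨fun hi => min'_le {i | a ≤ t i} i (mem_filter.2 ⟨mem_univ i, hi⟩),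
    fun hi => (mem_filter.1 (min'_mem _ hne)).2.trans (ht hi)⟩⟩

end Parking

section PartialSums

variable {n : ℕ}

lemma sum_Iic_eq_sum_Iio_add {M : Type*} [AddCommMonoid M] (f : Fin n → M) (c : Fin n) :
    ∑ l ∈ Iic c, f l = ∑ l ∈ Iio c, f l + f c := by
  rw [Iic_eq_cons_Iio, sum_cons, add_comm]

lemma pos_and_strictMono_sum_Iic_iff {M : Type*} [AddCommMonoid M] [LinearOrder M]
    [IsOrderedCancelAddMonoid M] (y : Fin n → M) :
    ((∀ i, 0 < ∑ j ∈ Iic i, y j) ∧ StrictMono fun i => ∑ j ∈ Iic i, y j) ↔ ∀ i, 0 < y i := by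
  constructor
  · rintro ⟨hpos, hmono⟩ i
    by_cases hi : IsMin i
    · simpa [sum_Iic_eq_sum_Iio_add y i, hi.finsetIio_eq] using hpos i
    · have : ∑ j ∈ Iic (Order.pred i), y j < ∑ j ∈ Iic i, y j :=
        hmono (Order.pred_lt_of_not_isMin hi)
      rwa [sum_Iic_eq_sum_Iio_add y i, Iic_pred_eq_Iio_of_not_isMin hi,
        lt_add_iff_pos_right] at this
  · intro hy
    refine ⟨fun i => sum_pos (fun j _ => hy j) ⟨i, mem_Iic.2 le_rfl⟩, fun i j hij => ?_⟩
    exact sum_lt_sum_of_subset (Iic_subset_Iic.2 hij.le) (mem_Iic.2 le_rfl)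
      (fun h => hij.not_ge (mem_Iic.1 h)) (hy j) fun l _ _ => (hy l).le

variable {M : Type*} [AddCommMonoid M] [LinearOrder M] [IsOrderedAddMonoid M] {x : Fin n → M}

lemma monotone_sum_Iic (hx : ∀ i, 0 ≤ x i) : Monotone fun i => ∑ l ∈ Iic i, x l :=
  fun _ _ h => sum_le_sum_of_subset_of_nonneg (Iic_subset_Iic.2 h) fun l _ _ => hx l

lemma mem_Ioc_sum_Iio_sum_Iic_iff (hx : ∀ i, 0 ≤ x i) {a : M} (ha : 0 < a) (c : Fin n) :
    a ∈ Set.Ioc (∑ l ∈ Iio c, x l) (∑ l ∈ Iic c, x l) ↔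
      ∀ i, a ≤ ∑ l ∈ Iic i, x l ↔ c ≤ i := by
  constructor
  · rintro ⟨hlo, hhi⟩ i
    refine ⟨fun hi => le_of_not_gt fun hic => ?_, fun hci => hhi.trans (monotone_sum_Iic hx hci)⟩
    have : ∑ l ∈ Iic i, x l ≤ ∑ l ∈ Iio c, x l :=
      sum_le_sum_of_subset_of_nonneg (fun l hl => mem_Iio.2 ((mem_Iic.1 hl).trans_lt hic))
        fun l _ _ => hx l
    exact (hlo.trans_le (hi.trans this)).false
  · intro h
    refine ⟨?_, (h c).2 le_rfl⟩
    by_cases hc : IsMin c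
    · simpa [hc.finsetIio_eq] using ha
    · rw [← Iic_pred_eq_Iio_of_not_isMin hc]
      exact lt_of_not_ge fun hle => (Order.pred_lt_of_not_isMin hc).not_ge ((h _).1 hle)

def parkingRegion (x : Fin n → M) : Set (Fin n → M) :=
  {u | (∀ j, 0 < u j) ∧ IsParking (fun i => ∑ l ∈ Iic i, x l) u}

def blockBox (x : Fin n → M) (b : Fin n → Fin n) : Set (Fin n → M) :=
  Set.univ.pi fun j => Set.Ioc (∑ l ∈ Iio (b j), x l) (∑ l ∈ Iic (b j), x l)

def parkingFunctions (n : ℕ) : Finset (Fin n → Fin n) := {b | IsParking id b}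

lemma mem_blockBox_iff (hx : ∀ i, 0 ≤ x i) {u : Fin n → M} {b : Fin n → Fin n} :
    u ∈ blockBox x b ↔ (∀ j, 0 < u j) ∧ ∀ i j, u j ≤ ∑ l ∈ Iic i, x l ↔ b j ≤ i := by
  simp only [blockBox, Set.mem_univ_pi]
  constructor
  · intro h
    have hpos j : 0 < u j := (sum_nonneg fun l _ => hx l).trans_lt (h j).1
    exact ⟨hpos, fun i j => (mem_Ioc_sum_Iio_sum_Iic_iff hx (hpos j) (b j)).1 (h j) i⟩
  · rintro ⟨hpos, h⟩ j
    exact (mem_Ioc_sum_Iio_sum_Iic_iff hx (hpos j) (b j)).2 fun i => h i j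

lemma parkingRegion_eq_biUnion (hx : ∀ i, 0 ≤ x i) :
    parkingRegion x = ⋃ b ∈ parkingFunctions n, blockBox x b := by
  ext u
  simp only [parkingRegion, parkingFunctions, Set.mem_ofPred_eq, Set.mem_iUnion, mem_filter,
    mem_univ, true_and, exists_prop, mem_blockBox_iff hx]
  constructor
  · rintro ⟨hpos, hu⟩
    choose b hb using fun j => exists_forall_le_iff_le (monotone_sum_Iic hx) (hu.exists_le j)
    exact ⟨b, (isParking_congr fun i j => hb j i).1 hu, hpos, fun i j => hb j i⟩
  · rintro ⟨b, hb, hpos, hub⟩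
    exact ⟨hpos, (isParking_congr hub).2 hb⟩

lemma pairwise_disjoint_blockBox (hx : ∀ i, 0 ≤ x i) :
    Pairwise (Function.onFun Disjoint (blockBox x)) := by
  refine fun b b' hne => Set.disjoint_left.2 fun u hb hb' => hne <| funext fun j => ?_
  rw [mem_blockBox_iff hx] at hb hb'
  exact le_antisymm ((hb.2 _ j).1 ((hb'.2 _ j).2 le_rfl)) ((hb'.2 _ j).1 ((hb.2 _ j).2 le_rfl))

end PartialSums

section Counting

variable {n : ℕ}

lemma blockBox_eq_coe_piFinset (x : Fin n → ℕ) (b : Fin n → Fin n) :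
    blockBox x b =
      ↑(Fintype.piFinset fun j => Ioc (∑ l ∈ Iio (b j), x l) (∑ l ∈ Iic (b j), x l)) := by
  simp [blockBox, Fintype.coe_piFinset]

lemma ncard_parkingRegion (x : Fin n → ℕ) :
    (parkingRegion x).ncard = ∑ b ∈ parkingFunctions n, ∏ j, x (b j) := by
  have hx : ∀ i, 0 ≤ x i := fun i => Nat.zero_le _
  have : parkingRegion x = ↑((parkingFunctions n).biUnion fun b =>
      Fintype.piFinset fun j => Ioc (∑ l ∈ Iio (b j), x l) (∑ l ∈ Iic (b j), x l)) := by
    simp [coe_biUnion, parkingRegion_eq_biUnion hx, blockBox_eq_coe_piFinset]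
  rw [this, Set.ncard_coe_finset, card_biUnion]
  · refine sum_congr rfl fun b _ => ?_
    simp [Fintype.card_piFinset, sum_Iic_eq_sum_Iio_add x]
  · intro b _ b' _ hne
    simpa only [← disjoint_coe, ← blockBox_eq_coe_piFinset] using
      pairwise_disjoint_blockBox hx hne

lemma volume_parkingRegion {x : Fin n → ℝ} (hx : ∀ i, 0 ≤ x i) :
    volume (parkingRegion x) = ∑ b ∈ parkingFunctions n, ∏ j, ENNReal.ofReal (x (b j)) := by
  rw [parkingRegion_eq_biUnion hx, measure_biUnion_finset
    (fun b _ b' _ hne => pairwise_disjoint_blockBox hx hne)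
    fun b _ => MeasurableSet.univ_pi fun j => measurableSet_Ioc]
  refine sum_congr rfl fun b _ => ?_
  simp [blockBox, volume_pi_pi, Real.volume_Ioc, sum_Iic_eq_sum_Iio_add x]

lemma measurableSet_parkingRegion {x : Fin n → ℝ} (hx : ∀ i, 0 ≤ x i) :
    MeasurableSet (parkingRegion x) := by
  rw [parkingRegion_eq_biUnion hx]
  exact (parkingFunctions n).measurableSet_biUnion fun b _ =>
    MeasurableSet.univ_pi fun j => measurableSet_Ioc

end Counting

section Fibers

variable {α ι : Type*} [Fintype α] [DecidableEq ι]

def fiberCard (b : α → ι) (i : ι) : ℕ := #{a | b a = i}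

lemma sum_fiberCard [Fintype ι] (b : α → ι) : ∑ i, fiberCard b i = Fintype.card α :=
  (card_eq_sum_card_fiberwise fun a _ => mem_univ (b a)).symm

lemma prod_comp_eq_prod_pow_fiberCard [Fintype ι] {R : Type*} [CommMonoid R] (x : ι → R)
    (b : α → ι) :
    ∏ a, x (b a) = ∏ i, x i ^ fiberCard b i := by
  rw [← prod_fiberwise_of_maps_to (g := b) (t := univ) fun a _ => mem_univ (b a)]
  refine prod_congr rfl fun i _ => ?_
  rw [fiberCard, ← prod_const]
  exact prod_congr rfl fun a ha => by rw [(mem_filter.1 ha).2]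

lemma card_filter_le_eq_sum_fiberCard [LinearOrder ι] [LocallyFiniteOrderBot ι] (b : α → ι)
    (i : ι) : #{a | b a ≤ i} = ∑ l ∈ Iic i, fiberCard b l := by
  rw [card_eq_sum_card_fiberwise fun a ha => mem_Iic.2 (mem_filter.1 ha).2]
  refine sum_congr rfl fun l hl => congrArg card <| filter_filter _ _ _ |>.trans ?_
  exact filter_congr fun a _ => ⟨fun h => h.2, fun h => ⟨h ▸ mem_Iic.1 hl, h⟩⟩

/-- Read off the coefficient of `∏ X i ^ k i` in `(∑ i, X i) ^ card α = ∑ b, ∏ a, X (b a)`. -/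
lemma card_fiberCard_eq [Fintype ι] [DecidableEq α] (k : ι → ℕ) (hk : ∑ i, k i = Fintype.card α) :
    #{b : α → ι | fiberCard b = k} = Nat.multinomial univ k := by
  set d : ι →₀ ℕ := Finsupp.equivFunOnFinite.symm k
  have hexpand : (∑ i, MvPolynomial.X i : MvPolynomial ι ℕ) ^ Fintype.card α =
      ∑ b : α → ι, MvPolynomial.monomial (∑ a, Finsupp.single (b a) 1) 1 := by
    rw [← card_univ, ← prod_const, Fintype.prod_sum]
    simp [MvPolynomial.X, MvPolynomial.monomial_sum_one]
  have hcoeff := MvPolynomial.coeff_sum_X_pow_of_fintype (R := ℕ) d (Fintype.card α)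
  rw [hexpand, MvPolynomial.coeff_sum] at hcoeff
  have hfiber (b : α → ι) : ∑ a, Finsupp.single (b a) 1 = d ↔ fiberCard b = k := by
    simp [Finsupp.ext_iff, funext_iff, Finsupp.finsetSum_apply, Finsupp.single_apply, fiberCard, d]
  simp only [MvPolynomial.coeff_monomial, sum_boole, Nat.cast_id, hfiber] at hcoeff
  rw [hcoeff, Finsupp.sum_fintype _ _ fun _ => rfl, if_pos (show ∑ i, d i = _ from hk),
    Finsupp.multinomial_eq_of_support_subset (subset_univ _)]
  rfl

end Fibers

section Multinomial

variable {n : ℕ}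

lemma isParking_id_iff (b : Fin n → Fin n) :
    IsParking id b ↔ ∀ i : Fin n, (i : ℕ) + 1 ≤ ∑ l ∈ Iic i, fiberCard b l := by
  simp only [IsParking, id, card_filter_le_eq_sum_fiberCard]

lemma forall_le_sum_Iic_iff {k : Fin n → ℕ} (hk : ∑ i, k i = n) :
    (∀ j : Fin n, (j : ℕ) + 1 ≤ n - 1 → (j : ℕ) + 1 ≤ ∑ l ∈ Iic j, k l) ↔
      ∀ j : Fin n, (j : ℕ) + 1 ≤ ∑ l ∈ Iic j, k l := by
  refine ⟨fun h j => ?_, fun h j _ => h j⟩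
  by_cases hj : (j : ℕ) + 1 ≤ n - 1
  · exact h j hj
  · have : Iic j = univ := eq_univ_iff_forall.2 fun l => mem_Iic.2 <| Fin.le_def.2 <| by
      have := l.isLt
      omega
    rw [this, hk]
    exact j.isLt

theorem sum_parkingFunctions_prod_eq {R : Type*} [CommSemiring R] (x : Fin n → R) :
    ∑ b ∈ parkingFunctions n, ∏ j, x (b j) =
      ∑ k ∈ (Nat.antidiagonalTuple n n).filter
          (fun k => ∀ j : Fin n, (j : ℕ) + 1 ≤ n - 1 → (j : ℕ) + 1 ≤ ∑ l ∈ Iic j, k l),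
        Nat.multinomial univ k * ∏ i, x i ^ k i := by
  have hmaps : ∀ b ∈ parkingFunctions n, fiberCard b ∈ (Nat.antidiagonalTuple n n).filter
      (fun k => ∀ j : Fin n, (j : ℕ) + 1 ≤ n - 1 → (j : ℕ) + 1 ≤ ∑ l ∈ Iic j, k l) := by
    intro b hb
    have hsum : ∑ i, fiberCard b i = n := by simpa using sum_fiberCard b
    rw [mem_filter, Nat.mem_antidiagonalTuple, forall_le_sum_Iic_iff hsum, ← isParking_id_iff]
    exact ⟨hsum, (mem_filter.1 hb).2⟩
  rw [← sum_fiberwise_of_maps_to hmaps]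
  refine sum_congr rfl fun k hk => ?_
  obtain ⟨hsum, hK⟩ := mem_filter.1 hk
  rw [Nat.mem_antidiagonalTuple] at hsum
  have hfiber : {b ∈ parkingFunctions n | fiberCard b = k} =
      ({b | fiberCard b = k} : Finset (Fin n → Fin n)) := by
    refine filter_filter _ _ _ |>.trans (filter_congr fun b _ => and_iff_right_iff_imp.2 ?_)
    rintro rfl
    exact (isParking_id_iff b).2 ((forall_le_sum_Iic_iff hsum).1 hK)
  rw [sum_congr rfl fun b hb => by rw [prod_comp_eq_prod_pow_fiberCard, (mem_filter.1 hb).2],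
    sum_const, hfiber, card_fiberCard_eq k (by simpa using hsum), nsmul_eq_mul]

end Multinomial

section Symmetrization

variable {n : ℕ}

lemma volume_ker_eq_zero {f : (Fin n → ℝ) →ₗ[ℝ] ℝ} (hf : f ≠ 0) :
    volume (LinearMap.ker f : Set (Fin n → ℝ)) = 0 :=
  Measure.addHaar_submodule _ _ fun h => hf (LinearMap.ker_eq_top.1 h)

lemma ae_forall_ne_zero : ∀ᵐ y : Fin n → ℝ, ∀ i, y i ≠ 0 := by
  refine ae_all_iff.2 fun i => measure_mono_null (fun y hy => ?_)
    (volume_ker_eq_zero (f := (LinearMap.proj i : (Fin n → ℝ) →ₗ[ℝ] ℝ)) fun h => by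
      simpa using LinearMap.congr_fun h (Pi.single i 1))
  simpa using hy

lemma ae_injective : ∀ᵐ u : Fin n → ℝ, Function.Injective u := by
  have hnull (p q : Fin n) : ∀ᵐ u : Fin n → ℝ, u p = u q → p = q := by
    by_cases hpq : p = q
    · exact Filter.Eventually.of_forall fun _ _ => hpq
    refine measure_mono_null (fun u hu => ?_) (volume_ker_eq_zero
      (f := (LinearMap.proj p : (Fin n → ℝ) →ₗ[ℝ] ℝ) - LinearMap.proj q) fun h => ?_)
    · simp_all
    · simpa [Pi.single_apply, Ne.symm hpq] using LinearMap.congr_fun h (Pi.single p 1)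
  filter_upwards [ae_all_iff.2 fun p => ae_all_iff.2 (hnull p)] with u hu
  exact fun p q => hu p q

lemma eq_sort_of_strictMono_comp {α : Type*} [LinearOrder α] {u : Fin n → α}
    {σ : Equiv.Perm (Fin n)} (h : StrictMono (u ∘ σ)) : σ = Tuple.sort u :=
  Tuple.eq_sort_iff.2 ⟨h.monotone, fun _ _ hij heq => absurd heq (h hij).ne⟩

lemma measurableSet_strictMono_comp (σ : Equiv.Perm (Fin n)) :
    MeasurableSet {u : Fin n → ℝ | StrictMono (u ∘ σ)} := by
  have : {u : Fin n → ℝ | StrictMono (u ∘ σ)} =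
      ⋂ i, ⋂ j, ⋂ (_ : i < j), {u | u (σ i) < u (σ j)} := by
    ext u
    simp [StrictMono]
  rw [this]
  exact .iInter fun i => .iInter fun j => .iInter fun _ =>
    measurableSet_lt (measurable_pi_apply _) (measurable_pi_apply _)

lemma measurePreserving_comp_perm (σ : Equiv.Perm (Fin n)) :
    MeasurePreserving (fun u : Fin n → ℝ => u ∘ σ) volume volume := by
  convert volume_measurePreserving_piCongrLeft (fun _ : Fin n => ℝ) σ.symm using 1
  ext u i
  simp [MeasurableEquiv.coe_piCongrLeft, Equiv.piCongrLeft_apply_eq_cast]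

theorem volume_eq_factorial_mul_volume_inter_strictMono {S : Set (Fin n → ℝ)}
    (hS : MeasurableSet S) (hperm : ∀ (σ : Equiv.Perm (Fin n)) u, u ∘ σ ∈ S ↔ u ∈ S) :
    volume S = n ! * volume (S ∩ {u | StrictMono u}) := by
  set C : Equiv.Perm (Fin n) → Set (Fin n → ℝ) := fun σ => S ∩ {u | StrictMono (u ∘ σ)}
  have hmeas σ : MeasurableSet (C σ) := hS.inter (measurableSet_strictMono_comp σ)
  have hC σ : volume (C σ) = volume (S ∩ {u | StrictMono u}) := by
    have : C σ = (fun u => u ∘ σ) ⁻¹' (S ∩ {u | StrictMono u}) := by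
      ext u
      simp [C, hperm]
    rw [this, (measurePreserving_comp_perm σ).measure_preimage
      (by simpa [C] using (hmeas 1).nullMeasurableSet)]
  have hdisj : Pairwise (Function.onFun Disjoint C) := fun σ τ hne =>
    Set.disjoint_left.2 fun u hσ hτ =>
      hne ((eq_sort_of_strictMono_comp hσ.2).trans (eq_sort_of_strictMono_comp hτ.2).symm)
  have hcover : volume S = volume (⋃ σ, C σ) := by
    refine le_antisymm (measure_mono_ae (ae_injective.mono fun u hu huS => ?_))
      (measure_mono (Set.iUnion_subset fun σ => Set.inter_subset_left))
    exact Set.mem_iUnion.2 ⟨Tuple.sort u, huS,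
      (Tuple.monotone_sort u).strictMono_of_injective (hu.comp (Tuple.sort u).injective)⟩
  rw [hcover, measure_iUnion hdisj hmeas, tsum_fintype, sum_congr rfl fun σ _ => hC σ, sum_const,
    card_univ, Fintype.card_perm, Fintype.card_fin, nsmul_eq_mul]

end Symmetrization

section ChangeOfVariables

variable {n : ℕ}

def partialSumMatrix (n : ℕ) : Matrix (Fin n) (Fin n) ℝ :=
  Matrix.of fun i j => if j ≤ i then 1 else 0

lemma partialSumMatrix_mulVec (y : Fin n → ℝ) :
    (partialSumMatrix n).mulVec y = fun i => ∑ j ∈ Iic i, y j := by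
  ext i
  simp [partialSumMatrix, Matrix.mulVec, dotProduct, ← sum_filter, filter_ge_eq_Iic]

lemma det_partialSumMatrix : (partialSumMatrix n).det = 1 := by
  rw [Matrix.det_of_isLowerTriangular _ fun i j (hij : i < j) => by
    simp [partialSumMatrix, not_le.2 hij]]
  simp [partialSumMatrix]

lemma volume_preimage_partialSumMatrix_mulVec (s : Set (Fin n → ℝ)) :
    volume ((partialSumMatrix n).mulVec ⁻¹' s) = volume s := by
  have hdet : LinearMap.det (Matrix.toLin' (partialSumMatrix n)) = 1 := by
    rw [LinearMap.det_toLin', det_partialSumMatrix]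
  have h := Measure.addHaar_preimage_linearMap volume (hdet ▸ one_ne_zero) s
  rwa [hdet, inv_one, abs_one, ENNReal.ofReal_one, one_mul] at h

lemma preimage_partialSumMatrix_mulVec_parkingRegion_inter (x : Fin n → ℝ) :
    (partialSumMatrix n).mulVec ⁻¹' (parkingRegion x ∩ {u | StrictMono u}) =
      {y | ∀ i, 0 < y i ∧ ∑ j ∈ Iic i, y j ≤ ∑ j ∈ Iic i, x j} := by
  ext y
  simp only [Set.mem_preimage, Set.mem_inter_iff, parkingRegion, Set.mem_ofPred_eq,
    partialSumMatrix_mulVec, forall_and, ← pos_and_strictMono_sum_Iic_iff y]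
  constructor
  · rintro ⟨⟨hpos, hpark⟩, hmono⟩
    exact ⟨⟨hpos, hmono⟩, (isParking_iff_of_monotone hmono.monotone).1 hpark⟩
  · rintro ⟨⟨hpos, hmono⟩, hle⟩
    exact ⟨⟨hpos, (isParking_iff_of_monotone hmono.monotone).2 hle⟩, hmono⟩

lemma volume_setOf_forall_nonneg_and (p : Fin n → (Fin n → ℝ) → Prop) :
    volume {y : Fin n → ℝ | ∀ i, 0 ≤ y i ∧ p i y} = volume {y | ∀ i, 0 < y i ∧ p i y} :=
  measure_congr <| Filter.eventuallyEq_set.2 <| ae_forall_ne_zero.mono fun _ hy =>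
    forall_congr' fun i => and_congr_left' (hy i).symm.le_iff_lt

lemma comp_perm_mem_parkingRegion_iff (x : Fin n → ℝ) (σ : Equiv.Perm (Fin n))
    (u : Fin n → ℝ) : u ∘ σ ∈ parkingRegion x ↔ u ∈ parkingRegion x :=
  and_congr (σ.forall_congr_right (q := fun j => 0 < u j)) (isParking_comp_perm σ)

theorem factorial_mul_volume_polytope {x : Fin n → ℝ} (hx : ∀ i, 0 ≤ x i) :
    (n ! : ℝ≥0∞) * volume {y : Fin n → ℝ | ∀ i, 0 ≤ y i ∧ ∑ j ∈ Iic i, y j ≤ ∑ j ∈ Iic i, x j} =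
      ∑ b ∈ parkingFunctions n, ∏ j, ENNReal.ofReal (x (b j)) := by
  rw [volume_setOf_forall_nonneg_and (fun i y => ∑ j ∈ Iic i, y j ≤ ∑ j ∈ Iic i, x j),
    ← preimage_partialSumMatrix_mulVec_parkingRegion_inter, volume_preimage_partialSumMatrix_mulVec,
    ← volume_eq_factorial_mul_volume_inter_strictMono (measurableSet_parkingRegion hx)
      (comp_perm_mem_parkingRegion_iff x), volume_parkingRegion hx]

end ChangeOfVariables

theorem card_x_parking_functions_general (n : ℕ) (x : Fin n → ℕ) :
    ((Nat.card {a : Fin n → ℕ // (∀ i, 1 ≤ a i) ∧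
        ∀ i : Fin n, (i : ℕ) + 1 ≤
          (Finset.univ.filter (fun j => a j ≤ ∑ l ∈ Finset.Iic i, x l)).card} : ℝ) =
      (n.factorial : ℝ) *
        (volume {y : Fin n → ℝ | ∀ i : Fin n, 0 ≤ y i ∧
          ∑ j ∈ Finset.Iic i, y j ≤ ∑ j ∈ Finset.Iic i, (x j : ℝ)}).toReal) ∧
    Nat.card {a : Fin n → ℕ // (∀ i, 1 ≤ a i) ∧
        ∀ i : Fin n, (i : ℕ) + 1 ≤
          (Finset.univ.filter (fun j => a j ≤ ∑ l ∈ Finset.Iic i, x l)).card} =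
      ∑ k ∈ (Finset.Nat.antidiagonalTuple n n).filter
          (fun k => ∀ j : Fin n, (j : ℕ) + 1 ≤ n - 1 →
            (j : ℕ) + 1 ≤ ∑ l ∈ Finset.Iic j, k l),
        Nat.multinomial Finset.univ k * ∏ i : Fin n, x i ^ (k i) := by
  have hcard : Nat.card {a : Fin n → ℕ // (∀ i, 1 ≤ a i) ∧
      ∀ i : Fin n, (i : ℕ) + 1 ≤ #{j | a j ≤ ∑ l ∈ Iic i, x l}} =
      ∑ b ∈ parkingFunctions n, ∏ j, x (b j) :=
    (Nat.card_coe_set_eq (parkingRegion x)).trans (ncard_parkingRegion x)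
  have hvol := factorial_mul_volume_polytope (x := fun i => (x i : ℝ)) fun i => (x i).cast_nonneg
  simp only [ENNReal.ofReal_natCast] at hvol
  refine ⟨?_, hcard.trans (sum_parkingFunctions_prod_eq x)⟩
  rw [hcard, ← ENNReal.toReal_natCast, ← ENNReal.toReal_natCast (n !), ← ENNReal.toReal_mul, hvol]
  norm_cast

/-- The number of `x`-parking functions equals `n!·Vol(Π_n(x))`, i.e. equals
`∑_{k ∈ K_n} binom(n; k_1,…,k_n) x_1^{k_1}⋯x_n^{k_n}`.  The condition that the
increasing rearrangement `b` of `a` satisfies `b_i ≤ u_i` is expressed as: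
at least `i` of the values `a_j` are `≤ u_i`. -/
theorem card_x_parking_functions (n : ℕ) (hn : 0 < n) (x : Fin n → ℕ) :
    ((Nat.card {a : Fin n → ℕ // (∀ i, 1 ≤ a i) ∧
        ∀ i : Fin n, (i : ℕ) + 1 ≤
          (Finset.univ.filter (fun j => a j ≤ ∑ l ∈ Finset.Iic i, x l)).card} : ℝ) =
      (n.factorial : ℝ) *
        (volume {y : Fin n → ℝ | ∀ i : Fin n, 0 ≤ y i ∧
          ∑ j ∈ Finset.Iic i, y j ≤ ∑ j ∈ Finset.Iic i, (x j : ℝ)}).toReal) ∧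
    Nat.card {a : Fin n → ℕ // (∀ i, 1 ≤ a i) ∧
        ∀ i : Fin n, (i : ℕ) + 1 ≤
          (Finset.univ.filter (fun j => a j ≤ ∑ l ∈ Finset.Iic i, x l)).card} =
      ∑ k ∈ (Finset.Nat.antidiagonalTuple n n).filter
          (fun k => ∀ j : Fin n, (j : ℕ) + 1 ≤ n - 1 →
            (j : ℕ) + 1 ≤ ∑ l ∈ Finset.Iic j, k l),
        Nat.multinomial Finset.univ k * ∏ i : Fin n, x i ^ (k i) :=
  card_x_parking_functions_general n x
end

section
/- The number of parking functions of length n is (n+1)^{n−1}. -/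
open Finset

section
variable {n : ℕ}

/-- count of values of `a` below `s` -/
def Dcnt (a : Fin n → ZMod (n+1)) (s : ℕ) : ℕ :=
  (univ.filter (fun j => (a j).val < s)).card

/-- the height function `D` -/
def Dfn (a : Fin n → ZMod (n+1)) (t : ℕ) : ℤ :=
  (Dcnt a (t % (n+1)) : ℤ) + (n : ℤ) * ((t / (n+1) : ℕ) : ℤ) - (t : ℤ)

lemma Dcnt_all (a : Fin n → ZMod (n+1)) : Dcnt a (n+1) = n := by
  unfold Dcnt
  rw [filter_true_of_mem (fun j _ => ZMod.val_lt (a j)), card_univ, Fintype.card_fin]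

lemma Dcnt_le (a : Fin n → ZMod (n+1)) (s : ℕ) : Dcnt a s ≤ n := by
  unfold Dcnt
  calc (univ.filter _).card ≤ (univ : Finset (Fin n)).card := card_le_card (filter_subset _ _)
  _ = n := by simp

lemma Dfn_low (a : Fin n → ZMod (n+1)) (s : ℕ) (hs : s ≤ n+1) :
    Dfn a s = (Dcnt a s : ℤ) - s := by
  rcases eq_or_lt_of_le hs with h | h
  · subst h
    unfold Dfn
    rw [Nat.mod_self, Nat.div_self (by omega), Dcnt_all]
    have h0 : Dcnt a 0 = 0 := by unfold Dcnt; simp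
    rw [h0]; push_cast; ring
  · unfold Dfn
    rw [Nat.mod_eq_of_lt h, Nat.div_eq_of_lt h]; push_cast; ring

lemma Dfn_period (a : Fin n → ZMod (n+1)) (t : ℕ) :
    Dfn a (t + (n+1)) = Dfn a t - 1 := by
  unfold Dfn
  rw [Nat.add_mod_right, Nat.add_div_right _ (by omega)]
  push_cast; ring

end

lemma mod_iff1 (m v k t : ℕ) (hv : v < m) (hk : k < m) (h1 : k + t ≤ m) :
    (v + (m - k)) % m < t ↔ (k ≤ v ∧ v < k + t) := by
  rcases le_or_gt k v with h | h
  · have he : v + (m - k) = (v - k) + m := by omega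
    rw [he, Nat.add_mod_right, Nat.mod_eq_of_lt (by omega)]
    omega
  · rw [Nat.mod_eq_of_lt (by omega)]
    omega

lemma mod_iff2 (m v k t : ℕ) (hv : v < m) (hk : k < m) (h1 : m < k + t) (h2 : t < m) :
    (v + (m - k)) % m < t ↔ (v < k + t - m ∨ k ≤ v) := by
  rcases le_or_gt k v with h | h
  · have he : v + (m - k) = (v - k) + m := by omega
    rw [he, Nat.add_mod_right, Nat.mod_eq_of_lt (by omega)]
    omega
  · rw [Nat.mod_eq_of_lt (by omega)]
    omega

section
variable {n : ℕ}

lemma val_shift (a : Fin n → ZMod (n+1)) (k : ℕ) (hk : k < n+1) (j : Fin n) :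
    (a j + (-(k : ZMod (n+1)))).val = ((a j).val + ((n+1) - k)) % (n+1) := by
  have hc : (-(k : ZMod (n+1))) = (((n+1) - k : ℕ) : ZMod (n+1)) := by
    have h0 : ((k : ZMod (n+1))) + (((n+1) - k : ℕ) : ZMod (n+1)) = 0 := by
      rw [← Nat.cast_add, show k + ((n+1) - k) = n+1 by omega]
      exact_mod_cast ZMod.natCast_self (n+1)
    exact (eq_neg_of_add_eq_zero_right h0).symm
  rw [hc, ZMod.val_add, ZMod.val_natCast, Nat.add_mod_mod]
end

section
variable {n : ℕ}

lemma count_shift (a : Fin n → ZMod (n+1)) (k : ℕ) (hk : k < n+1) (t : ℕ)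
    (ht1 : 1 ≤ t) (htn : t ≤ n) :
    ((univ.filter (fun j => (a j + (-(k : ZMod (n+1)))).val < t)).card : ℤ)
      = Dfn a (k + t) - Dfn a k + t := by
  have hv : ∀ j : Fin n, (a j).val < n + 1 := fun j => ZMod.val_lt (a j)
  rcases le_or_gt (k + t) (n+1) with h1 | h1
  · have hpt : ∀ j : Fin n, ((a j + (-(k : ZMod (n+1)))).val < t)
        ↔ (k ≤ (a j).val ∧ (a j).val < k + t) := by
      intro j
      rw [val_shift a k hk j]
      exact mod_iff1 (n+1) _ k t (hv j) hk h1
    have h2 : univ.filter (fun j => (a j).val < k + t) =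
        univ.filter (fun j => (a j + (-(k : ZMod (n+1)))).val < t) ∪
          univ.filter (fun j => (a j).val < k) := by
      rw [← filter_or]
      apply filter_congr
      intro j _
      rw [hpt j]
      omega
    have hdisj : Disjoint (univ.filter (fun j => (a j + (-(k : ZMod (n+1)))).val < t))
        (univ.filter (fun j => (a j).val < k)) := by
      rw [disjoint_left]
      intro j hj hj'
      rw [mem_filter, hpt j] at hj
      rw [mem_filter] at hj'
      omega
    have hsplit : Dcnt a (k+t) =
        (univ.filter (fun j => (a j + (-(k : ZMod (n+1)))).val < t)).card + Dcnt a k := by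
      unfold Dcnt
      rw [h2, card_union_of_disjoint hdisj]
    rw [Dfn_low a (k+t) h1, Dfn_low a k (by omega)]
    omega
  · have hpt : ∀ j : Fin n, ((a j + (-(k : ZMod (n+1)))).val < t)
        ↔ ((a j).val < k + t - (n+1) ∨ k ≤ (a j).val) := by
      intro j
      rw [val_shift a k hk j]
      exact mod_iff2 (n+1) _ k t (hv j) hk h1 (by omega)
    have h2 : univ.filter (fun j => (a j + (-(k : ZMod (n+1)))).val < t) =
        univ.filter (fun j => (a j).val < k + t - (n+1)) ∪
          univ.filter (fun j => ¬ (a j).val < k) := by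
      rw [← filter_or]
      apply filter_congr
      intro j _
      rw [hpt j]
      omega
    have hdisj : Disjoint (univ.filter (fun j => (a j).val < k + t - (n+1)))
        (univ.filter (fun j => ¬ (a j).val < k)) := by
      rw [disjoint_left]
      intro j hj hj'
      rw [mem_filter] at hj hj'
      omega
    have hcompl : (univ.filter (fun j => (a j).val < k)).card
        + (univ.filter (fun j => ¬ (a j).val < k)).card = n := by
      rw [card_filter_add_card_filter_not]
      simp
    have hDk : (univ.filter (fun j => (a j).val < k)).card = Dcnt a k := rfl
    have hper : Dfn a (k + t) = Dfn a (k + t - (n+1)) - 1 := by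
      conv_lhs => rw [show k + t = (k + t - (n+1)) + (n+1) by omega]
      rw [Dfn_period]
    rw [h2, card_union_of_disjoint hdisj, hper,
      Dfn_low a (k + t - (n+1)) (by omega), Dfn_low a k (by omega)]
    have hDs : (univ.filter (fun j => (a j).val < k + t - (n+1))).card
        = Dcnt a (k + t - (n+1)) := rfl
    omega
end

section
variable {n : ℕ}

def Park (b : Fin n → ZMod (n+1)) : Prop :=
  ∀ t, 1 ≤ t → t ≤ n → t ≤ (univ.filter (fun j => (b j).val < t)).card

lemma park_shift_iff (a : Fin n → ZMod (n+1)) (k : ℕ) (hk : k < n+1) :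
    Park (fun j => a j + (-(k : ZMod (n+1)))) ↔
      ∀ t, 1 ≤ t → t ≤ n → Dfn a k ≤ Dfn a (k+t) := by
  unfold Park
  constructor
  · intro h t h1 h2
    have hc := count_shift a k hk t h1 h2
    have h3 := h t h1 h2
    have h4 : (univ.filter (fun j => ((fun j => a j + (-(k : ZMod (n+1)))) j).val < t))
        = (univ.filter (fun j => (a j + (-(k : ZMod (n+1)))).val < t)) := rfl
    rw [h4] at h3
    omega
  · intro h t h1 h2
    have hc := count_shift a k hk t h1 h2
    have h3 := h t h1 h2
    show t ≤ (univ.filter (fun j => (a j + (-(k : ZMod (n+1)))).val < t)).card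
    omega

lemma exists_good (a : Fin n → ZMod (n+1)) :
    ∃ k < n+1, ∀ t, 1 ≤ t → t ≤ n → Dfn a k ≤ Dfn a (k+t) := by
  obtain ⟨k, hk, hmin⟩ := Finset.exists_min_image (range (n+1))
    (fun k => ((n+1 : ℤ)) * Dfn a k + k) ⟨0, mem_range.mpr (by omega)⟩
  rw [mem_range] at hk
  refine ⟨k, hk, ?_⟩
  intro t h1 h2
  rcases le_or_gt (k + t) n with h | h
  · have hm := hmin (k+t) (mem_range.mpr (by omega))
    by_contra hlt
    push_neg at hlt
    have h3 : Dfn a (k+t) ≤ Dfn a k - 1 := by omega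
    have h4 := mul_le_mul_of_nonneg_left h3 (show (0:ℤ) ≤ (n+1:ℤ) by positivity)
    have h5 : ((k+t : ℕ) : ℤ) = (k : ℤ) + t := by push_cast; ring
    have h6 : (t : ℤ) ≤ (n : ℤ) := by exact_mod_cast h2
    linarith
  · set s := k + t - (n+1) with hs
    have hslt : s < k := by omega
    have hD : Dfn a (k+t) = Dfn a s - 1 := by
      conv_lhs => rw [show k + t = s + (n+1) by omega]
      rw [Dfn_period]
    have hm := hmin s (mem_range.mpr (by omega))
    rw [hD]
    by_contra hlt
    push_neg at hlt
    have h3 : Dfn a s ≤ Dfn a k := by omega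
    have h4 := mul_le_mul_of_nonneg_left h3 (show (0:ℤ) ≤ (n+1:ℤ) by positivity)
    have h5 : (s : ℤ) < (k : ℤ) := by exact_mod_cast hslt
    linarith
end

section
variable {n : ℕ}

lemma good_lt_absurd (a : Fin n → ZMod (n+1)) (k k' : ℕ) (hk' : k' < n+1) (hlt : k < k')
    (h : ∀ t, 1 ≤ t → t ≤ n → Dfn a k ≤ Dfn a (k+t))
    (h' : ∀ t, 1 ≤ t → t ≤ n → Dfn a k' ≤ Dfn a (k'+t)) : False := by
  have h1 := h (k' - k) (by omega) (by omega)
  rw [show k + (k'-k) = k' by omega] at h1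
  have h2 := h' (k + (n+1) - k') (by omega) (by omega)
  rw [show k' + (k + (n+1) - k') = k + (n+1) by omega, Dfn_period] at h2
  omega

lemma unique_good (a : Fin n → ZMod (n+1)) (k k' : ℕ) (hk : k < n+1) (hk' : k' < n+1)
    (h : ∀ t, 1 ≤ t → t ≤ n → Dfn a k ≤ Dfn a (k+t))
    (h' : ∀ t, 1 ≤ t → t ≤ n → Dfn a k' ≤ Dfn a (k'+t)) : k = k' := by
  rcases lt_trichotomy k k' with hc | hc | hc
  · exact absurd (good_lt_absurd a k k' hk' hc h h') (by simp)
  · exact hc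
  · exact absurd (good_lt_absurd a k' k hk hc h' h) (by simp)

lemma existsUnique_shift (a : Fin n → ZMod (n+1)) :
    ∃! c : ZMod (n+1), Park (fun j => a j + c) := by
  obtain ⟨k, hk, hgood⟩ := exists_good a
  refine ⟨-(k : ZMod (n+1)), (park_shift_iff a k hk).mpr hgood, ?_⟩
  intro c hc
  have hk' : (-c).val < n+1 := ZMod.val_lt _
  have hcc : c = -((((-c).val) : ℕ) : ZMod (n+1)) := by
    rw [ZMod.natCast_val, ZMod.cast_id]
    ring
  have hpark : Park (fun j => a j + -((((-c).val) : ℕ) : ZMod (n+1))) := by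
    rw [← hcc]; exact hc
  have hgood' := (park_shift_iff a _ hk').mp hpark
  have hkeq := unique_good a ((-c).val) k hk' hk hgood' hgood
  rw [hcc, hkeq]
end

section
variable {n : ℕ}

lemma card_park_mul :
    Nat.card {b : Fin n → ZMod (n+1) // Park b} * (n+1) = (n+1)^n := by
  have e : ({b : Fin n → ZMod (n+1) // Park b} × ZMod (n+1)) ≃ (Fin n → ZMod (n+1)) := by
    apply Equiv.ofBijective (fun p => fun j => p.1.1 j + p.2)
    constructor
    · rintro ⟨⟨b, hb⟩, c⟩ ⟨⟨b', hb'⟩, c'⟩ hEq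
      simp only at hEq
      have hEq' : ∀ j, b j + c = b' j + c' := fun j => congrFun hEq j
      obtain ⟨c₀, hc₀, huniq⟩ := existsUnique_shift b
      have h0 : Park (fun j => b j + 0) := by
        have : (fun j => b j + (0 : ZMod (n+1))) = b := by funext j; ring
        rw [this]; exact hb
      have h1 : Park (fun j => b j + (c - c')) := by
        have : (fun j => b j + (c - c')) = b' := by
          funext j
          have := hEq' j
          linear_combination this
        rw [this]; exact hb'
      have hcs : c - c' = 0 := (huniq (c - c') h1).trans (huniq 0 h0).symm
      have hcc : c = c' := by linear_combination hcs
      have hbb : b = b' := by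
        funext j
        have := hEq' j
        rw [hcc] at this
        exact add_right_cancel this
      subst hcc; subst hbb; rfl
    · intro a
      obtain ⟨c, hc, -⟩ := existsUnique_shift a
      refine ⟨⟨⟨fun j => a j + c, hc⟩, -c⟩, ?_⟩
      funext j
      simp only
      ring
  have hcards := Nat.card_congr e
  rw [Nat.card_prod, Nat.card_zmod] at hcards
  rw [hcards]
  simp [Nat.card_eq_fintype_card]
end

section
variable {n : ℕ}

lemma card_P_eq (hn : 0 < n) :
    Nat.card {a : Fin n → ℕ // (∀ i, 1 ≤ a i) ∧
        ∀ i : Fin n, (i : ℕ) + 1 ≤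
          (Finset.univ.filter (fun j => a j ≤ (i : ℕ) + 1)).card}
      = Nat.card {b : Fin n → ZMod (n+1) // Park b} := by
  apply Nat.card_congr
  symm
  apply Equiv.ofBijective (fun b => (⟨fun j => (b.1 j).val + 1, ?_, ?_⟩ :
    {a : Fin n → ℕ // (∀ i, 1 ≤ a i) ∧ ∀ i : Fin n, (i : ℕ) + 1 ≤
      (Finset.univ.filter (fun j => a j ≤ (i : ℕ) + 1)).card}))
  · constructor
    · rintro ⟨b, hb⟩ ⟨b', hb'⟩ hEq
      simp only [Subtype.mk.injEq] at hEq ⊢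
      funext j
      have h1 : (b j).val + 1 = (b' j).val + 1 := congrFun hEq j
      have h2 : (b j).val = (b' j).val := by omega
      have := congrArg (Nat.cast : ℕ → ZMod (n+1)) h2
      rwa [ZMod.natCast_val, ZMod.natCast_val, ZMod.cast_id, ZMod.cast_id] at this
    · rintro ⟨a, ha1, ha2⟩
      have hub : ∀ j, a j ≤ n := by
        have h3 := ha2 ⟨n-1, by omega⟩
        simp only at h3
        rw [show (n-1) + 1 = n by omega] at h3
        have h4 : (univ.filter (fun j => a j ≤ n)).card = n := by
          have h5 : (univ.filter (fun j => a j ≤ n)).card ≤ n := by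
            calc _ ≤ (univ : Finset (Fin n)).card := card_le_card (filter_subset _ _)
            _ = n := by simp
          omega
        have h6 : univ.filter (fun j => a j ≤ n) = univ :=
          eq_univ_of_card _ (by rw [h4]; simp)
        intro j
        have := mem_univ j
        rw [← h6, mem_filter] at this
        exact this.2
      refine ⟨⟨fun j => ((a j - 1 : ℕ) : ZMod (n+1)), ?_⟩, ?_⟩
      · -- Park
        intro t h1 h2
        have h3 := ha2 ⟨t-1, by omega⟩
        simp only at h3
        rw [show (t-1) + 1 = t by omega] at h3
        have h4 : univ.filter (fun j => (((a j - 1 : ℕ) : ZMod (n+1))).val < t)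
            = univ.filter (fun j => a j ≤ t) := by
          apply filter_congr
          intro j _
          rw [ZMod.val_cast_of_lt (show a j - 1 < n + 1 by have := hub j; omega)]
          have := ha1 j
          omega
        rw [h4]
        exact h3
      · apply Subtype.ext
        funext j
        simp only
        rw [ZMod.val_cast_of_lt (show a j - 1 < n + 1 by have := hub j; omega)]
        have := ha1 j
        omega
  · -- 1 ≤ val + 1
    intro i
    show 1 ≤ (b.1 i).val + 1
    omega
  · -- counting condition
    intro i
    have hb := b.2 ((i : ℕ) + 1) (by omega) i.isLt
    have h4 : univ.filter (fun j => (b.1 j).val + 1 ≤ (i : ℕ) + 1)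
        = univ.filter (fun j => (b.1 j).val < (i : ℕ) + 1) := by
      apply filter_congr
      intro j _
      constructor <;> (intro hh; omega)
    show (i : ℕ) + 1 ≤ (univ.filter (fun j => (b.1 j).val + 1 ≤ (i : ℕ) + 1)).card
    rw [h4]
    exact hb
end

/-- The number of parking functions of length `n` is `(n+1)^{n-1}`.  A parking
function is a sequence `(a_1,…,a_n)` of positive integers whose increasing
rearrangement satisfies `b_i ≤ i`, i.e. at least `i` of the `a_j` are `≤ i`. -/
theorem card_parking_functions (n : ℕ) (hn : 0 < n) :
    Nat.card {a : Fin n → ℕ // (∀ i, 1 ≤ a i) ∧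
        ∀ i : Fin n, (i : ℕ) + 1 ≤
          (Finset.univ.filter (fun j => a j ≤ (i : ℕ) + 1)).card} =
      (n + 1) ^ (n - 1) := by
  rw [card_P_eq hn]
  have h1 := card_park_mul (n := n)
  have h2 : (n+1)^n = (n+1)^(n-1) * (n+1) := by
    rw [← pow_succ, show n - 1 + 1 = n by omega]
  rw [h2] at h1
  exact Nat.eq_of_mul_eq_mul_right (by omega) h1
end

section
/- For x ∈ ℕ^n, the number of integer points in Π_n(x) equals the number of plane partitions of shape (u_n, u_{n−1}, …, u_1) with largest part at most 2, where u_i = x_1+⋯+x_i. -/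
/-!
Both sides are in bijection with the antitone sequences `c₁ ≥ ⋯ ≥ cₙ` of naturals with
`cᵢ ≤ u_{n+1-i}`. A lattice point `y` gives the monotone sequence of its partial sums
`y₁ + ⋯ + yₖ ≤ uₖ`, read backwards; `y` is recovered as its backward differences. In a plane
partition with parts in `{1, 2}` each row is weakly decreasing, hence of the form `2⋯21⋯1`,
and `cᵢ` is the number of `2`s in row `i` (of length `u_{n+1-i}`): the column condition says
exactly that these counts decrease.
-/

open Finset

section PartialSums

variable {ι : Type*} [LinearOrder ι] [LocallyFiniteOrderBot ι]

-- `(Iio k).sup s` is `s (pred k)` for monotone `s`, and `0` at a minimal `k`.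
def backwardDiff (s : ι → ℕ) (k : ι) : ℤ := s k - (Iio k).sup s

theorem backwardDiff_nonneg {s : ι → ℕ} (hs : Monotone s) (k : ι) : 0 ≤ backwardDiff s k :=
  sub_nonneg.2 <| Nat.cast_le.2 <| Finset.sup_le fun _ hj => hs (mem_Iio.1 hj).le

variable [PredOrder ι]

theorem Monotone.sup_Iio_eq_pred {s : ι → ℕ} (hs : Monotone s) {k : ι} (hk : ¬IsMin k) :
    (Iio k).sup s = s (Order.pred k) := by
  rw [← Iic_pred_eq_Iio_of_not_isMin hk]
  exact le_antisymm (Finset.sup_le fun j hj => hs (mem_Iic.1 hj)) (le_sup (mem_Iic.2 le_rfl))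

theorem backwardDiff_toNat_sum_Iic {y : ι → ℤ} (hy : ∀ i, 0 ≤ y i) (k : ι) :
    backwardDiff (fun i => (∑ j ∈ Iic i, y j).toNat) k = y k := by
  have hmono : Monotone fun i => (∑ j ∈ Iic i, y j).toNat := fun i i' h =>
    Int.toNat_le_toNat <| sum_le_sum_of_subset_of_nonneg (Iic_subset_Iic.2 h) fun j _ _ => hy j
  have hsup : (((Iio k).sup fun i => (∑ j ∈ Iic i, y j).toNat : ℕ) : ℤ) = ∑ j ∈ Iio k, y j := by
    by_cases hk : IsMin k
    · simp [Iio_eq_empty.2 hk]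
    · rw [hmono.sup_Iio_eq_pred hk, Int.toNat_of_nonneg (sum_nonneg fun j _ => hy j),
        Iic_pred_eq_Iio_of_not_isMin hk]
  rw [backwardDiff, hsup, Int.toNat_of_nonneg (sum_nonneg fun j _ => hy j),
    ← add_sum_Iio_eq_sum_Iic]
  ring

variable [WellFoundedLT ι]

theorem sum_Iic_backwardDiff {s : ι → ℕ} (hs : Monotone s) (k : ι) :
    ∑ j ∈ Iic k, backwardDiff s j = s k := by
  induction k using WellFoundedLT.induction with
  | _ k ih =>
  rw [← add_sum_Iio_eq_sum_Iic, backwardDiff]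
  by_cases hk : IsMin k
  · simp [Iio_eq_empty.2 hk]
  · rw [← Iic_pred_eq_Iio_of_not_isMin hk, ih _ (Order.pred_lt_of_not_isMin hk),
      Iic_pred_eq_Iio_of_not_isMin hk, hs.sup_Iio_eq_pred hk]
    ring

def nonnegPartialSumEquiv (b : ι → ℕ) :
    {y : ι → ℤ // ∀ i, 0 ≤ y i ∧ ∑ j ∈ Iic i, y j ≤ b i} ≃
      {s : ι → ℕ // Monotone s ∧ s ≤ b} where
  toFun y := ⟨fun i => (∑ j ∈ Iic i, y.1 j).toNat,
    fun i i' h => Int.toNat_le_toNat <|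
      sum_le_sum_of_subset_of_nonneg (Iic_subset_Iic.2 h) fun j _ _ => (y.2 j).1,
    fun i => Int.toNat_le.2 (y.2 i).2⟩
  invFun s := ⟨backwardDiff s.1, fun i =>
    ⟨backwardDiff_nonneg s.2.1 i, by rw [sum_Iic_backwardDiff s.2.1]; exact_mod_cast s.2.2 i⟩⟩
  left_inv y := Subtype.ext <| funext <| backwardDiff_toNat_sum_Iic fun i => (y.2 i).1
  right_inv s := Subtype.ext <| funext fun i => by
    simp only [sum_Iic_backwardDiff s.2.1, Int.toNat_natCast]

end PartialSums

theorem Fin.antitone_iff_forall_add_one_le {α : Type*} [Preorder α] {n : ℕ} {f : Fin n → α} :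
    Antitone f ↔ ∀ (i : Fin n) (h : (i : ℕ) + 1 < n), f ⟨i + 1, h⟩ ≤ f i := by
  refine ⟨fun hf i h => hf (Fin.le_def.2 (Nat.le_succ _)), fun hf => ?_⟩
  cases n with
  | zero => exact fun i => i.elim0
  | succ m => exact Fin.antitone_iff_succ_le.2 fun i => hf (Fin.castSucc i) (by simp)

theorem Fin.filter_val_add_lt_eq_Iic_rev {n : ℕ} (i : Fin n) :
    univ.filter (fun l : Fin n => (l : ℕ) + i < n) = Iic i.rev := by
  ext l
  simp only [mem_filter, mem_univ, true_and, mem_Iic, Fin.le_def, Fin.val_rev]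
  omega

def Fin.compRevEquiv {α : Type*} [Preorder α] {n : ℕ} (b : Fin n → α) :
    {s : Fin n → α // Monotone s ∧ s ≤ b} ≃ {c : Fin n → α // Antitone c ∧ c ≤ b ∘ Fin.rev} where
  toFun s := ⟨s.1 ∘ Fin.rev, s.2.1.comp_antitone Fin.rev_anti, fun i => s.2.2 i.rev⟩
  invFun c := ⟨c.1 ∘ Fin.rev, c.2.1.comp Fin.rev_anti,
    fun i => by simpa using c.2.2 i.rev⟩
  left_inv s := Subtype.ext <| funext fun i => by simp
  right_inv c := Subtype.ext <| funext fun i => by simp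

theorem Finset.filter_range_eq_range_card {p : ℕ → Prop} [DecidablePred p] {L : ℕ}
    (hp : ∀ a b, a ≤ b → b < L → p b → p a) :
    (range L).filter p = range #((range L).filter p) := by
  set F := (range L).filter p
  have hF : ∀ a b, a ≤ b → b ∈ F → a ∈ F := fun a b hab hb => by
    simp only [F, mem_filter, mem_range] at hb ⊢
    exact ⟨by omega, hp a b hab hb.1 hb.2⟩
  ext j
  rw [mem_range]
  constructor
  · intro hj
    simpa using card_le_card fun a ha => hF a j (mem_Iic.1 ha) hj
  · intro hj
    by_contra hjF
    have : F ⊆ range j := fun b hb => mem_range.2 <| not_le.1 fun hjb => hjF (hF j b hjb hb)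
    simpa using (card_le_card this).trans_lt' hj

namespace PlanePartition

variable {n : ℕ} {shape c : Fin n → ℕ} {π : Fin n → ℕ → ℕ}

def IsLeTwo (shape : Fin n → ℕ) (π : Fin n → ℕ → ℕ) : Prop :=
  (∀ i j, j < shape i → 1 ≤ π i j ∧ π i j ≤ 2) ∧
  (∀ i j, shape i ≤ j → π i j = 0) ∧
  (∀ i j, j + 1 < shape i → π i (j + 1) ≤ π i j) ∧
  (∀ (i : Fin n) (h : (i : ℕ) + 1 < n) j, j < shape ⟨i + 1, h⟩ → π ⟨i + 1, h⟩ j ≤ π i j)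

def countTwos (shape : Fin n → ℕ) (π : Fin n → ℕ → ℕ) (i : Fin n) : ℕ :=
  #{j ∈ range (shape i) | π i j = 2}

def ofCountTwos (shape c : Fin n → ℕ) (i : Fin n) (j : ℕ) : ℕ :=
  if j < c i then 2 else if j < shape i then 1 else 0

theorem countTwos_le : countTwos shape π ≤ shape := fun _ =>
  (card_filter_le _ _).trans (card_range _).le

theorem IsLeTwo.row_antitone (hπ : IsLeTwo shape π) {i : Fin n} {a b : ℕ}
    (hab : a ≤ b) (hb : b < shape i) : π i b ≤ π i a := by
  induction b, hab using Nat.le_induction with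
  | base => rfl
  | succ b _ ih => exact (hπ.2.2.1 i b hb).trans (ih (by omega))

theorem IsLeTwo.eq_two_iff (hπ : IsLeTwo shape π) {i : Fin n} {j : ℕ}
    (hj : j < shape i) : π i j = 2 ↔ j < countTwos shape π i := by
  have hrow : ∀ a b, a ≤ b → b < shape i → π i b = 2 → π i a = 2 := fun a b hab hb h2 => by
    have := hπ.row_antitone hab hb
    have := (hπ.1 i a (by omega)).2
    omega
  have := congrArg (j ∈ ·) (filter_range_eq_range_card hrow)
  simp only [mem_filter, mem_range, eq_iff_iff] at this
  rw [countTwos]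
  tauto

theorem IsLeTwo.antitone_countTwos (hπ : IsLeTwo shape π) :
    Antitone (countTwos shape π) := by
  refine Fin.antitone_iff_forall_add_one_le.2 fun i h => card_le_card fun j hj => ?_
  simp only [mem_filter, mem_range] at hj ⊢
  have hcol := hπ.2.2.2 i h j hj.1
  have hj : j < shape i := by
    by_contra hji
    have := hπ.2.1 i j (not_lt.1 hji)
    omega
  have := (hπ.1 i j hj).2
  exact ⟨hj, by omega⟩

theorem isLeTwo_ofCountTwos (hshape : Antitone shape) (hc : Antitone c) (hcl : c ≤ shape) :
    IsLeTwo shape (ofCountTwos shape c) := by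
  refine ⟨fun i j _ => ?_, fun i j _ => ?_, fun i j _ => ?_, fun i h j _ => ?_⟩
  · unfold ofCountTwos; split_ifs <;> omega
  · have : c i ≤ shape i := hcl i; unfold ofCountTwos; split_ifs <;> omega
  · unfold ofCountTwos; split_ifs <;> omega
  · have hci := Fin.antitone_iff_forall_add_one_le.1 hc i h
    have hli := Fin.antitone_iff_forall_add_one_le.1 hshape i h
    unfold ofCountTwos; split_ifs <;> omega

theorem countTwos_ofCountTwos (hcl : c ≤ shape) : countTwos shape (ofCountTwos shape c) = c := by
  funext i
  have : {j ∈ range (shape i) | ofCountTwos shape c i j = 2} = range (c i) := by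
    ext j
    have : c i ≤ shape i := hcl i
    rw [mem_filter]
    simp only [ofCountTwos, mem_range]
    split_ifs <;> omega
  rw [countTwos, this, card_range]

theorem IsLeTwo.ofCountTwos_countTwos (hπ : IsLeTwo shape π) :
    ofCountTwos shape (countTwos shape π) = π := by
  funext i j
  unfold ofCountTwos
  by_cases hj : j < shape i
  · have h2 := hπ.eq_two_iff hj
    have h12 := hπ.1 i j hj
    split_ifs <;> omega
  · have : countTwos shape π i ≤ shape i := countTwos_le i
    rw [if_neg (by omega), if_neg hj, hπ.2.1 i j (not_lt.1 hj)]

def countTwosEquiv (hshape : Antitone shape) :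
    {π // IsLeTwo shape π} ≃ {c : Fin n → ℕ // Antitone c ∧ c ≤ shape} where
  toFun π := ⟨countTwos shape π, π.2.antitone_countTwos, countTwos_le⟩
  invFun c := ⟨ofCountTwos shape c, isLeTwo_ofCountTwos hshape c.2.1 c.2.2⟩
  left_inv π := Subtype.ext π.2.ofCountTwos_countTwos
  right_inv c := Subtype.ext (countTwos_ofCountTwos c.2.2)

end PlanePartition

theorem lattice_points_eq_plane_partitions_general (n : ℕ) (x : Fin n → ℕ) :
    Nat.card {y : Fin n → ℤ //
        ∀ i : Fin n, 0 ≤ y i ∧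
          ∑ j ∈ Finset.Iic i, y j ≤ ∑ j ∈ Finset.Iic i, (x j : ℤ)} =
      Nat.card {π : Fin n → ℕ → ℕ //
        (∀ (i : Fin n) (j : ℕ),
            j < ∑ l ∈ Finset.univ.filter (fun l : Fin n => (l : ℕ) + (i : ℕ) < n), x l →
            1 ≤ π i j ∧ π i j ≤ 2) ∧
        (∀ (i : Fin n) (j : ℕ),
            (∑ l ∈ Finset.univ.filter (fun l : Fin n => (l : ℕ) + (i : ℕ) < n), x l) ≤ j →
            π i j = 0) ∧
        (∀ (i : Fin n) (j : ℕ),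
            j + 1 < ∑ l ∈ Finset.univ.filter (fun l : Fin n => (l : ℕ) + (i : ℕ) < n), x l →
            π i (j + 1) ≤ π i j) ∧
        (∀ (i : Fin n) (h : (i : ℕ) + 1 < n) (j : ℕ),
            j < ∑ l ∈ Finset.univ.filter
                (fun l : Fin n => (l : ℕ) + ((i : ℕ) + 1) < n), x l →
            π ⟨(i : ℕ) + 1, h⟩ j ≤ π i j)} := by
  let u : Fin n → ℕ := fun i => ∑ j ∈ Iic i, x j
  have hu : Monotone u := fun i k hik => sum_le_sum_of_subset (Iic_subset_Iic.2 hik)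
  have hshape : (fun i : Fin n => ∑ l ∈ univ.filter (fun l : Fin n => (l : ℕ) + i < n), x l) =
      u ∘ Fin.rev := funext fun i => by rw [Fin.filter_val_add_lt_eq_Iic_rev]; rfl
  calc _ = Nat.card {s : Fin n → ℕ // Monotone s ∧ s ≤ u} := by
        simp only [← Nat.cast_sum]
        exact Nat.card_congr (nonnegPartialSumEquiv u)
    _ = Nat.card {c : Fin n → ℕ // Antitone c ∧ c ≤ u ∘ Fin.rev} :=
        Nat.card_congr (Fin.compRevEquiv u)
    _ = _ := by
        rw [← hshape]
        -- unfolding `IsLeTwo`, the plane partitions form `{π // IsLeTwo (fun i => ∑ …) π}`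
        exact (Nat.card_congr (PlanePartition.countTwosEquiv
          (hshape ▸ hu.comp_antitone Fin.rev_anti))).symm

/-- The number of integer points in `Π_n(x)` equals the number of plane partitions of
shape `(u_n, u_{n-1}, …, u_1)` with largest part at most 2, where `u_i = x_1+⋯+x_i`.
A plane partition of shape `λ` with parts in `{1,2}` is encoded as `π : Fin n → ℕ → ℕ`
(0-based columns) with entries in `{1,2}` inside the shape, `0` outside, weakly
decreasing along rows and columns. -/
theorem lattice_points_eq_plane_partitions (n : ℕ) (hn : 0 < n) (x : Fin n → ℕ) :
    Nat.card {y : Fin n → ℤ //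
        ∀ i : Fin n, 0 ≤ y i ∧
          ∑ j ∈ Finset.Iic i, y j ≤ ∑ j ∈ Finset.Iic i, (x j : ℤ)} =
      Nat.card {π : Fin n → ℕ → ℕ //
        (∀ (i : Fin n) (j : ℕ),
            j < ∑ l ∈ Finset.univ.filter (fun l : Fin n => (l : ℕ) + (i : ℕ) < n), x l →
            1 ≤ π i j ∧ π i j ≤ 2) ∧
        (∀ (i : Fin n) (j : ℕ),
            (∑ l ∈ Finset.univ.filter (fun l : Fin n => (l : ℕ) + (i : ℕ) < n), x l) ≤ j →
            π i j = 0) ∧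
        (∀ (i : Fin n) (j : ℕ),
            j + 1 < ∑ l ∈ Finset.univ.filter (fun l : Fin n => (l : ℕ) + (i : ℕ) < n), x l →
            π i (j + 1) ≤ π i j) ∧
        (∀ (i : Fin n) (h : (i : ℕ) + 1 < n) (j : ℕ),
            j < ∑ l ∈ Finset.univ.filter
                (fun l : Fin n => (l : ℕ) + ((i : ℕ) + 1) < n), x l →
            π ⟨(i : ℕ) + 1, h⟩ j ≤ π i j)} :=
  lattice_points_eq_plane_partitions_general n x
end

section
/- For a, b ∈ ℕ and x = (a, b, b, …, b) ∈ ℕ^n, the Ehrhart polynomial of Π_n(x) is i(Π_n(x), r) = (1/n!)·(ra+1)·(r(a+nb)+2)·(r(a+nb)+3)⋯(r(a+nb)+n). In particular, the number of integer points in Π_n(x) is (1/n!)·(a+1)·(a+nb+2)·(a+nb+3)⋯(a+nb+n). -/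
open MeasureTheory Finset Pointwise

section EhrhartAux


lemma fin_Iic_zero (n : ℕ) : (Iic (0 : Fin (n+1))) = {0} := by
  ext j; simp [Fin.le_zero_iff]

lemma fin_Iic_succ (n : ℕ) (i : Fin n) :
    (Iic i.succ : Finset (Fin (n+1))) = insert 0 ((Iic i).map (Fin.succEmb n)) := by
  ext j
  simp only [mem_Iic, mem_insert, mem_map, Fin.coe_succEmb]
  constructor
  · intro hj
    rcases Fin.eq_zero_or_eq_succ j with h | ⟨k, rfl⟩
    · exact Or.inl h
    · exact Or.inr ⟨k, (Fin.succ_le_succ_iff).mp hj, rfl⟩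
  · rintro (rfl | ⟨k, hk, rfl⟩)
    · exact Fin.zero_le _
    · exact (Fin.succ_le_succ_iff).mpr hk

lemma sum_fin_Iic_succ {M : Type*} [AddCommMonoid M] (n : ℕ) (y : Fin (n+1) → M) (i : Fin n) :
    ∑ j ∈ Iic i.succ, y j = y 0 + ∑ j ∈ Iic i, y j.succ := by
  rw [fin_Iic_succ, Finset.sum_insert (by simp [Fin.succ_ne_zero]), Finset.sum_map]
  rfl

lemma sum_if_Iic {R : Type*} [Ring R] {n : ℕ} (i : Fin n) (a b : R) :
    ∑ j ∈ Iic i, (if (j : ℕ) = 0 then a else b) = a + (i : ℕ) * b := by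
  haveI : NeZero n := ⟨i.pos.ne'⟩
  have h0 : (0 : Fin n) ∈ Iic i := mem_Iic.mpr (Fin.zero_le i)
  rw [← Finset.add_sum_erase _ _ h0]
  have : ∀ j ∈ (Iic i).erase 0, (if ((j : Fin n) : ℕ) = 0 then a else b) = b := by
    intro j hj
    have := Finset.ne_of_mem_erase hj
    exact if_neg (fun hv => this (Fin.ext (by simp [hv])))
  rw [Finset.sum_congr rfl this, Finset.sum_const, Finset.card_erase_of_mem h0, Fin.card_Iic]
  simp [nsmul_eq_mul]

def pitN : ℕ → ℕ → ℕ → ℕ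
  | 0, _, _ => 1
  | n+1, A, B => ∑ k ∈ Finset.range (A+1), pitN n (A - k + B) B

def pitCond (n A B : ℕ) (y : Fin n → ℤ) : Prop :=
  ∀ i : Fin n, 0 ≤ y i ∧ ∑ j ∈ Iic i, y j ≤ (A : ℤ) + (i : ℕ) * (B : ℤ)

lemma nat_card_sigma {ι : Type*} [Fintype ι] (T : ι → Type*) [∀ i, Finite (T i)] :
    Nat.card (Σ i, T i) = ∑ i, Nat.card (T i) := by
  letI : ∀ i, Fintype (T i) := fun i => Fintype.ofFinite _
  simp [Nat.card_eq_fintype_card, Fintype.card_sigma]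

lemma pit_card (n : ℕ) : ∀ (A B : ℕ),
    Finite {y : Fin n → ℤ // pitCond n A B y} ∧
    Nat.card {y : Fin n → ℤ // pitCond n A B y} = pitN n A B := by
  induction n with
  | zero =>
    intro A B
    haveI : Unique {y : Fin 0 → ℤ // pitCond 0 A B y} :=
      ⟨⟨⟨fun i => i.elim0, fun i => i.elim0⟩⟩, fun y => Subtype.ext (funext fun i => i.elim0)⟩
    exact ⟨inferInstance, Nat.card_unique⟩
  | succ n IH =>
    intro A B
    have hsub : ∀ (k : ℕ), k ≤ A → ((A - k + B : ℕ) : ℤ) = (A : ℤ) - k + B := by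
      intro k hk
      push_cast [hk]
      ring
    have key : ∀ (y : Fin (n+1) → ℤ), pitCond (n+1) A B y → (y 0).toNat < A + 1 := by
      intro y h
      have h0 := (h 0).2
      rw [fin_Iic_zero, Finset.sum_singleton] at h0
      simp only [Fin.val_zero, Nat.cast_zero, zero_mul, add_zero] at h0
      exact Nat.lt_succ_of_le (Int.toNat_le.mpr h0)
    have E : {y : Fin (n+1) → ℤ // pitCond (n+1) A B y} ≃
        Σ k : Fin (A+1), {z : Fin n → ℤ // pitCond n (A - (k : ℕ) + B) B z} :=
      { toFun := fun y => ⟨⟨(y.1 0).toNat, key y.1 y.2⟩,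
          ⟨fun i => y.1 i.succ, by
            obtain ⟨y, h⟩ := y
            intro i
            refine ⟨(h i.succ).1, ?_⟩
            have h2 := (h i.succ).2
            rw [sum_fin_Iic_succ] at h2
            have h00 := (h 0).1
            have hle : (y 0).toNat ≤ A := Nat.lt_succ_iff.mp (key y h)
            rw [hsub _ hle, Int.toNat_of_nonneg h00]
            push_cast [Fin.val_succ] at h2 ⊢
            linarith⟩⟩
        invFun := fun x => ⟨fun i => Fin.cases ((x.1 : ℕ) : ℤ) x.2.1 i, by
          obtain ⟨k, z, hz⟩ := x
          intro i
          refine Fin.cases ?_ ?_ i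
          · refine ⟨by simp, ?_⟩
            rw [fin_Iic_zero, Finset.sum_singleton]
            have hkA : (k : ℕ) ≤ A := Nat.lt_succ_iff.mp k.isLt
            simp only [Fin.cases_zero, Fin.val_zero, Nat.cast_zero, zero_mul, add_zero]
            exact_mod_cast hkA
          · intro j
            refine ⟨by simpa using (hz j).1, ?_⟩
            rw [sum_fin_Iic_succ]
            simp only [Fin.cases_zero, Fin.cases_succ]
            have h2 := (hz j).2
            have hkA : (k : ℕ) ≤ A := Nat.lt_succ_iff.mp k.isLt
            rw [hsub _ hkA] at h2
            push_cast [Fin.val_succ] at h2 ⊢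
            linarith⟩
        left_inv := by
          rintro ⟨y, h⟩
          apply Subtype.ext
          funext i
          refine Fin.cases ?_ ?_ i
          · simpa using Int.toNat_of_nonneg (h 0).1
          · intro j
            simp
        right_inv := by
          rintro ⟨k, z, hz⟩
          have hk2 : ((Fin.cases ((k : ℕ) : ℤ) z (0 : Fin (n+1)) : ℤ)).toNat = (k : ℕ) := by simp
          refine Sigma.ext (Fin.ext (by simpa using hk2)) ?_
          simp only [hk2]
          exact heq_of_eq (Subtype.ext (funext fun i => by simp)) }
    haveI : ∀ k : Fin (A+1), Finite {z : Fin n → ℤ // pitCond n (A - (k : ℕ) + B) B z} :=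
      fun k => (IH (A - (k : ℕ) + B) B).1
    refine ⟨Finite.of_equiv _ E.symm, ?_⟩
    rw [Nat.card_congr E, nat_card_sigma]
    rw [Finset.sum_congr rfl (fun (k : Fin (A+1)) _ => (IH (A - (k : ℕ) + B) B).2)]
    rw [show pitN (n+1) A B = ∑ k ∈ Finset.range (A+1), pitN n (A - k + B) B from rfl]
    exact Fin.sum_univ_eq_sum_range (fun k => pitN n (A - k + B) B) (A+1)

lemma pitN_succ (n A B : ℕ) :
    pitN (n+1) A B = ∑ k ∈ Finset.range (A+1), pitN n (k+B) B := by
  have h := Finset.sum_range_reflect (fun j => pitN n (j + B) B) (A+1)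
  simp only [Nat.add_sub_cancel] at h
  rw [show pitN (n+1) A B = ∑ k ∈ Finset.range (A+1), pitN n (A - k + B) B from rfl, ← h]

lemma icc_shift (C n : ℕ) (hn : 1 ≤ n) :
    ∏ m ∈ Icc 2 (n+1), (C + m) = (C + 2) * ∏ m ∈ Icc 2 n, (C + 1 + m) := by
  have hmap : (Icc 1 n).map (addRightEmbedding 1) = Icc 2 (n+1) :=
    Finset.map_add_right_Icc 1 n 1
  rw [← hmap, Finset.prod_map]
  have hins : (Icc (1:ℕ) n) = insert 1 (Icc 2 n) := by
    ext x
    simp only [mem_Icc, mem_insert]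
    omega
  rw [hins, Finset.prod_insert (by simp [mem_Icc])]
  have : ∀ m, (addRightEmbedding 1) m = m + 1 := fun m => rfl
  simp only [this]
  exact congrArg₂ _ rfl (Finset.prod_congr rfl fun m _ => by ring)

lemma pit_alg : ∀ (n : ℕ), 0 < n → ∀ (A B : ℕ),
    n.factorial * pitN n A B = (A+1) * ∏ m ∈ Icc 2 n, (A + n*B + m) := by
  intro n
  induction n with
  | zero => omega
  | succ n IH =>
    intro _ A B
    rcases Nat.eq_zero_or_pos n with rfl | hn'
    · rw [pitN_succ, Finset.Icc_eq_empty (by omega : ¬(2:ℕ) ≤ 1)]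
      simp [pitN]
    · have claim : ∀ A : ℕ,
          (n+1) * ∑ k ∈ Finset.range (A+1), ((k+B+1) * ∏ m ∈ Icc 2 n, (k+B+n*B+m))
          = (A+1) * ∏ m ∈ Icc 2 (n+1), (A + (n+1)*B + m) := by
        intro A
        induction A with
        | zero =>
          rw [Finset.prod_Icc_succ_top (by omega : 2 ≤ n+1)]
          rw [show Finset.range 1 = {0} from rfl, Finset.sum_singleton]
          have hp : ∏ m ∈ Icc 2 n, ((0:ℕ)+B+n*B+m) = ∏ m ∈ Icc 2 n, (0 + (n+1)*B + m) :=
            Finset.prod_congr rfl fun m _ => by ring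
          rw [hp]
          ring
        | succ A ihA =>
          rw [Finset.sum_range_succ, Nat.mul_add, ihA]
          have e1 : ∏ m ∈ Icc 2 (n+1), (A+1+(n+1)*B+m)
              = (A+1+(n+1)*B+(n+1)) * ∏ m ∈ Icc 2 n, (A+1+(n+1)*B+m) := by
            rw [Finset.prod_Icc_succ_top (by omega : 2 ≤ n+1)]
            ring
          have e2 : ∏ m ∈ Icc 2 (n+1), (A+(n+1)*B+m)
              = (A+(n+1)*B+2) * ∏ m ∈ Icc 2 n, (A+1+(n+1)*B+m) := by
            rw [icc_shift _ _ hn']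
            exact congrArg₂ _ rfl (Finset.prod_congr rfl fun m _ => by ring)
          have e3 : ∏ m ∈ Icc 2 n, (A+1+B+n*B+m) = ∏ m ∈ Icc 2 n, (A+1+(n+1)*B+m) :=
            Finset.prod_congr rfl fun m _ => by ring
          rw [e1, e2, e3]
          ring
      rw [pitN_succ]
      have hfac : (n+1).factorial * ∑ k ∈ Finset.range (A+1), pitN n (k+B) B
          = (n+1) * ∑ k ∈ Finset.range (A+1), (n.factorial * pitN n (k+B) B) := by
        rw [← Finset.mul_sum, Nat.factorial_succ]
        ring
      rw [hfac, Finset.sum_congr rfl (fun k _ => IH hn' (k+B) B)]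
      exact claim A

lemma mem_dilate_iff (n a b r : ℕ) (y : Fin n → ℤ) :
    ((fun i => (y i : ℝ)) ∈ (r : ℝ) • {y : Fin n → ℝ | ∀ i : Fin n, 0 ≤ y i ∧
        ∑ j ∈ Finset.Iic i, y j ≤
          ∑ j ∈ Finset.Iic i, (if (j : ℕ) = 0 then (a : ℝ) else (b : ℝ))})
    ↔ pitCond n (r*a) (r*b) y := by
  have hbS : ∀ z : Fin n → ℝ, (z ∈ {y : Fin n → ℝ | ∀ i : Fin n, 0 ≤ y i ∧
      ∑ j ∈ Finset.Iic i, y j ≤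
        ∑ j ∈ Finset.Iic i, (if (j : ℕ) = 0 then (a : ℝ) else (b : ℝ))})
      ↔ ∀ i : Fin n, 0 ≤ z i ∧ ∑ j ∈ Finset.Iic i, z j ≤ (a : ℝ) + (i : ℕ) * b := by
    intro z
    simp only [Set.mem_setOf_eq, sum_if_Iic]
  rcases Nat.eq_zero_or_pos r with rfl | hr
  · have hS0 : (0 : Fin n → ℝ) ∈ {y : Fin n → ℝ | ∀ i : Fin n, 0 ≤ y i ∧
        ∑ j ∈ Finset.Iic i, y j ≤
          ∑ j ∈ Finset.Iic i, (if (j : ℕ) = 0 then (a : ℝ) else (b : ℝ))} := by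
      rw [hbS]
      intro i
      refine ⟨le_refl _, ?_⟩
      simp only [Pi.zero_apply, Finset.sum_const, smul_zero]
      positivity
    rw [Nat.cast_zero, Set.zero_smul_set ⟨0, hS0⟩]
    constructor
    · intro h
      have h0 : (fun i => ((y i : ℤ) : ℝ)) = 0 := Set.mem_zero.mp h
      have hy : ∀ j, y j = 0 := by
        intro j
        have := congrFun h0 j
        simpa using this
      intro i
      refine ⟨by simp [hy], ?_⟩
      simp [hy]
    · intro h
      have hy : ∀ i, y i = 0 := by
        intro i
        have h1 : y i ≤ ∑ j ∈ Finset.Iic i, y j :=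
          Finset.single_le_sum (fun j _ => (h j).1) (Finset.mem_Iic.mpr le_rfl)
        have h2 := (h i).2
        simp only [Nat.zero_mul, Nat.cast_zero, zero_mul, add_zero,
          Nat.mul_zero, mul_zero] at h2
        have := (h i).1
        omega
      have : (fun i => ((y i : ℤ) : ℝ)) = 0 := funext fun i => by simp [hy i]
      rw [this]
      exact Set.zero_mem_zero
  · have hr0 : (0:ℝ) < (r:ℝ) := by exact_mod_cast hr
    rw [Set.mem_smul_set_iff_inv_smul_mem₀ (ne_of_gt hr0), hbS]
    unfold pitCond
    refine forall_congr' fun i => ?_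
    simp only [Pi.smul_apply, smul_eq_mul]
    rw [← Finset.mul_sum]
    have c1 : (0:ℝ) ≤ (r:ℝ)⁻¹ * (y i : ℝ) ↔ 0 ≤ y i := by
      rw [mul_nonneg_iff_of_pos_left (inv_pos.mpr hr0)]
      exact_mod_cast Iff.rfl
    have c2 : (r:ℝ)⁻¹ * (∑ j ∈ Finset.Iic i, (y j : ℝ)) ≤ (a:ℝ) + (i:ℕ) * b
        ↔ ∑ j ∈ Finset.Iic i, y j ≤ ((r*a : ℕ) : ℤ) + ((i:ℕ) : ℤ) * ((r*b : ℕ) : ℤ) := by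
      rw [inv_mul_le_iff₀ hr0]
      rw [show (∑ j ∈ Finset.Iic i, ((y j : ℤ) : ℝ)) = ((∑ j ∈ Finset.Iic i, y j : ℤ) : ℝ) by
        push_cast; ring]
      rw [show (r:ℝ) * ((a:ℝ) + (i:ℕ) * b) = (((r*a : ℕ) : ℤ) + ((i:ℕ) : ℤ) * ((r*b : ℕ) : ℤ) : ℤ) by
        push_cast; ring]
      exact Int.cast_le
    rw [c1, c2]


end EhrhartAux

/-- For `x = (a,b,b,…,b) ∈ ℕ^n`, the Ehrhart polynomial of `Π_n(x)` is
`i(Π_n(x), r) = (1/n!)(ra+1)(r(a+nb)+2)⋯(r(a+nb)+n)`; in particular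
`N(Π_n(x)) = (1/n!)(a+1)(a+nb+2)⋯(a+nb+n)`. -/
theorem ehrhart_pi_polytope_ab (n a b : ℕ) (hn : 0 < n) :
    (∀ r : ℕ,
      n.factorial *
        Nat.card {y : Fin n → ℤ //
          (fun i => (y i : ℝ)) ∈
            (r : ℝ) • {y : Fin n → ℝ | ∀ i : Fin n, 0 ≤ y i ∧
              ∑ j ∈ Finset.Iic i, y j ≤
                ∑ j ∈ Finset.Iic i, (if (j : ℕ) = 0 then (a : ℝ) else (b : ℝ))}} =
      (r * a + 1) * ∏ m ∈ Finset.Icc 2 n, (r * (a + n * b) + m)) ∧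
    n.factorial *
        Nat.card {y : Fin n → ℤ //
          ∀ i : Fin n, 0 ≤ y i ∧
            ∑ j ∈ Finset.Iic i, y j ≤
              ∑ j ∈ Finset.Iic i, (if (j : ℕ) = 0 then (a : ℤ) else (b : ℤ))} =
      (a + 1) * ∏ m ∈ Finset.Icc 2 n, (a + n * b + m) := by
  constructor
  · intro r
    rw [Nat.card_congr (Equiv.subtypeEquivRight (fun y => mem_dilate_iff n a b r y)),
      (pit_card n (r*a) (r*b)).2, pit_alg n hn (r*a) (r*b)]
    exact congrArg₂ _ rfl (Finset.prod_congr rfl fun m _ => by ring)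
  · have hiff : ∀ y : Fin n → ℤ,
        (∀ i : Fin n, 0 ≤ y i ∧ ∑ j ∈ Finset.Iic i, y j ≤
          ∑ j ∈ Finset.Iic i, (if (j : ℕ) = 0 then (a : ℤ) else (b : ℤ)))
        ↔ pitCond n a b y := fun y => forall_congr' fun i => by rw [sum_if_Iic]
    rw [Nat.card_congr (Equiv.subtypeEquivRight hiff), (pit_card n a b).2, pit_alg n hn a b]
end

section
/- The polynomial N(Π_n(x_1−1, x_2, …, x_n)) — the number of integer points of Π_n evaluated with first argument shifted by −1 — has nonnegative coefficients as a polynomial in x_1,…,x_n. -/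
open Finset

namespace LPCAux


/-- `⟨⟨m+1, k⟩⟩ = C(m+k, k)`. -/
def A1 (m k : ℕ) : ℕ := (m + k).choose k

/-- `⟨⟨m, k⟩⟩ = C(m+k-1, k)`. -/
def A0 (m k : ℕ) : ℕ := (m + k - 1).choose k

lemma A0_succ (m k : ℕ) : A0 (m + 1) k = A1 m k := by
  simp only [A0, A1]
  congr 1
  omega

lemma A0_zero_pos {k : ℕ} (hk : k ≠ 0) : A0 0 k = 0 := by
  unfold A0
  exact Nat.choose_eq_zero_of_lt (by omega)

lemma A0_zero_zero : A0 0 0 = 1 := rfl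

/-- hockey stick -/
lemma sum_A1 (T a : ℕ) : ∑ u ∈ range (T + 1), A1 u a = A1 T (a + 1) := by
  induction T with
  | zero => simp [A1]
  | succ T ih =>
      rw [Finset.sum_range_succ, ih]
      unfold A1
      rw [show T + (a + 1) = T + a + 1 by omega, show T + 1 + a = T + a + 1 by omega,
        show T + 1 + (a + 1) = (T + a + 1) + 1 by omega,
        Nat.choose_succ_succ (T + a + 1) a]
      first
        | omega
        | (simp only [Nat.succ_eq_add_one]; omega)

/-- Vandermonde-type convolution. -/
lemma conv (u v k : ℕ) :
    ∑ ab ∈ antidiagonal k, A1 u ab.1 * A1 v ab.2 = (u + v + k + 1).choose k := by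
  have h1 : ((PowerSeries.mk 1 : PowerSeries ℤ) ^ (u + 1)) * ((PowerSeries.mk 1 : PowerSeries ℤ) ^ (v + 1))
      = (PowerSeries.mk 1 : PowerSeries ℤ) ^ ((u + v + 1) + 1) := by
    rw [← pow_add]; ring_nf
  rw [PowerSeries.mk_one_pow_eq_mk_choose_add, PowerSeries.mk_one_pow_eq_mk_choose_add,
    PowerSeries.mk_one_pow_eq_mk_choose_add] at h1
  have h2 := congrArg (PowerSeries.coeff k) h1
  rw [PowerSeries.coeff_mul] at h2
  simp only [PowerSeries.coeff_mk] at h2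
  have h3 : ∀ a b : ℕ, (a + b).choose a = (a + b).choose b := by
    intro a b
    rw [← Nat.choose_symm (Nat.le_add_right a b)]
    congr 1
    omega
  have h5 : (∑ ab ∈ antidiagonal k, (u + ab.1).choose u * (v + ab.2).choose v)
      = (u + v + 1 + k).choose (u + v + 1) := by exact_mod_cast h2
  calc ∑ ab ∈ antidiagonal k, A1 u ab.1 * A1 v ab.2
      = ∑ ab ∈ antidiagonal k, (u + ab.1).choose u * (v + ab.2).choose v := by
        refine Finset.sum_congr rfl fun ab _ => ?_
        unfold A1
        rw [h3 u ab.1, h3 v ab.2]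
    _ = (u + v + 1 + k).choose (u + v + 1) := h5
    _ = (u + v + k + 1).choose k := by
        rw [show u + v + k + 1 = u + v + 1 + k by omega, ← h3 (u + v + 1) k]

/-- Vandermonde for mixed `A1`/`A0`. -/
lemma vand (u w k : ℕ) :
    A1 (u + w) k = ∑ ab ∈ antidiagonal k, A1 u ab.1 * A0 w ab.2 := by
  cases w with
  | zero =>
      rw [Finset.Nat.sum_antidiagonal_eq_sum_range_succ_mk]
      rw [Finset.sum_eq_single_of_mem k (Finset.self_mem_range_succ k)]
      · simp [A0_zero_zero, A1]
      · intro a hmem hne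
        have ha : a ≤ k := by
          have := Finset.mem_range.mp hmem
          omega
        rw [A0_zero_pos (by omega)]
        ring
  | succ w' =>
      simp only [A0_succ]
      rw [conv]
      unfold A1
      congr 1
      omega



/-- the basic "product of rising factorials" function -/
def basicFun (m : ℕ) (k : Fin m → ℕ) : (Fin m → ℕ) → ℕ :=
  fun t => ∏ i : Fin m, if (i : ℕ) = 0 then A1 (t i) (k i) else A0 (t i) (k i)

inductive Cone : (m : ℕ) → ((Fin m → ℕ) → ℕ) → Prop
  | basic (m : ℕ) (k : Fin m → ℕ) : Cone m (basicFun m k)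
  | zero (m : ℕ) : Cone m (fun _ => 0)
  | add {m : ℕ} {f g : (Fin m → ℕ) → ℕ} : Cone m f → Cone m g →
      Cone m (fun t => f t + g t)

lemma Cone.finsum {m : ℕ} {ι : Type*} (s : Finset ι) (F : ι → (Fin m → ℕ) → ℕ)
    (h : ∀ i ∈ s, Cone m (F i)) : Cone m (fun t => ∑ i ∈ s, F i t) := by
  classical
  induction s using Finset.induction_on with
  | empty => simpa using Cone.zero m
  | insert _ _ hni ih =>
      rename_i a s'
      simp only [Finset.sum_insert hni]
      exact (h a (Finset.mem_insert_self a s')).add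
        (ih fun i hi => h i (Finset.mem_insert_of_mem hi))

def Tsum (m : ℕ) (f : (Fin m → ℕ) → ℕ) : (Fin (m + 1) → ℕ) → ℕ :=
  fun t => ∑ u ∈ range (t 0 + 1), f fun i => (if (i : ℕ) = 0 then u else 0) + t i.succ

lemma cone_Tsum {m : ℕ} {f : (Fin m → ℕ) → ℕ} (hf : Cone m f) :
    Cone (m + 1) (Tsum m f) := by
  induction hf with
  | zero =>
      have h : Tsum m (fun _ => 0) = fun _ => 0 := by
        funext t; simp [Tsum]
      rw [h]; exact Cone.zero _
  | @add f' g' hf hg ihf ihg =>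
      have h : Tsum m (fun t => f' t + g' t)
          = fun t => Tsum m f' t + Tsum m g' t := by
        funext t; simp [Tsum, Finset.sum_add_distrib]
      rw [h]; exact ihf.add ihg
  | basic k =>
      clear f
      revert k
      cases m with
      | zero =>
          intro k
          have h : Tsum 0 (basicFun 0 k) = basicFun 1 (fun _ => 1) := by
            funext t
            simp [Tsum, basicFun, A1]
          rw [h]; exact Cone.basic 1 _
      | succ m' =>
          intro k
          set k' : ℕ × ℕ → (Fin (m' + 2) → ℕ) :=
            fun ab => Fin.cons (ab.1 + 1) (Fin.cons ab.2 (fun i => k i.succ)) with hk'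
          have h : Tsum (m' + 1) (basicFun (m' + 1) k)
              = fun t => ∑ ab ∈ antidiagonal (k 0), basicFun (m' + 2) (k' ab) t := by
            funext t
            have hsplit : ∀ u, basicFun (m' + 1) k
                (fun i => (if (i : ℕ) = 0 then u else 0) + t i.succ)
                = A1 (u + t 1) (k 0) *
                  ∏ i : Fin m', A0 (t i.succ.succ) (k i.succ) := by
              intro u
              unfold basicFun
              rw [Fin.prod_univ_succ]
              refine congrArg₂ (· * ·) ?_ ?_
              · simp [Fin.succ_zero_eq_one]
              · refine Finset.prod_congr rfl fun i _ => ?_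
                have h1 : ((i.succ : Fin (m' + 1)) : ℕ) ≠ 0 := by
                  simp [Fin.val_succ]
                simp [h1]
            unfold Tsum
            simp only [hsplit]
            rw [← Finset.sum_mul]
            have hv : ∀ u, A1 (u + t 1) (k 0)
                = ∑ ab ∈ antidiagonal (k 0), A1 u ab.1 * A0 (t 1) ab.2 :=
              fun u => vand u (t 1) (k 0)
            simp only [hv]
            rw [Finset.sum_comm]
            rw [Finset.sum_mul]
            refine Finset.sum_congr rfl fun ab _ => ?_
            simp only [← Finset.sum_mul]
            rw [sum_A1]
            -- now expand RHS basicFun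
            unfold basicFun
            rw [Fin.prod_univ_succ, Fin.prod_univ_succ]
            have e0 : ((0 : Fin (m' + 2)) : ℕ) = 0 := rfl
            have e1 : (((0 : Fin (m' + 1)).succ : Fin (m' + 2)) : ℕ) ≠ 0 := by simp
            have e2 : ∀ i : Fin m', ((i.succ.succ : Fin (m' + 2)) : ℕ) ≠ 0 := by
              intro i; simp [Fin.val_succ]
            rw [if_pos e0, if_neg e1]
            simp only [hk', Fin.cons_zero, Fin.cons_succ]
            rw [Fin.succ_zero_eq_one]
            rw [mul_assoc]
            congr 2
            all_goals exact Finset.prod_congr rfl fun i _ => (if_neg (e2 i)).symm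
          rw [h]
          exact Cone.finsum _ _ fun ab _ => Cone.basic _ _

def g : (m : ℕ) → (Fin m → ℕ) → ℕ
  | 0, _ => 1
  | m + 1, t => Tsum m (g m) t

lemma cone_g (m : ℕ) : Cone m (g m) := by
  induction m with
  | zero =>
      have h : g 0 = basicFun 0 (fun _ => 0) := by
        funext t; simp [g, basicFun]
      rw [h]; exact Cone.basic 0 _
  | succ m ih =>
      have h : g (m + 1) = Tsum m (g m) := rfl
      rw [h]; exact cone_Tsum ih



def condZ (m : ℕ) (t : Fin m → ℕ) (y : Fin m → ℤ) : Prop :=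
  ∀ i, 0 ≤ y i ∧ ∑ j ∈ Iic i, y j ≤ ∑ j ∈ Iic i, (t j : ℤ)

lemma Iic_zero_fin (m : ℕ) : Iic (0 : Fin (m + 1)) = {0} := by
  ext j; simp [Fin.le_zero_iff]

lemma Iic_succ_sum {M : Type*} [AddCommMonoid M] {m : ℕ} (i : Fin m) (F : Fin (m + 1) → M) :
    ∑ j ∈ Iic i.succ, F j = F 0 + ∑ j ∈ Iic i, F j.succ := by
  have h : Iic i.succ
      = insert (0 : Fin (m + 1)) ((Iic i).map ⟨Fin.succ, Fin.succ_injective m⟩) := by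
    ext j
    simp only [mem_insert, mem_Iic, mem_map, Function.Embedding.coeFn_mk]
    constructor
    · intro hj
      rcases Fin.eq_zero_or_eq_succ j with h0 | ⟨j', rfl⟩
      · left; exact h0
      · right; exact ⟨j', by rwa [Fin.succ_le_succ_iff] at hj, rfl⟩
    · rintro (rfl | ⟨j', hj', rfl⟩)
      · exact Fin.zero_le _
      · exact Fin.succ_le_succ_iff.mpr hj'
  rw [h, Finset.sum_insert (by simp [Fin.succ_ne_zero]), Finset.sum_map]
  rfl

lemma sum_if_zero {M : Type*} [AddCommMonoid M] {m : ℕ} (i : Fin m) (c : M) :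
    ∑ j ∈ Iic i, (if (j : ℕ) = 0 then c else 0) = c := by
  have hm : 0 < m := i.pos
  have h : ∀ j : Fin m, (if (j : ℕ) = 0 then c else 0) = if j = ⟨0, hm⟩ then c else 0 := by
    intro j
    congr 1
    simp [Fin.ext_iff]
  simp only [h]
  rw [Finset.sum_ite_eq' (Iic i) ⟨0, hm⟩ fun _ => c]
  rw [if_pos]
  simp only [mem_Iic]
  exact Fin.mk_le_of_le_val (Nat.zero_le _)

/-- budgets for the tail problem -/
def tbud {m : ℕ} (t : Fin (m + 1) → ℕ) (v : ℕ) : Fin m → ℕ :=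
  fun i => (if (i : ℕ) = 0 then t 0 - v else 0) + t i.succ

lemma condZ_finite (m : ℕ) (t : Fin m → ℕ) : Finite {y : Fin m → ℤ // condZ m t y} := by
  classical
  set B := ∑ j, t j with hB
  have key : ∀ (y : {y : Fin m → ℤ // condZ m t y}) (i : Fin m), (y.1 i).toNat < B + 1 := by
    intro y i
    have h1 : y.1 i ≤ ∑ j ∈ Iic i, y.1 j :=
      Finset.single_le_sum (fun j _ => (y.2 j).1) (mem_Iic.mpr le_rfl)
    have h2 : (∑ j ∈ Iic i, ((t j : ℤ))) ≤ ∑ j, (t j : ℤ) :=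
      Finset.sum_le_sum_of_subset_of_nonneg (Finset.subset_univ _)
        (fun j _ _ => by positivity)
    have h3 : (∑ j, (t j : ℤ)) = (B : ℤ) := by rw [hB]; push_cast; ring
    have h4 := (y.2 i).2
    have h0 := (y.2 i).1
    omega
  refine Finite.of_injective
    (fun y => (fun i => (⟨(y.1 i).toNat, key y i⟩ : Fin (B + 1)) : Fin m → Fin (B + 1))) ?_
  intro y z h
  ext i
  have := congrFun h i
  simp only [Fin.mk.injEq] at this
  have hy := (y.2 i).1
  have hz := (z.2 i).1
  omega

lemma ncard_sigma {N : ℕ} (F : Fin N → Type*) [∀ v, Finite (F v)] :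
    Nat.card ((v : Fin N) × F v) = ∑ v, Nat.card (F v) := by
  have := fun v => Fintype.ofFinite (F v)
  simp [Nat.card_eq_fintype_card]

lemma cond_succ_iff {m : ℕ} (t : Fin (m + 1) → ℕ) (y : Fin (m + 1) → ℤ) (v : ℕ)
    (hv : y 0 = (v : ℤ)) (hvt : v ≤ t 0) (h0 : True) :
    condZ (m + 1) t y ↔ condZ m (tbud t v) (fun i => y i.succ) := by
  have hS3 : ∀ i : Fin m, (∑ j ∈ Iic i, ((tbud t v j : ℕ) : ℤ))
      = ((t 0 : ℤ) - v) + ∑ j ∈ Iic i, (t j.succ : ℤ) := by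
    intro i
    have hterm : ∀ j : Fin m, ((tbud t v j : ℕ) : ℤ)
        = (if (j : ℕ) = 0 then ((t 0 - v : ℕ) : ℤ) else 0) + (t j.succ : ℤ) := by
      intro j; unfold tbud; split_ifs <;> push_cast <;> ring
    simp only [hterm]
    rw [Finset.sum_add_distrib, sum_if_zero i, Nat.cast_sub hvt]
  constructor
  · intro h i
    refine ⟨(h i.succ).1, ?_⟩
    have h2 := (h i.succ).2
    rw [Iic_succ_sum i (fun j => y j), Iic_succ_sum i (fun j => ((t j : ℕ) : ℤ))] at h2
    rw [hS3 i]
    rw [hv] at h2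
    linarith
  · intro h i
    induction i using Fin.cases with
    | zero =>
        refine ⟨by rw [hv]; positivity, ?_⟩
        rw [Iic_zero_fin, Finset.sum_singleton, Finset.sum_singleton, hv]
        exact_mod_cast hvt
    | succ j =>
        refine ⟨(h j).1, ?_⟩
        have h2 := (h j).2
        rw [hS3 j] at h2
        rw [Iic_succ_sum j (fun j => y j), Iic_succ_sum j (fun j => ((t j : ℕ) : ℤ)), hv]
        linarith

lemma card_condZ : ∀ (m : ℕ) (t : Fin m → ℕ),
    Nat.card {y : Fin m → ℤ // condZ m t y} = g m t := by
  intro m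
  induction m with
  | zero =>
      intro t
      have : Unique {y : Fin 0 → ℤ // condZ 0 t y} :=
        ⟨⟨⟨fun i => i.elim0, fun i => i.elim0⟩⟩, fun y => Subtype.ext (funext fun i => i.elim0)⟩
      rw [Nat.card_unique]
      rfl
  | succ m ih =>
      intro t
      -- the "first value" map
      have hfin : Finite {y : Fin (m + 1) → ℤ // condZ (m + 1) t y} := condZ_finite _ _
      have hle : ∀ y : {y : Fin (m + 1) → ℤ // condZ (m + 1) t y}, (y.1 0).toNat < t 0 + 1 := by
        intro y
        have h1 := (y.2 0).2
        rw [Iic_zero_fin, Finset.sum_singleton, Finset.sum_singleton] at h1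
        have h0 := (y.2 0).1
        omega
      set Φ : {y : Fin (m + 1) → ℤ // condZ (m + 1) t y} → Fin (t 0 + 1) :=
        fun y => ⟨(y.1 0).toNat, hle y⟩ with hΦ
      have e1 := Equiv.sigmaFiberEquiv Φ
      have hcard1 : Nat.card {y : Fin (m + 1) → ℤ // condZ (m + 1) t y}
          = ∑ v : Fin (t 0 + 1), Nat.card {p // Φ p = v} := by
        rw [← Nat.card_congr e1, ncard_sigma]
      -- fiber equivalences
      have efib : ∀ v : Fin (t 0 + 1),
          Nat.card {p // Φ p = v}
            = Nat.card {y' : Fin m → ℤ // condZ m (tbud t v.1) y'} := by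
        intro v
        refine Nat.card_congr ?_
        refine
          { toFun := fun p => ⟨fun i => p.1.1 i.succ, ?_⟩
            invFun := fun y' => ⟨⟨Fin.cons ((v : ℕ) : ℤ) y'.1, ?_⟩, ?_⟩
            left_inv := ?_
            right_inv := ?_ }
        · -- condition for tail
          have hval : (p.1.1 0).toNat = (v : ℕ) := congrArg Fin.val p.2
          have h0 := (p.1.2 0).1
          have hv : p.1.1 0 = ((v : ℕ) : ℤ) := by omega
          have hvt : (v : ℕ) ≤ t 0 := by omega
          exact (cond_succ_iff t p.1.1 v hv hvt trivial).mp p.1.2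
        · -- condition for cons
          refine (cond_succ_iff t _ v (by simp) (by omega) trivial).mpr ?_
          have h : (fun i : Fin m => (Fin.cons (((v : ℕ) : ℤ)) y'.1 : Fin (m + 1) → ℤ) i.succ) = y'.1 := by
            funext i; simp
          rw [h]
          exact y'.2
        · -- Φ value
          apply Fin.ext
          show ((Fin.cons (((v : ℕ) : ℤ)) y'.1 : Fin (m + 1) → ℤ) (0 : Fin (m + 1))).toNat = (v : ℕ)
          simp
        · -- left inverse
          intro p
          apply Subtype.ext
          apply Subtype.ext
          funext i
          induction i using Fin.cases with
          | zero =>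
              simp only [Fin.cons_zero]
              have hval : (p.1.1 0).toNat = (v : ℕ) := congrArg Fin.val p.2
              have h0 := (p.1.2 0).1
              omega
          | succ j => simp
        · -- right inverse
          intro y'
          apply Subtype.ext
          funext i
          simp
      rw [hcard1]
      have : ∀ v : Fin (t 0 + 1), Nat.card {p // Φ p = v} = g m (tbud t v.1) := by
        intro v; rw [efib v, ih]
      simp only [this]
      -- now convert to the Tsum sum
      have hg : g (m + 1) t = ∑ u ∈ range (t 0 + 1),
          g m (fun i => (if (i : ℕ) = 0 then u else 0) + t i.succ) := rfl
      rw [hg]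
      rw [Fin.sum_univ_eq_sum_range (fun v => g m (tbud t v))]
      rw [← Finset.sum_range_reflect]
      refine Finset.sum_congr rfl fun u hu => ?_
      have hu' : u < t 0 + 1 := Finset.mem_range.mp hu
      congr 1
      funext i
      unfold tbud
      congr 1
      split_ifs
      · omega
      · rfl



lemma coeff_nonneg_mul {σ : Type*} {P Q : MvPolynomial σ ℝ}
    (hP : ∀ c, 0 ≤ P.coeff c) (hQ : ∀ c, 0 ≤ Q.coeff c) :
    ∀ c, 0 ≤ (P * Q).coeff c := by
  intro c
  classical
  rw [MvPolynomial.coeff_mul]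
  exact Finset.sum_nonneg fun x _ => mul_nonneg (hP x.1) (hQ x.2)

lemma coeff_nonneg_prod {σ ι : Type*} (s : Finset ι) (F : ι → MvPolynomial σ ℝ)
    (h : ∀ i ∈ s, ∀ c, 0 ≤ (F i).coeff c) :
    ∀ c, 0 ≤ (∏ i ∈ s, F i).coeff c := by
  classical
  refine Finset.prod_induction F (fun P => ∀ c, 0 ≤ P.coeff c)
    (fun P Q hP hQ => coeff_nonneg_mul hP hQ) ?_ h
  intro c
  rw [MvPolynomial.coeff_one]
  split_ifs <;> norm_num

lemma prod_range_add (a K : ℕ) : ∏ j ∈ range K, (a + j) = a.ascFactorial K := by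
  induction K with
  | zero => simp
  | succ K ih => rw [Finset.prod_range_succ, ih, Nat.ascFactorial_succ]; ring

/-- the factor polynomial `(1/k!) * ∏_{j<k} (X i + j)` -/
noncomputable def pfac {m : ℕ} (i : Fin m) (k : ℕ) : MvPolynomial (Fin m) ℝ :=
  MvPolynomial.C (((k.factorial : ℝ))⁻¹) *
    ∏ j ∈ range k, (MvPolynomial.X i + MvPolynomial.C (j : ℝ))

lemma pfac_coeff_nonneg {m : ℕ} (i : Fin m) (k : ℕ) :
    ∀ c, 0 ≤ (pfac i k).coeff c := by
  refine coeff_nonneg_mul (fun c => ?_) (coeff_nonneg_prod _ _ fun j _ c => ?_)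
  · rw [MvPolynomial.coeff_C]
    split_ifs <;> positivity
  · rw [MvPolynomial.coeff_add, MvPolynomial.coeff_C, MvPolynomial.coeff_X']
    have hj : (0 : ℝ) ≤ (j : ℝ) := Nat.cast_nonneg j
    split_ifs <;> linarith

/-- evaluation of pfac at any point whose i-th coordinate is a -/
lemma pfac_eval' {m : ℕ} (i : Fin m) (k : ℕ) (x : Fin m → ℝ) (a : ℕ) (hx : x i = a) :
    MvPolynomial.eval x (pfac i k) = ((a + k - 1).choose k : ℝ) := by
  unfold pfac
  rw [MvPolynomial.eval_mul, MvPolynomial.eval_C, MvPolynomial.eval_prod]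
  have h1 : ∀ j ∈ range k, MvPolynomial.eval x (MvPolynomial.X i + MvPolynomial.C (j : ℝ))
      = ((a + j : ℕ) : ℝ) := by
    intro j _
    rw [MvPolynomial.eval_add, MvPolynomial.eval_X, MvPolynomial.eval_C, hx]
    push_cast; ring
  rw [Finset.prod_congr rfl h1, ← Nat.cast_prod, prod_range_add,
    Nat.ascFactorial_eq_factorial_mul_choose']
  push_cast
  rw [← mul_assoc, inv_mul_cancel₀ (by exact_mod_cast Nat.factorial_ne_zero k), one_mul]

lemma poly_of_cone {m : ℕ} {f : (Fin m → ℕ) → ℕ} (hf : Cone m f) :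
    ∃ P : MvPolynomial (Fin m) ℝ, (∀ c, 0 ≤ P.coeff c) ∧
      ∀ x : Fin m → ℕ, (∀ i : Fin m, (i : ℕ) = 0 → 1 ≤ x i) →
        MvPolynomial.eval (fun i => (x i : ℝ)) P
          = f (fun i => if (i : ℕ) = 0 then x i - 1 else x i) := by
  induction hf with
  | zero => exact ⟨0, by simp, by simp⟩
  | @add f' g' hf hg ihf ihg =>
      obtain ⟨P, hP, hPe⟩ := ihf
      obtain ⟨Q, hQ, hQe⟩ := ihg
      refine ⟨P + Q, fun c => ?_, fun x hx => ?_⟩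
      · rw [MvPolynomial.coeff_add]; exact add_nonneg (hP c) (hQ c)
      · rw [MvPolynomial.eval_add, hPe x hx, hQe x hx]; push_cast; ring
  | basic k =>
      refine ⟨∏ i : Fin m, pfac i (k i), coeff_nonneg_prod _ _ (fun i _ => pfac_coeff_nonneg i (k i)), fun x hx => ?_⟩
      rw [MvPolynomial.eval_prod]
      unfold basicFun
      rw [Nat.cast_prod]
      refine Finset.prod_congr rfl fun i _ => ?_
      have hb : (fun i : Fin m => if (i : ℕ) = 0 then x i - 1 else x i) i
          = if (i : ℕ) = 0 then x i - 1 else x i := rfl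
      by_cases hi : (i : ℕ) = 0
      · rw [pfac_eval' i (k i) _ (x i) rfl, if_pos hi, hb, if_pos hi]
        have hxi := hx i hi
        norm_cast
        unfold A1
        congr 1
        omega
      · rw [pfac_eval' i (k i) _ (x i) rfl, if_neg hi, hb, if_neg hi]
        norm_cast


end LPCAux

open LPCAux in
/-- The number of integer points `N(Π_n(x_1-1, x_2, …, x_n))`, as a polynomial in
`x_1,…,x_n`, has nonnegative coefficients: there is a real multivariate polynomial
with nonnegative coefficients whose value at every `x ∈ ℕ^n` with `x_1 ≥ 1` is the
number of integer points of `Π_n(x_1-1, x_2, …, x_n)`. -/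
theorem lattice_point_count_shifted_nonneg_coeffs (n : ℕ) (hn : 0 < n) :
    ∃ P : MvPolynomial (Fin n) ℝ,
      (∀ m, 0 ≤ P.coeff m) ∧
      ∀ x : Fin n → ℕ, (∀ i : Fin n, (i : ℕ) = 0 → 1 ≤ x i) →
        MvPolynomial.eval (fun i => (x i : ℝ)) P =
          Nat.card {y : Fin n → ℤ //
            ∀ i : Fin n, 0 ≤ y i ∧
              ∑ j ∈ Finset.Iic i, y j ≤
                ∑ j ∈ Finset.Iic i,
                  (if (j : ℕ) = 0 then (x j : ℤ) - 1 else (x j : ℤ))} := by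
  obtain ⟨P, hco, hev⟩ := poly_of_cone (cone_g n)
  refine ⟨P, hco, fun x hx => ?_⟩
  set t : Fin n → ℕ := fun j => if (j : ℕ) = 0 then x j - 1 else x j with ht
  have hb : ∀ j : Fin n, (if (j : ℕ) = 0 then (x j : ℤ) - 1 else (x j : ℤ)) = ((t j : ℕ) : ℤ) := by
    intro j
    rw [ht]
    show _ = (((if (j : ℕ) = 0 then x j - 1 else x j) : ℕ) : ℤ)
    split_ifs with h
    · have h1 := hx j h
      rw [Nat.cast_sub h1]
      push_cast
      ring
    · rfl
  have hset : ∀ y : Fin n → ℤ,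
      (∀ i : Fin n, 0 ≤ y i ∧
          ∑ j ∈ Finset.Iic i, y j ≤
            ∑ j ∈ Finset.Iic i, (if (j : ℕ) = 0 then (x j : ℤ) - 1 else (x j : ℤ)))
        ↔ condZ n t y := by
    intro y
    unfold condZ
    refine forall_congr' fun i => and_congr Iff.rfl ?_
    rw [Finset.sum_congr rfl fun j _ => hb j]
  rw [Nat.card_congr (Equiv.subtypeEquivRight hset), card_condZ n t, hev x hx]
end
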